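/- arXiv:2605.11528 — 10 statements merged into one kernel-verified Lean document; each statement's English description precedes it below -/
import Mathlib

section
/- Let q be a prime power and K a finite field with q² elements, and let a, b, c, d ∈ K. The rational function g = (d^q·X³ + c^q·X² + b^q·X + a^q)/(a·X³ + b·X² + c·X + d) has degree 1 and permutes μ_{q+1} if and only if one of the following holds: (1) d = 0, c ≠ 0, b·c^q = a·b^q, and c^{q+1} = a^{q+1}; (2) d = 0, a = 0, and c^{q+1} ≠ b^{q+1}; (3) d ≠ 0, d^q·b ≠ a·c^q, d^q·c ≠ a·b^q, and ((d^q·c − a·b^q)/(d^q·b − a·c^q))^q · ((d^{q+1} − a^{q+1})/(d^q·b − a·c^q)) = (d^q·c − a·b^q)/(d^q·b − a·c^q); (4) d ≠ 0, d^q·b ≠ a·c^q, d^q·c = a·b^q, and (d^{q+1} − a^{q+1})/(d^q·b − a·c^q) = b^q/d^q, with this common value lying in μ_{q+1}. -/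
open Polynomial

open scoped Classical

/-- The denominator polynomial `D(X) = a·X³ + b·X² + c·X + d`. -/
noncomputable def Dpoly {K : Type*} [Field K] (a b c d : K) : K[X] :=
  C a * X ^ 3 + C b * X ^ 2 + C c * X + C d

/-- The numerator polynomial `N(X) = d^q·X³ + c^q·X² + b^q·X + a^q`. -/
noncomputable def Npoly {K : Type*} [Field K] (q : ℕ) (a b c d : K) : K[X] :=
  C (d ^ q) * X ^ 3 + C (c ^ q) * X ^ 2 + C (b ^ q) * X + C (a ^ q)

/-- Numerator of `g = N/D` in lowest terms. -/
noncomputable def numer₀ {K : Type*} [Field K] (q : ℕ) (a b c d : K) : K[X] :=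
  Npoly q a b c d / EuclideanDomain.gcd (Npoly q a b c d) (Dpoly a b c d)

/-- Denominator of `g = N/D` in lowest terms. -/
noncomputable def denom₀ {K : Type*} [Field K] (q : ℕ) (a b c d : K) : K[X] :=
  Dpoly a b c d / EuclideanDomain.gcd (Npoly q a b c d) (Dpoly a b c d)

/-- The degree of the rational function `g = N/D`. -/
noncomputable def gDeg {K : Type*} [Field K] (q : ℕ) (a b c d : K) : ℕ :=
  max (numer₀ q a b c d).natDegree (denom₀ q a b c d).natDegree

/-- `μ_{q+1} = {x ∈ K : x^{q+1} = 1}`. -/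
def mu (q : ℕ) (K : Type*) [Monoid K] : Set K := {x : K | x ^ (q + 1) = 1}

/-- `g` permutes `μ_{q+1}`: the map `x ↦ N₀(x)·D₀(x)⁻¹` is a bijection of `μ_{q+1}`. -/
def gPermutes (q : ℕ) {K : Type*} [Field K] (a b c d : K) : Prop :=
  Set.BijOn (fun x => (numer₀ q a b c d).eval x * ((denom₀ q a b c d).eval x)⁻¹)
    (mu q K) (mu q K)

/-!
The map `x ↦ x^q` is an involutive automorphism of `K`, and `x^q = x⁻¹` on `μ_{q+1}`. Hence a
Möbius map `x ↦ (αx + β)/(γx + δ)` with `αδ ≠ βγ`, `αβ^q = γδ^q` and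
`α^{q+1} + β^{q+1} = γ^{q+1} + δ^{q+1}` satisfies `(αx + β)^{q+1} = (γx + δ)^{q+1}` on `μ_{q+1}`,
so it maps the finite set `μ_{q+1}` injectively, hence bijectively, to itself.

`g` has degree one exactly when `N` and `D` are a common factor times coprime linear polynomials.
If `d ≠ 0` the common factor has degree two and divides `d^q D - a N = e₁X² + e₂X + e₃`, where
`e₁ = d^q b - a c^q`, `e₂ = d^q c - a b^q`, `e₃ = d^{q+1} - a^{q+1}`, so it is this quadratic.
Comparing coefficients shows that `N` and `D` factor in this way iff `e₃ ≠ 0`, `e₂^q e₁ = e₂ e₃`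
and `e₁^{q+1} = e₃²`, which are conditions (3) or (4) according as `e₂ ≠ 0` or `e₂ = 0`. If
`d = 0`, the common factor is `N` itself when `a ≠ 0`, giving (1), and `X` when `a = 0`, giving (2).
In every case the linear cofactors satisfy the Möbius conditions above, so degree one already
forces `g` to permute `μ_{q+1}`.
-/

structure IsInvolutiveFrobenius (K : Type*) [Field K] (q : ℕ) : Prop where
  add_pow : ∀ x y : K, (x + y) ^ q = x ^ q + y ^ q
  pow_pow : ∀ x : K, (x ^ q) ^ q = x

namespace IsInvolutiveFrobenius

variable {K : Type*} [Field K] {q : ℕ}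

theorem ne_zero (hq : IsInvolutiveFrobenius K q) : q ≠ 0 := by
  rintro rfl
  simpa using hq.pow_pow 0

theorem sub_pow (hq : IsInvolutiveFrobenius K q) (x y : K) : (x - y) ^ q = x ^ q - y ^ q := by
  rw [eq_sub_iff_add_eq, ← hq.add_pow, sub_add_cancel]

theorem pow_pow_succ (hq : IsInvolutiveFrobenius K q) (x : K) :
    (x ^ q) ^ (q + 1) = x ^ (q + 1) := by
  rw [pow_succ, hq.pow_pow, pow_succ', mul_comm]

theorem pow_succ_pow (hq : IsInvolutiveFrobenius K q) (x : K) :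
    (x ^ (q + 1)) ^ q = x ^ (q + 1) := by
  rw [← pow_mul, mul_comm, pow_mul, hq.pow_pow_succ]

theorem pow_mul_sub_mul_pow_pow (hq : IsInvolutiveFrobenius K q) (x y z w : K) :
    (x ^ q * y - z * w ^ q) ^ q = x * y ^ q - z ^ q * w := by
  rw [hq.sub_pow, mul_pow, mul_pow, hq.pow_pow, hq.pow_pow]

theorem pow_succ_sub_pow_succ_pow (hq : IsInvolutiveFrobenius K q) (x y : K) :
    (x ^ (q + 1) - y ^ (q + 1)) ^ q = x ^ (q + 1) - y ^ (q + 1) := by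
  rw [hq.sub_pow, hq.pow_succ_pow, hq.pow_succ_pow]

end IsInvolutiveFrobenius

theorem FiniteField.isInvolutiveFrobenius {K : Type*} [Field K] [Fintype K] {p m q : ℕ}
    (hp : p.Prime) (hq : q = p ^ m) (hK : Fintype.card K = q ^ 2) :
    IsInvolutiveFrobenius K q where
  add_pow x y := by
    have : Fact p.Prime := ⟨hp⟩
    have : CharP K p := charP_of_card_eq_prime_pow (f := m * 2) (by rw [hK, hq, pow_mul])
    rw [hq, add_pow_char_pow]
  pow_pow x := by rw [← pow_mul, ← sq, ← hK, FiniteField.pow_card]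

theorem EuclideanDomain.exists_unit_div_gcd_eq {R : Type*} [EuclideanDomain R] [DecidableEq R]
    {N D G A B : R} (hG : G ≠ 0) (hN : N = G * A) (hD : D = G * B) (hAB : IsCoprime A B) :
    ∃ u : Rˣ, N / gcd N D = u * A ∧ D / gcd N D = u * B := by
  obtain ⟨x, y, hxy⟩ := hAB
  have hG_dvd : G ∣ gcd N D := dvd_gcd ⟨A, hN⟩ ⟨B, hD⟩
  have hdvd_G : gcd N D ∣ G := by
    have hG_comb : G = x * N + y * D := by rw [hN, hD]; linear_combination -G * hxy
    rw [hG_comb]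
    exact dvd_add (dvd_mul_of_dvd_right (gcd_dvd_left N D) x)
      (dvd_mul_of_dvd_right (gcd_dvd_right N D) y)
  obtain ⟨u, hu⟩ := associated_of_dvd_dvd hG_dvd hdvd_G
  have hGu : G * u ≠ 0 := mul_ne_zero hG u.ne_zero
  refine ⟨u⁻¹, ?_, ?_⟩
  · rw [← hu, hN]
    exact (eq_div_of_mul_eq_right hGu (by rw [mul_assoc, Units.mul_inv_cancel_left])).symm
  · rw [← hu, hD]
    exact (eq_div_of_mul_eq_right hGu (by rw [mul_assoc, Units.mul_inv_cancel_left])).symm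

namespace Polynomial

theorem cubic_eq_quadratic_mul_linear_iff {R : Type*} [CommRing R]
    {a₃ a₂ a₁ a₀ p₂ p₁ p₀ l₁ l₀ : R} :
    C a₃ * X ^ 3 + C a₂ * X ^ 2 + C a₁ * X + C a₀ =
        (C p₂ * X ^ 2 + C p₁ * X + C p₀) * (C l₁ * X + C l₀) ↔
      a₃ = p₂ * l₁ ∧ a₂ = p₂ * l₀ + p₁ * l₁ ∧ a₁ = p₁ * l₀ + p₀ * l₁ ∧ a₀ = p₀ * l₀ := by
  have hmul : (C p₂ * X ^ 2 + C p₁ * X + C p₀) * (C l₁ * X + C l₀) =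
      C (p₂ * l₁) * X ^ 3 + C (p₂ * l₀ + p₁ * l₁) * X ^ 2 + C (p₁ * l₀ + p₀ * l₁) * X +
        C (p₀ * l₀) := by
    simp only [C_mul, C_add]
    ring
  rw [hmul]
  constructor
  · generalize p₂ * l₁ = b₃, p₂ * l₀ + p₁ * l₁ = b₂, p₁ * l₀ + p₀ * l₁ = b₁, p₀ * l₀ = b₀
    intro h
    refine ⟨?_, ?_, ?_, ?_⟩
    · simpa using congrArg (coeff · 3) h
    · simpa using congrArg (coeff · 2) h
    · simpa using congrArg (coeff · 1) h
    · simpa using congrArg (coeff · 0) h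
  · rintro ⟨rfl, rfl, rfl, rfl⟩
    rfl

variable {K : Type*} [Field K]

theorem isCoprime_linear {α β γ δ : K} (hdet : α * δ - β * γ ≠ 0) :
    IsCoprime (C α * X + C β) (C γ * X + C δ) := by
  refine ⟨C (-γ / (α * δ - β * γ)), C (α / (α * δ - β * γ)), ?_⟩
  have hbezout : C (-γ / (α * δ - β * γ)) * (C α * X + C β) +
      C (α / (α * δ - β * γ)) * (C γ * X + C δ) =
        C ((α * δ - β * γ) / (α * δ - β * γ)) := by
    simp only [div_eq_mul_inv, C_mul, C_sub, C_neg]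
    ring
  rw [hbezout, div_self hdet, C_1]

variable [DecidableEq K[X]]

theorem max_natDegree_div_gcd_eq_zero_of_C_mul_eq {N D : K[X]} {s t : K}
    (hst : s ≠ 0 ∨ t ≠ 0) (h : C s * N = C t * D) :
    max (N / EuclideanDomain.gcd N D).natDegree (D / EuclideanDomain.gcd N D).natDegree = 0 := by
  have hunit (u : K[X]ˣ) (r : K) : (u * C r : K[X]).natDegree = 0 :=
    Nat.le_zero.mp (natDegree_mul_le.trans (by simp))
  rcases hst with hs | ht
  · have hN : N = D * C (s⁻¹ * t) := by
      rw [C_mul, mul_comm, mul_assoc, ← h, ← mul_assoc, ← C_mul, inv_mul_cancel₀ hs, C_1, one_mul]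
    rcases eq_or_ne D 0 with rfl | hD
    · simp [hN]
    obtain ⟨u, hu₁, hu₂⟩ := EuclideanDomain.exists_unit_div_gcd_eq hD hN (mul_one D).symm
      (isCoprime_one_right (x := C (s⁻¹ * t)))
    rw [hu₁, hu₂, hunit, ← C_1, hunit, max_self]
  · have hD : D = N * C (t⁻¹ * s) := by
      rw [C_mul, mul_comm, mul_assoc, h, ← mul_assoc, ← C_mul, inv_mul_cancel₀ ht, C_1, one_mul]
    rcases eq_or_ne N 0 with rfl | hN
    · simp [hD]
    obtain ⟨u, hu₁, hu₂⟩ := EuclideanDomain.exists_unit_div_gcd_eq hN (mul_one N).symm hD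
      (isCoprime_one_left (x := C (t⁻¹ * s)))
    rw [hu₁, hu₂, hunit, ← C_1, hunit, max_self]

theorem exists_linear_cofactors {N D P : K[X]}
    (hN₀ : (N / EuclideanDomain.gcd N D).natDegree ≤ 1)
    (hD₀ : (D / EuclideanDomain.gcd N D).natDegree ≤ 1)
    (hcubic : N.natDegree = 3 ∨ D.natDegree = 3) (hP : P ≠ 0) (hP₂ : P.natDegree ≤ 2)
    (hdvd : EuclideanDomain.gcd N D ∣ P) :
    ∃ u v s t : K, N = P * (C u * X + C v) ∧ D = P * (C s * X + C t) := by
  set G := EuclideanDomain.gcd N D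
  have hG : G ≠ 0 := by
    intro h0
    obtain ⟨rfl, rfl⟩ := EuclideanDomain.gcd_eq_zero_iff.mp h0
    simp at hcubic
  have hNG : N = G * (N / G) :=
    (EuclideanDomain.mul_div_cancel' hG (EuclideanDomain.gcd_dvd_left N D)).symm
  have hDG : D = G * (D / G) :=
    (EuclideanDomain.mul_div_cancel' hG (EuclideanDomain.gcd_dvd_right N D)).symm
  have hG₂ : 2 ≤ G.natDegree := by
    have hN := natDegree_mul_le (p := G) (q := N / G)
    have hD := natDegree_mul_le (p := G) (q := D / G)
    rw [← hNG] at hN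
    rw [← hDG] at hD
    omega
  obtain ⟨E, hE⟩ := hdvd
  have hE₀ : E ≠ 0 := by
    rintro rfl
    exact hP (by rw [hE, mul_zero])
  obtain ⟨k, rfl⟩ : ∃ k, E = C k := by
    have := natDegree_mul hG hE₀
    rw [← hE] at this
    exact ⟨_, eq_C_of_natDegree_eq_zero (by omega)⟩
  have hk : k ≠ 0 := fun h => hE₀ (by rw [h, C_0])
  have cofactor (F F₀ : K[X]) (hF : F = G * F₀) (hF₀ : F₀.natDegree ≤ 1) :
      ∃ u v : K, F = P * (C u * X + C v) := by
    obtain ⟨u, v, huv⟩ :=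
      exists_eq_X_add_C_of_natDegree_le_one ((natDegree_C_mul_le k⁻¹ F₀).trans hF₀)
    refine ⟨u, v, ?_⟩
    rw [← huv, hE, hF, mul_assoc, ← mul_assoc (C k), ← C_mul, mul_inv_cancel₀ hk, C_1, one_mul]
  obtain ⟨u, v, hu⟩ := cofactor N _ hNG hN₀
  obtain ⟨s, t, hs⟩ := cofactor D _ hDG hD₀
  exact ⟨u, v, s, t, hu, hs⟩

end Polynomial

section Mobius

open Polynomial

variable {K : Type*} [Field K] {q : ℕ}

theorem mobius_bijOn_mu [Finite K] (hq : IsInvolutiveFrobenius K q) {α β γ δ : K}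
    (hdet : α * δ - β * γ ≠ 0) (h₁ : α * β ^ q = γ * δ ^ q)
    (h₂ : α ^ (q + 1) + β ^ (q + 1) = γ ^ (q + 1) + δ ^ (q + 1)) :
    Set.BijOn (fun x => (α * x + β) * (γ * x + δ)⁻¹) (mu q K) (mu q K) := by
  have h₁' : α ^ q * β = γ ^ q * δ := by
    simpa only [mul_pow, hq.pow_pow] using congrArg (· ^ q) h₁
  have hnorm : ∀ x ∈ mu q K, (α * x + β) ^ (q + 1) = (γ * x + δ) ^ (q + 1) := by
    intro x (hx : x ^ (q + 1) = 1)
    simp only [pow_succ _ q, hq.add_pow, mul_pow]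
    linear_combination (α ^ q * α - γ ^ q * γ) * hx + x ^ q * h₁' + x * h₁ + h₂
  have hden : ∀ x ∈ mu q K, γ * x + δ ≠ 0 := by
    intro x hx h0
    have hnum : α * x + β = 0 := by
      simpa [h0, hq.ne_zero] using hnorm x hx
    exact hdet (by linear_combination α * h0 - γ * hnum)
  have hmaps : Set.MapsTo (fun x => (α * x + β) * (γ * x + δ)⁻¹) (mu q K) (mu q K) := by
    intro x hx
    show ((α * x + β) * (γ * x + δ)⁻¹) ^ (q + 1) = 1
    rw [mul_pow, hnorm x hx, inv_pow, mul_inv_cancel₀ (pow_ne_zero _ (hden x hx))]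
  have hinj : Set.InjOn (fun x => (α * x + β) * (γ * x + δ)⁻¹) (mu q K) := by
    intro x hx y hy h
    simp only [← div_eq_mul_inv, div_eq_div_iff (hden x hx) (hden y hy)] at h
    have hxy : (α * δ - β * γ) * (x - y) = 0 := by linear_combination h
    exact sub_eq_zero.mp ((mul_eq_zero.mp hxy).resolve_left hdet)
  exact ((Set.toFinite (mu q K)).injOn_iff_bijOn_of_mapsTo hmaps).mp hinj

theorem gDeg_eq_one_and_gPermutes_of_factorization [Finite K] (hq : IsInvolutiveFrobenius K q)
    {a b c d α β γ δ : K} {G : K[X]} (hG : G ≠ 0)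
    (hN : Npoly q a b c d = G * (C α * X + C β)) (hD : Dpoly a b c d = G * (C γ * X + C δ))
    (hdet : α * δ - β * γ ≠ 0) (h₁ : α * β ^ q = γ * δ ^ q)
    (h₂ : α ^ (q + 1) + β ^ (q + 1) = γ ^ (q + 1) + δ ^ (q + 1)) :
    gDeg q a b c d = 1 ∧ gPermutes q a b c d := by
  obtain ⟨u, hN₀, hD₀⟩ :=
    EuclideanDomain.exists_unit_div_gcd_eq hG hN hD (isCoprime_linear hdet)
  obtain ⟨w, hw, hwu⟩ := Polynomial.isUnit_iff.mp u.isUnit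
  rw [← hwu] at hN₀ hD₀
  have hw₀ : w ≠ 0 := hw.ne_zero
  constructor
  · have hαγ : α ≠ 0 ∨ γ ≠ 0 := by
      by_contra! h
      exact hdet (by rw [h.1, h.2]; ring)
    rw [gDeg, numer₀, denom₀, hN₀, hD₀, natDegree_C_mul hw₀, natDegree_C_mul hw₀]
    rcases hαγ with hα | hγ
    · rw [natDegree_linear hα]
      exact max_eq_left natDegree_linear_le
    · rw [natDegree_linear hγ]
      exact max_eq_right natDegree_linear_le
  · have hg : (fun x => (numer₀ q a b c d).eval x * ((denom₀ q a b c d).eval x)⁻¹) =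
        fun x => (α * x + β) * (γ * x + δ)⁻¹ := by
      funext x
      simp only [numer₀, denom₀, hN₀, hD₀, eval_mul, eval_add, eval_C, eval_X]
      rw [mul_inv, mul_mul_mul_comm, mul_inv_cancel₀ hw₀, one_mul]
    rw [gPermutes, hg]
    exact mobius_bijOn_mu hq hdet h₁ h₂

end Mobius

section ZeroConstantTerm

open Polynomial

variable {K : Type*} [Field K] {q : ℕ} {a b c : K}

theorem gDeg_eq_one_and_gPermutes_iff_of_a_d_eq_zero [Finite K] (hq : IsInvolutiveFrobenius K q) :
    (gDeg q 0 b c 0 = 1 ∧ gPermutes q 0 b c 0) ↔ c ^ (q + 1) ≠ b ^ (q + 1) := by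
  have hN : Npoly q 0 b c 0 = X * (C (c ^ q) * X + C (b ^ q)) := by
    simp only [Npoly, zero_pow hq.ne_zero, C_0]
    ring
  have hD : Dpoly 0 b c 0 = X * (C b * X + C c) := by
    simp only [Dpoly, C_0]
    ring
  constructor
  · rintro ⟨hdeg, -⟩ hcb
    rw [gDeg, numer₀, denom₀] at hdeg
    rcases eq_or_ne b 0 with rfl | hb
    · obtain rfl : c = 0 := pow_eq_zero_iff (Nat.succ_ne_zero q) |>.mp
        (by rw [hcb, zero_pow (Nat.succ_ne_zero q)])
      have hN₀ : C 1 * Npoly q (0 : K) 0 0 0 = C 0 * Dpoly (0 : K) 0 0 0 := by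
        rw [hN, zero_pow hq.ne_zero, C_0]
        ring
      have := max_natDegree_div_gcd_eq_zero_of_C_mul_eq (Or.inl one_ne_zero) hN₀
      omega
    · have hprop : C b * Npoly q 0 b c 0 = C (c ^ q) * Dpoly 0 b c 0 := by
        have hcoeff : C b * C (b ^ q) = C (c ^ q) * C c := by
          rw [← C_mul, ← C_mul, ← pow_succ', ← pow_succ, hcb]
        rw [hN, hD]
        linear_combination X * hcoeff
      have := max_natDegree_div_gcd_eq_zero_of_C_mul_eq (Or.inl hb) hprop
      omega
  · intro hcb
    refine gDeg_eq_one_and_gPermutes_of_factorization hq X_ne_zero hN hD ?_ ?_ ?_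
    · rwa [← pow_succ, ← pow_succ, sub_ne_zero]
    · rw [hq.pow_pow, mul_comm]
    · rw [hq.pow_pow_succ, hq.pow_pow_succ, add_comm]

theorem gDeg_eq_one_and_gPermutes_iff_of_d_eq_zero [Finite K] (hq : IsInvolutiveFrobenius K q)
    (ha : a ≠ 0) :
    (gDeg q a b c 0 = 1 ∧ gPermutes q a b c 0) ↔
      c ≠ 0 ∧ b * c ^ q = a * b ^ q ∧ c ^ (q + 1) = a ^ (q + 1) := by
  have hN : Npoly q a b c 0 = C (c ^ q) * X ^ 2 + C (b ^ q) * X + C (a ^ q) := by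
    simp only [Npoly, zero_pow hq.ne_zero, C_0]
    ring
  constructor
  · rintro ⟨hdeg, -⟩
    rw [gDeg, numer₀, denom₀] at hdeg
    have hN₀ : Npoly q a b c 0 ≠ 0 := by
      intro h
      have h₀ := congrArg (coeff · 0) h
      simp only [hN, coeff_add, coeff_C_mul_X_pow, coeff_C_mul_X, coeff_C_zero, coeff_zero] at h₀
      simp [ha, hq.ne_zero] at h₀
    obtain ⟨-, -, s, t, -, hD⟩ := exists_linear_cofactors (le_of_max_le_left hdeg.le)
      (le_of_max_le_right hdeg.le) (Or.inr (natDegree_cubic ha)) hN₀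
      (hN ▸ natDegree_quadratic_le) (EuclideanDomain.gcd_dvd_left _ _)
    rw [hN] at hD
    obtain ⟨h₃, h₂, h₁, h₀⟩ := cubic_eq_quadratic_mul_linear_iff.mp hD
    obtain rfl : t = 0 := (mul_eq_zero.mp h₀.symm).resolve_left (pow_ne_zero q ha)
    refine ⟨fun hc => ha (by rw [h₃, hc, zero_pow hq.ne_zero, zero_mul]), ?_, ?_⟩
    · linear_combination c ^ q * h₂ - b ^ q * h₃
    · linear_combination c ^ q * h₁ - a ^ q * h₃
  · rintro ⟨hc, hbc, hca⟩
    have hcq : c ^ q ≠ 0 := pow_ne_zero q hc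
    refine gDeg_eq_one_and_gPermutes_of_factorization hq (α := 0) (β := 1) (γ := a / c ^ q)
      (δ := 0) (G := C (c ^ q) * X ^ 2 + C (b ^ q) * X + C (a ^ q))
      (ne_zero_of_natDegree_gt (n := 0) (by rw [natDegree_quadratic hcq]; norm_num))
      (by rw [hN, C_0, C_1, zero_mul, zero_add, mul_one]) ?_ ?_ ?_ ?_
    · refine cubic_eq_quadratic_mul_linear_iff.mpr ⟨by field_simp, ?_, ?_, by ring⟩
      · field_simp
        linear_combination hbc
      · field_simp
        linear_combination hca
    · simpa using div_ne_zero ha hcq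
    · rw [zero_pow hq.ne_zero]
      ring
    · rw [div_pow, hq.pow_pow_succ, ← hca, div_self (pow_ne_zero _ hc)]
      simp

end ZeroConstantTerm

section CommonQuadraticFactor

open Polynomial

variable {K : Type*} [Field K] {q : ℕ} {a b c d : K}

/-- With `e₁ = d^q b - a c^q`, `e₂ = d^q c - a b^q` and `e₃ = d^{q+1} - a^{q+1}`, these say
`e₃ ≠ 0`, `e₂^q e₁ = e₂ e₃` and `e₁^q e₁ = e₃²`, with `e₁^q` and `e₂^q` expanded. -/
structure CommonFactorRelations (q : ℕ) (a b c d : K) : Prop where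
  e₃_ne_zero : d ^ (q + 1) - a ^ (q + 1) ≠ 0
  e₂_eq : (d * c ^ q - a ^ q * b) * (d ^ q * b - a * c ^ q) =
    (d ^ q * c - a * b ^ q) * (d ^ (q + 1) - a ^ (q + 1))
  e₁_eq : (d * b ^ q - a ^ q * c) * (d ^ q * b - a * c ^ q) =
    (d ^ (q + 1) - a ^ (q + 1)) * (d ^ (q + 1) - a ^ (q + 1))

theorem CommonFactorRelations.e₁_ne_zero (h : CommonFactorRelations q a b c d) :
    d ^ q * b - a * c ^ q ≠ 0 := by
  intro h₁
  have := h.e₁_eq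
  rw [h₁, mul_zero] at this
  exact h.e₃_ne_zero (mul_self_eq_zero.mp this.symm)

theorem commonFactorRelations_of_factorization (hd : d ≠ 0) {u v s t : K}
    (hN : Npoly q a b c d = (C (d ^ q * b - a * c ^ q) * X ^ 2 + C (d ^ q * c - a * b ^ q) * X +
      C (d ^ (q + 1) - a ^ (q + 1))) * (C u * X + C v))
    (hD : Dpoly a b c d = (C (d ^ q * b - a * c ^ q) * X ^ 2 + C (d ^ q * c - a * b ^ q) * X +
      C (d ^ (q + 1) - a ^ (q + 1))) * (C s * X + C t)) :
    CommonFactorRelations q a b c d := by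
  set e₁ := d ^ q * b - a * c ^ q
  set e₂ := d ^ q * c - a * b ^ q
  set e₃ := d ^ (q + 1) - a ^ (q + 1)
  obtain ⟨k₃, k₂, k₁, k₀⟩ := cubic_eq_quadratic_mul_linear_iff.mp hN
  obtain ⟨n₃, n₂, n₁, n₀⟩ := cubic_eq_quadratic_mul_linear_iff.mp hD
  have he₃ : e₃ ≠ 0 := by
    rintro h
    rw [h, zero_mul] at n₀
    exact hd n₀
  -- `d N - a^q D = X (e₃X² + e₂^q X + e₁^q)` is also the quadratic times `d (uX+v) - a^q (sX+t)`
  have h₃ : e₁ * (d * u - a ^ q * s) = e₃ := by linear_combination a ^ q * n₃ - d * k₃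
  have h₀ : e₃ * (d * v - a ^ q * t) = 0 := by linear_combination a ^ q * n₀ - d * k₀
  have h₂ : d * c ^ q - a ^ q * b = e₁ * (d * v - a ^ q * t) + e₂ * (d * u - a ^ q * s) := by
    linear_combination d * k₂ - a ^ q * n₂
  have h₁ : d * b ^ q - a ^ q * c = e₃ * (d * u - a ^ q * s) + e₂ * (d * v - a ^ q * t) := by
    linear_combination d * k₁ - a ^ q * n₁
  refine ⟨he₃, mul_right_cancel₀ he₃ ?_, mul_right_cancel₀ he₃ ?_⟩
  · linear_combination e₁ * e₃ * h₂ + e₁ * e₁ * h₀ + e₂ * e₃ * h₃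
  · linear_combination e₁ * e₃ * h₁ + e₃ * e₃ * h₃ + e₂ * e₁ * h₀

theorem CommonFactorRelations.gDeg_eq_one_and_gPermutes [Finite K]
    (hq : IsInvolutiveFrobenius K q) (h : CommonFactorRelations q a b c d) :
    gDeg q a b c d = 1 ∧ gPermutes q a b c d := by
  have he₁ := h.e₁_ne_zero
  obtain ⟨he₃, h₂, h₃⟩ := h
  have he₁q := hq.pow_mul_sub_mul_pow_pow d b a c
  have he₃q := hq.pow_succ_sub_pow_succ_pow d a
  set e₁ := d ^ q * b - a * c ^ q
  set e₂ := d ^ q * c - a * b ^ q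
  set e₃ := d ^ (q + 1) - a ^ (q + 1)
  have hN : Npoly q a b c d = (C e₁ * X ^ 2 + C e₂ * X + C e₃) *
      (C (d ^ q / e₁) * X + C (a ^ q / e₃)) := by
    refine cubic_eq_quadratic_mul_linear_iff.mpr ⟨?_, ?_, ?_, ?_⟩ <;> field_simp
    · linear_combination d ^ q * h₂
    · linear_combination d ^ q * h₃
  have hD : Dpoly a b c d = (C e₁ * X ^ 2 + C e₂ * X + C e₃) *
      (C (a / e₁) * X + C (d / e₃)) := by
    refine cubic_eq_quadratic_mul_linear_iff.mpr ⟨?_, ?_, ?_, ?_⟩ <;> field_simp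
    · linear_combination a * h₂
    · linear_combination a * h₃
  refine gDeg_eq_one_and_gPermutes_of_factorization hq
    (ne_zero_of_natDegree_gt (n := 0) (by rw [natDegree_quadratic he₁]; norm_num)) hN hD ?_ ?_ ?_
  · have hdet : d ^ q / e₁ * (d / e₃) - a ^ q / e₃ * (a / e₁) = e₁⁻¹ := by
      field_simp
      ring
    rw [hdet]
    exact inv_ne_zero he₁
  · rw [div_pow, div_pow, hq.pow_pow, he₃q]
    ring
  · have he₁' : e₁ ^ (q + 1) = e₃ * e₃ := by rw [pow_succ, he₁q, h₃]
    have he₃' : e₃ ^ (q + 1) = e₃ * e₃ := by rw [pow_succ, he₃q]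
    simp only [div_pow, hq.pow_pow_succ, he₁', he₃']
    ring

theorem gDeg_eq_one_and_gPermutes_iff_commonFactorRelations [Finite K]
    (hq : IsInvolutiveFrobenius K q) (hd : d ≠ 0) :
    (gDeg q a b c d = 1 ∧ gPermutes q a b c d) ↔ CommonFactorRelations q a b c d := by
  refine ⟨fun ⟨hdeg, _⟩ => ?_, fun h => h.gDeg_eq_one_and_gPermutes hq⟩
  rw [gDeg, numer₀, denom₀] at hdeg
  set R := C (d ^ q * b - a * c ^ q) * X ^ 2 + C (d ^ q * c - a * b ^ q) * X +
    C (d ^ (q + 1) - a ^ (q + 1))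
  have hR : R = C (d ^ q) * Dpoly a b c d - C a * Npoly q a b c d := by
    simp only [R, Npoly, Dpoly, C_sub, C_mul, C_pow]
    ring
  have hR₀ : R ≠ 0 := by
    intro h
    rw [h, eq_comm, sub_eq_zero] at hR
    have := max_natDegree_div_gcd_eq_zero_of_C_mul_eq (Or.inr (pow_ne_zero q hd)) hR.symm
    omega
  have hdvd : EuclideanDomain.gcd (Npoly q a b c d) (Dpoly a b c d) ∣ R :=
    hR ▸ dvd_sub (dvd_mul_of_dvd_right (EuclideanDomain.gcd_dvd_right _ _) _)
      (dvd_mul_of_dvd_right (EuclideanDomain.gcd_dvd_left _ _) _)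
  obtain ⟨u, v, s, t, hN, hD⟩ := exists_linear_cofactors (le_of_max_le_left hdeg.le)
    (le_of_max_le_right hdeg.le) (Or.inl (natDegree_cubic (pow_ne_zero q hd))) hR₀
    natDegree_quadratic_le hdvd
  exact commonFactorRelations_of_factorization hd hN hD

theorem commonFactorRelations_of_case3 (hq : IsInvolutiveFrobenius K q)
    (h₁ : d ^ q * b ≠ a * c ^ q) (h₂ : d ^ q * c ≠ a * b ^ q)
    (heq : ((d ^ q * c - a * b ^ q) / (d ^ q * b - a * c ^ q)) ^ q *
      ((d ^ (q + 1) - a ^ (q + 1)) / (d ^ q * b - a * c ^ q)) =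
      (d ^ q * c - a * b ^ q) / (d ^ q * b - a * c ^ q)) :
    CommonFactorRelations q a b c d := by
  have he₁q := hq.pow_mul_sub_mul_pow_pow d b a c
  have he₂q := hq.pow_mul_sub_mul_pow_pow d c a b
  have he₃q := hq.pow_succ_sub_pow_succ_pow d a
  set e₁ := d ^ q * b - a * c ^ q
  set e₂ := d ^ q * c - a * b ^ q
  set e₃ := d ^ (q + 1) - a ^ (q + 1)
  have he₁ : e₁ ≠ 0 := sub_ne_zero_of_ne h₁
  have he₂ : e₂ ≠ 0 := sub_ne_zero_of_ne h₂
  have he₃ : e₃ ≠ 0 := by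
    rintro h
    rw [h, zero_div, mul_zero] at heq
    exact div_ne_zero he₂ he₁ heq.symm
  rw [div_pow, div_mul_div_comm, div_eq_div_iff (mul_ne_zero (pow_ne_zero q he₁) he₁) he₁] at heq
  have h₁' : e₂ ^ q * e₃ = e₂ * e₁ ^ q := mul_right_cancel₀ he₁ (by linear_combination heq)
  have h₂' : e₂ ^ q * e₁ = e₂ * e₃ := by
    simpa only [mul_pow, hq.pow_pow, he₃q, eq_comm] using congrArg (· ^ q) h₁'
  refine ⟨he₃, he₂q ▸ h₂', ?_⟩
  rw [← he₁q]
  exact mul_left_cancel₀ he₂ (by linear_combination e₃ * h₂' - e₁ * h₁')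

theorem commonFactorRelations_of_case4 (hq : IsInvolutiveFrobenius K q) (hd : d ≠ 0)
    (h₁ : d ^ q * b ≠ a * c ^ q) (h₂ : d ^ q * c = a * b ^ q) (hmu : b ^ q / d ^ q ∈ mu q K) :
    CommonFactorRelations q a b c d := by
  have he₁q := hq.pow_mul_sub_mul_pow_pow d b a c
  have hf₂ : d * c ^ q - a ^ q * b = 0 := by
    rw [← hq.pow_mul_sub_mul_pow_pow, sub_eq_zero_of_eq h₂, zero_pow hq.ne_zero]
  have he₃q := hq.pow_succ_sub_pow_succ_pow d a
  set e₁ := d ^ q * b - a * c ^ q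
  set e₃ := d ^ (q + 1) - a ^ (q + 1)
  have he₁ : e₁ ≠ 0 := sub_ne_zero_of_ne h₁
  have hbd : b ^ (q + 1) = d ^ (q + 1) := by
    have hmu' : (b ^ q / d ^ q) ^ (q + 1) = 1 := hmu
    rwa [div_pow, hq.pow_pow_succ, hq.pow_pow_succ, div_eq_one_iff_eq (pow_ne_zero _ hd)] at hmu'
  have hde : d * e₁ = b * e₃ := by linear_combination -a * hf₂
  have hde' : d ^ q * e₁ ^ q = b ^ q * e₃ := by rw [← he₃q, ← mul_pow, ← mul_pow, hde]
  refine ⟨fun he₃ => mul_ne_zero hd he₁ (hde ▸ mul_eq_zero_of_right b he₃), ?_, ?_⟩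
  · rw [hf₂, sub_eq_zero_of_eq h₂, zero_mul, zero_mul]
  · rw [← he₁q]
    refine mul_left_cancel₀ (pow_ne_zero (q + 1) hd) ?_
    linear_combination d * e₁ * hde' + b ^ q * e₃ * hde + e₃ * e₃ * hbd

theorem commonFactorRelations_iff (hq : IsInvolutiveFrobenius K q) (hd : d ≠ 0) :
    CommonFactorRelations q a b c d ↔
    (d ≠ 0 ∧ d ^ q * b ≠ a * c ^ q ∧ d ^ q * c ≠ a * b ^ q ∧
      ((d ^ q * c - a * b ^ q) / (d ^ q * b - a * c ^ q)) ^ q *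
        ((d ^ (q + 1) - a ^ (q + 1)) / (d ^ q * b - a * c ^ q)) =
        (d ^ q * c - a * b ^ q) / (d ^ q * b - a * c ^ q)) ∨
    (d ≠ 0 ∧ d ^ q * b ≠ a * c ^ q ∧ d ^ q * c = a * b ^ q ∧
      (d ^ (q + 1) - a ^ (q + 1)) / (d ^ q * b - a * c ^ q) = b ^ q / d ^ q ∧
      b ^ q / d ^ q ∈ mu q K) := by
  refine ⟨fun h => ?_, ?_⟩
  · have he₁ := h.e₁_ne_zero
    obtain ⟨he₃, h₂, h₃⟩ := h
    have he₁q := hq.pow_mul_sub_mul_pow_pow d b a c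
    have he₂q := hq.pow_mul_sub_mul_pow_pow d c a b
    have he₃q := hq.pow_succ_sub_pow_succ_pow d a
    set e₁ := d ^ q * b - a * c ^ q
    set e₂ := d ^ q * c - a * b ^ q with he₂_def
    set e₃ := d ^ (q + 1) - a ^ (q + 1)
    by_cases he₂ : d ^ q * c = a * b ^ q
    · have hf₂ : d * c ^ q - a ^ q * b = 0 := by
        rw [← he₂q, he₂_def, sub_eq_zero_of_eq he₂, zero_pow hq.ne_zero]
      have hde : d * e₁ = b * e₃ := by linear_combination -a * hf₂
      have hde' : d ^ q * (d * b ^ q - a ^ q * c) = b ^ q * e₃ := by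
        rw [← he₁q, ← he₃q, ← mul_pow, ← mul_pow, hde]
      have hcross : e₃ * d ^ q = b ^ q * e₁ :=
        mul_left_cancel₀ he₃ (by linear_combination e₁ * hde' - d ^ q * h₃)
      have hratio : e₃ / e₁ = b ^ q / d ^ q :=
        (div_eq_div_iff he₁ (pow_ne_zero q hd)).mpr hcross
      refine Or.inr ⟨hd, sub_ne_zero.mp he₁, he₂, hratio, ?_⟩
      show (b ^ q / d ^ q) ^ (q + 1) = 1
      rw [← hratio, div_pow, pow_succ, pow_succ, he₁q, he₃q, h₃, div_self (mul_ne_zero he₃ he₃)]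
    · have hf₁ : d * b ^ q - a ^ q * c ≠ 0 := he₁q ▸ pow_ne_zero q he₁
      refine Or.inl ⟨hd, sub_ne_zero.mp he₁, he₂, ?_⟩
      rw [div_pow, he₂q, he₁q, div_mul_div_comm, div_eq_div_iff (mul_ne_zero hf₁ he₁) he₁]
      linear_combination e₃ * h₂ - e₂ * h₃
  · rintro (⟨-, h₁, h₂, heq⟩ | ⟨-, h₁, h₂, -, hmu⟩)
    exacts [commonFactorRelations_of_case3 hq h₁ h₂ heq,
      commonFactorRelations_of_case4 hq hd h₁ h₂ hmu]

end CommonQuadraticFactor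

theorem stmt0_general {K : Type*} [Field K] [Fintype K] (p m q : ℕ) (hp : p.Prime)
    (hq : q = p ^ m) (hK : Fintype.card K = q ^ 2) (a b c d : K) :
    (gDeg q a b c d = 1 ∧ gPermutes q a b c d) ↔
      ((d = 0 ∧ c ≠ 0 ∧ b * c ^ q = a * b ^ q ∧ c ^ (q + 1) = a ^ (q + 1)) ∨
       (d = 0 ∧ a = 0 ∧ c ^ (q + 1) ≠ b ^ (q + 1)) ∨
       (d ≠ 0 ∧ d ^ q * b ≠ a * c ^ q ∧ d ^ q * c ≠ a * b ^ q ∧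
         ((d ^ q * c - a * b ^ q) / (d ^ q * b - a * c ^ q)) ^ q *
           ((d ^ (q + 1) - a ^ (q + 1)) / (d ^ q * b - a * c ^ q)) =
           (d ^ q * c - a * b ^ q) / (d ^ q * b - a * c ^ q)) ∨
       (d ≠ 0 ∧ d ^ q * b ≠ a * c ^ q ∧ d ^ q * c = a * b ^ q ∧
         (d ^ (q + 1) - a ^ (q + 1)) / (d ^ q * b - a * c ^ q) = b ^ q / d ^ q ∧
         b ^ q / d ^ q ∈ mu q K)) := by
  have hF := FiniteField.isInvolutiveFrobenius hp hq hK
  rcases eq_or_ne d 0 with rfl | hd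
  · rcases eq_or_ne a 0 with rfl | ha
    · rw [gDeg_eq_one_and_gPermutes_iff_of_a_d_eq_zero hF]
      simp only [ne_eq, true_and, not_true_eq_false, false_and, or_false,
        zero_pow (Nat.succ_ne_zero q), pow_eq_zero_iff (Nat.succ_ne_zero q)]
      tauto
    · rw [gDeg_eq_one_and_gPermutes_iff_of_d_eq_zero hF ha]
      simp [ha]
  · rw [gDeg_eq_one_and_gPermutes_iff_commonFactorRelations hF hd, commonFactorRelations_iff hF hd]
    simp [hd]

/-- Theorem 1 of the paper: `g` has degree 1 and permutes `μ_{q+1}`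
iff one of the four listed coefficient conditions holds. -/
theorem stmt0 {K : Type*} [Field K] [Fintype K] (p m q : ℕ) (hp : p.Prime)
    (hm : 1 ≤ m) (hq : q = p ^ m) (hK : Fintype.card K = q ^ 2) (a b c d : K) :
    (gDeg q a b c d = 1 ∧ gPermutes q a b c d) ↔
      ((d = 0 ∧ c ≠ 0 ∧ b * c ^ q = a * b ^ q ∧ c ^ (q + 1) = a ^ (q + 1)) ∨
       (d = 0 ∧ a = 0 ∧ c ^ (q + 1) ≠ b ^ (q + 1)) ∨
       (d ≠ 0 ∧ d ^ q * b ≠ a * c ^ q ∧ d ^ q * c ≠ a * b ^ q ∧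
         ((d ^ q * c - a * b ^ q) / (d ^ q * b - a * c ^ q)) ^ q *
           ((d ^ (q + 1) - a ^ (q + 1)) / (d ^ q * b - a * c ^ q)) =
           (d ^ q * c - a * b ^ q) / (d ^ q * b - a * c ^ q)) ∨
       (d ≠ 0 ∧ d ^ q * b ≠ a * c ^ q ∧ d ^ q * c = a * b ^ q ∧
         (d ^ (q + 1) - a ^ (q + 1)) / (d ^ q * b - a * c ^ q) = b ^ q / d ^ q ∧
         b ^ q / d ^ q ∈ mu q K)) :=
  stmt0_general p m q hp hq hK a b c d
end

section
/- Let q be a prime power, K a finite field with q² elements, and a, b, c, d ∈ K. The map h : K → K given by h(x) = a·x^{3q} + b·x^{2q+1} + c·x^{q+2} + d·x³ is a bijection of K if and only if the following three conditions all hold: gcd(3, q−1) = 1; the polynomial a·X³ + b·X² + c·X + d has no roots in μ_{q+1}; and the rational function g = (d^q·X³ + c^q·X² + b^q·X + a^q)/(a·X³ + b·X² + c·X + d) permutes μ_{q+1}. -/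
open Polynomial

open scoped Classical

/- ### Auxiliary lemmas -/

lemma Dpoly_eval {K : Type*} [Field K] (a b c d x : K) :
    (Dpoly a b c d).eval x = a * x ^ 3 + b * x ^ 2 + c * x + d := by
  simp [Dpoly]

lemma Npoly_eval {K : Type*} [Field K] (q : ℕ) (a b c d x : K) :
    (Npoly q a b c d).eval x = d ^ q * x ^ 3 + c ^ q * x ^ 2 + b ^ q * x + a ^ q := by
  simp [Npoly]

/-- There is a ring homomorphism `x ↦ x^q` on a field of cardinality `q²`. -/
lemma aux_frob {K : Type*} [Field K] [Fintype K] (p m q : ℕ) (hp : p.Prime)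
    (hq : q = p ^ m) (hK : Fintype.card K = q ^ 2) :
    ∃ φ : K →+* K, ∀ x, φ x = x ^ q := by
  have h1 : Fintype.card K = p ^ (2 * m) := by
    rw [hK, hq, ← pow_mul, mul_comm]
  set t := ringChar K with ht
  haveI : CharP K t := ringChar.charP K
  have htp : t.Prime := CharP.char_is_prime K t
  haveI : Fact t.Prime := ⟨htp⟩
  obtain ⟨n, hn⟩ := FiniteField.card K t
  have hdvd : t ∣ p ^ (2 * m) := by
    rw [← h1, hn.2]
    exact dvd_pow_self t n.2.ne'
  have htp' : t = p := (Nat.prime_dvd_prime_iff_eq htp hp).mp (htp.dvd_of_dvd_pow hdvd)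
  haveI : CharP K p := htp' ▸ ringChar.charP K
  haveI : ExpChar K p := ExpChar.prime (htp' ▸ htp)
  exact ⟨iterateFrobenius K p m, fun x => by rw [iterateFrobenius_def, hq]⟩

/-- The `(q-1)`-st power map surjects onto `μ_{q+1}` in a field of cardinality `q²`. -/
lemma aux_surj {K : Type*} [Field K] [Fintype K] (q : ℕ) (hq2 : 2 ≤ q)
    (hK : Fintype.card K = q ^ 2) {u : K} (hu : u ^ (q + 1) = 1) :
    ∃ x : K, x ≠ 0 ∧ x ^ (q - 1) = u := by
  classical
  have hu0 : u ≠ 0 := by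
    intro h
    rw [h, zero_pow (Nat.succ_ne_zero q)] at hu
    exact zero_ne_one hu
  obtain ⟨g, hg⟩ := IsCyclic.exists_generator (α := Kˣ)
  have hcard : Fintype.card Kˣ = q ^ 2 - 1 := by rw [Fintype.card_units, hK]
  have horder : orderOf g = q ^ 2 - 1 := by
    rw [orderOf_eq_card_of_forall_mem_zpowers hg, Nat.card_eq_fintype_card, hcard]
  set uu : Kˣ := Units.mk0 u hu0 with huu
  obtain ⟨k, hk⟩ := (mem_powers_iff_mem_zpowers.2 (hg uu))
  simp only at hk
  have huu1 : uu ^ (q + 1) = 1 := by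
    ext; push_cast [huu]; exact hu
  have hdvd : (q ^ 2 - 1) ∣ k * (q + 1) := by
    rw [← horder]
    apply orderOf_dvd_of_pow_eq_one
    rw [pow_mul, hk, huu1]
  have hfact : q ^ 2 - 1 = (q - 1) * (q + 1) := by
    obtain ⟨j, hj⟩ := Nat.exists_eq_add_of_le hq2
    subst hj
    have e1 : 2 + j - 1 = j + 1 := by omega
    rw [e1]
    exact Nat.sub_eq_of_eq_add (by ring)
  have hdvd2 : (q - 1) ∣ k := by
    rw [hfact] at hdvd
    exact (Nat.mul_dvd_mul_iff_right (Nat.succ_pos q)).mp hdvd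
  obtain ⟨j, hj⟩ := hdvd2
  refine ⟨(g ^ j : Kˣ), Units.ne_zero _, ?_⟩
  have h2 : ((g ^ j) ^ (q - 1) : Kˣ) = uu := by
    rw [← pow_mul, mul_comm, ← hj, hk]
  calc ((g ^ j : Kˣ) : K) ^ (q - 1) = (((g ^ j) ^ (q - 1) : Kˣ) : K) := by push_cast; ring
    _ = u := by rw [h2]; simp [huu]

/-- If `3 ∣ q - 1` then `K` of cardinality `q²` has a nontrivial cube root of unity
killed by the `(q-1)`-st power map. -/
lemma aux_zeta {K : Type*} [Field K] [Fintype K] (q : ℕ) (hq2 : 2 ≤ q)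
    (hK : Fintype.card K = q ^ 2) (h3 : 3 ∣ q - 1) :
    ∃ z : K, z ≠ 1 ∧ z ^ 3 = 1 ∧ z ^ (q - 1) = 1 ∧ z ≠ 0 := by
  classical
  have hcard : Fintype.card Kˣ = q ^ 2 - 1 := by rw [Fintype.card_units, hK]
  have hfact : q ^ 2 - 1 = (q - 1) * (q + 1) := by
    obtain ⟨j, hj⟩ := Nat.exists_eq_add_of_le hq2
    subst hj
    have e1 : 2 + j - 1 = j + 1 := by omega
    rw [e1]
    exact Nat.sub_eq_of_eq_add (by ring)
  have h3' : 3 ∣ Fintype.card Kˣ := by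
    rw [hcard, hfact]; exact h3.mul_right _
  obtain ⟨z, hz⟩ := exists_prime_orderOf_dvd_card 3 h3'
  refine ⟨(z : K), ?_, ?_, ?_, Units.ne_zero _⟩
  · intro h
    have hz1 : z = 1 := Units.ext (by simpa using h)
    rw [hz1, orderOf_one] at hz; norm_num at hz
  · have hz3 : z ^ 3 = 1 := by rw [← hz]; exact pow_orderOf_eq_one z
    calc (z : K) ^ 3 = ((z ^ 3 : Kˣ) : K) := by push_cast; ring
      _ = 1 := by rw [hz3]; simp
  · have hzq : z ^ (q - 1) = 1 := by
      apply orderOf_dvd_iff_pow_eq_one.mp; rw [hz]; exact h3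
    calc (z : K) ^ (q - 1) = ((z ^ (q - 1) : Kˣ) : K) := by push_cast; ring
      _ = 1 := by rw [hzq]; simp

/-- `h(x) = a·x^{3q} + b·x^{2q+1} + c·x^{q+2} + d·x³` is a bijection
of `K = F_{q²}` iff `gcd(3, q-1) = 1`, `D` has no roots in `μ_{q+1}`, and `g`
permutes `μ_{q+1}`. -/
theorem stmt5 {K : Type*} [Field K] [Fintype K] (p m q : ℕ) (hp : p.Prime)
    (hm : 1 ≤ m) (hq : q = p ^ m) (hK : Fintype.card K = q ^ 2) (a b c d : K) :
    Function.Bijective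
        (fun x : K => a * x ^ (3 * q) + b * x ^ (2 * q + 1) + c * x ^ (q + 2) + d * x ^ 3) ↔
      (Nat.gcd 3 (q - 1) = 1 ∧
       (∀ x ∈ mu q K, a * x ^ 3 + b * x ^ 2 + c * x + d ≠ 0) ∧
       gPermutes q a b c d) := by
  classical
  have hq2 : 2 ≤ q := by
    rw [hq]
    calc 2 ≤ p := hp.two_le
      _ ≤ p ^ m := Nat.le_self_pow (by omega) p
  set k := q - 1 with hk_def
  have hqk : q = k + 1 := by omega
  have hk1 : 1 ≤ k := by omega
  have hfact : q ^ 2 - 1 = k * (q + 1) := by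
    obtain ⟨j, hj⟩ : ∃ j, q = 2 + j := ⟨q - 2, by omega⟩
    subst hj
    have e1 : k = j + 1 := by omega
    rw [e1]
    exact Nat.sub_eq_of_eq_add (by ring)
  set f : K → K :=
    fun x : K => a * x ^ (3 * q) + b * x ^ (2 * q + 1) + c * x ^ (q + 2) + d * x ^ 3 with hf
  -- basic representation of f
  have hfx : ∀ x : K, f x = x ^ 3 * (Dpoly a b c d).eval (x ^ k) := by
    intro x
    rw [hf, Dpoly_eval]
    simp only
    rw [hqk]
    have e1 : 3 * (k + 1) = 3 * k + 3 := by ring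
    have e2 : 2 * (k + 1) + 1 = 2 * k + 3 := by ring
    have e3 : (k + 1) + 2 = k + 3 := by ring
    rw [e1, e2, e3]
    ring
  have hf0 : f 0 = 0 := by
    rw [hfx, zero_pow (by norm_num : (3:ℕ) ≠ 0), zero_mul]
  -- membership of x^k in mu
  have hmem : ∀ x : K, x ≠ 0 → x ^ k ∈ mu q K := by
    intro x hx
    show (x ^ k) ^ (q + 1) = 1
    rw [← pow_mul, ← hfact, ← hK]
    exact FiniteField.pow_card_sub_one_eq_one x hx
  have hmu0 : ∀ u ∈ mu q K, u ≠ 0 := by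
    intro u hu h0
    rw [h0] at hu
    have h1 : (0 : K) ^ (q + 1) = 1 := hu
    rw [zero_pow (Nat.succ_ne_zero q)] at h1
    exact zero_ne_one h1
  have h1mu : (1 : K) ∈ mu q K := by simp [mu]
  -- Frobenius identity: N(u) = u^3 * D(u)^q on mu
  obtain ⟨φ, hφ⟩ := aux_frob p m q hp hq hK
  have hNu : ∀ u ∈ mu q K, (Npoly q a b c d).eval u = u ^ 3 * ((Dpoly a b c d).eval u) ^ q := by
    intro u hu
    have hu0 : u ≠ 0 := hmu0 u hu
    have huq : u ^ q = u⁻¹ := by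
      have : u ^ q * u = 1 := by rw [← pow_succ]; exact hu
      field_simp at this ⊢
      linear_combination this
    have hDq : (a * u ^ 3 + b * u ^ 2 + c * u + d) ^ q
        = a ^ q * (u ^ q) ^ 3 + b ^ q * (u ^ q) ^ 2 + c ^ q * u ^ q + d ^ q := by
      simp only [← hφ, map_add, map_mul, map_pow]
    rw [Dpoly_eval, Npoly_eval, hDq, huq]
    field_simp
    ring
  -- the "true" map G on mu and its properties, assuming D has no roots on mu
  set Dp := Dpoly a b c d with hDp
  set Np := Npoly q a b c d with hNp
  set G : K → K := fun u => Np.eval u * (Dp.eval u)⁻¹ with hG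
  set G0 : K → K := fun u => (numer₀ q a b c d).eval u * ((denom₀ q a b c d).eval u)⁻¹ with hG0
  -- Under the no-roots hypothesis:
  have main : (∀ u ∈ mu q K, Dp.eval u ≠ 0) →
      (Set.EqOn G0 G (mu q K)) ∧
      (∀ u ∈ mu q K, G u = u ^ 3 * (Dp.eval u) ^ k) ∧
      (Set.MapsTo G (mu q K) (mu q K)) ∧
      (∀ x : K, x ≠ 0 → f x ^ k = G (x ^ k)) := by
    intro hD
    have hDne : Dp ≠ 0 := by
      intro h
      exact hD 1 h1mu (by rw [h]; simp)
    set gg := EuclideanDomain.gcd Np Dp with hgg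
    have hggne : gg ≠ 0 := by
      intro h
      have := EuclideanDomain.gcd_dvd_right Np Dp
      rw [← hgg, h] at this
      exact hDne (zero_dvd_iff.mp this)
    have hNdiv : gg * numer₀ q a b c d = Np :=
      EuclideanDomain.mul_div_cancel' hggne (EuclideanDomain.gcd_dvd_left Np Dp)
    have hDdiv : gg * denom₀ q a b c d = Dp :=
      EuclideanDomain.mul_div_cancel' hggne (EuclideanDomain.gcd_dvd_right Np Dp)
    have heq : Set.EqOn G0 G (mu q K) := by
      intro u hu
      have hDu : Dp.eval u ≠ 0 := hD u hu
      have hDu' : gg.eval u * (denom₀ q a b c d).eval u ≠ 0 := by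
        rw [← eval_mul, hDdiv]; exact hDu
      have hgu : gg.eval u ≠ 0 := fun h => hDu' (by rw [h, zero_mul])
      have hdu : (denom₀ q a b c d).eval u ≠ 0 := fun h => hDu' (by rw [h, mul_zero])
      rw [hG0, hG]
      simp only
      rw [← hNdiv, ← hDdiv, eval_mul, eval_mul]
      field_simp
    have hGform : ∀ u ∈ mu q K, G u = u ^ 3 * (Dp.eval u) ^ k := by
      intro u hu
      have hDu : Dp.eval u ≠ 0 := hD u hu
      rw [hG]
      simp only
      rw [hNu u hu, hqk, pow_succ]
      field_simp
      ring
    have hmaps : Set.MapsTo G (mu q K) (mu q K) := by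
      intro u hu
      have hDu : Dp.eval u ≠ 0 := hD u hu
      rw [hGform u hu]
      show (u ^ 3 * Dp.eval u ^ k) ^ (q + 1) = 1
      rw [mul_pow, ← pow_mul, ← pow_mul]
      have e1 : 3 * (q + 1) = (q + 1) * 3 := by ring
      rw [e1, pow_mul, hu, one_pow, one_mul, ← hfact, ← hK]
      exact FiniteField.pow_card_sub_one_eq_one _ hDu
    have hcompat : ∀ x : K, x ≠ 0 → f x ^ k = G (x ^ k) := by
      intro x hx
      rw [hfx, hGform (x ^ k) (hmem x hx), mul_pow, ← pow_mul, ← pow_mul, mul_comm 3 k, pow_mul]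
    exact ⟨heq, hGform, hmaps, hcompat⟩
  constructor
  · -- forward direction
    intro hbij
    have hinj := hbij.injective
    -- no roots of D on mu
    have hD : ∀ u ∈ mu q K, Dp.eval u ≠ 0 := by
      intro u hu hzero
      obtain ⟨y, hy0, hyk⟩ := aux_surj q hq2 hK hu
      have : f y = f 0 := by
        rw [hf0, hfx, hyk, hzero, mul_zero]
      exact hy0 (hinj this)
    obtain ⟨heq, hGform, hmaps, hcompat⟩ := main hD
    refine ⟨?_, ?_, ?_⟩
    · -- gcd condition
      by_contra hg3
      have h3dvd : 3 ∣ k := by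
        by_contra h3n
        exact hg3 ((Nat.Prime.coprime_iff_not_dvd (by norm_num)).mpr h3n)
      obtain ⟨z, hz1, hz3, hzq, hz0⟩ := aux_zeta q hq2 hK h3dvd
      have hzz : f z = f 1 := by
        rw [hfx, hfx, hzq, one_pow, one_pow, one_mul]
        have hz3' : z ^ 3 = 1 := hz3
        rw [hz3', one_mul]
      exact hz1 (hinj hzz)
    · -- no roots, restated
      intro x hx
      have := hD x hx
      rwa [hDp, Dpoly_eval] at this
    · -- gPermutes
      have hGbij : Set.BijOn G (mu q K) (mu q K) := by
        rw [← (Set.toFinite (mu q K)).surjOn_iff_bijOn_of_mapsTo hmaps]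
        intro v hv
        obtain ⟨y, hy0, hyk⟩ := aux_surj q hq2 hK hv
        obtain ⟨x, hxy⟩ := hbij.surjective y
        have hx0 : x ≠ 0 := by
          intro h
          rw [h, hf0] at hxy
          exact hy0 hxy.symm
        refine ⟨x ^ k, hmem x hx0, ?_⟩
        rw [← hcompat x hx0, hxy, hyk]
      exact hGbij.congr (Set.EqOn.symm heq)
  · -- backward direction
    rintro ⟨h1, h2, h3⟩
    rw [← Finite.injective_iff_bijective]
    intro x y hxy
    have hD : ∀ u ∈ mu q K, Dp.eval u ≠ 0 := by
      intro u hu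
      rw [hDp, Dpoly_eval]
      exact h2 u hu
    obtain ⟨heq, hGform, hmaps, hcompat⟩ := main hD
    have hfne : ∀ w : K, w ≠ 0 → f w ≠ 0 := by
      intro w hw
      rw [hfx]
      exact mul_ne_zero (pow_ne_zero 3 hw) (hD _ (hmem w hw))
    by_cases hx0 : x = 0
    · by_cases hy0 : y = 0
      · rw [hx0, hy0]
      · exfalso
        rw [hx0, hf0] at hxy
        exact hfne y hy0 hxy.symm
    · by_cases hy0 : y = 0
      · exfalso
        rw [hy0, hf0] at hxy
        exact hfne x hx0 hxy
      · -- both nonzero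
        have hGbij : Set.BijOn G (mu q K) (mu q K) := h3.congr heq
        have hk_eq : x ^ k = y ^ k := by
          apply hGbij.injOn (hmem x hx0) (hmem y hy0)
          rw [← hcompat x hx0, ← hcompat y hy0, hxy]
        have h3_eq : x ^ 3 = y ^ 3 := by
          have hfxy := hxy
          rw [hfx, hfx, hk_eq] at hfxy
          have hDne := hD _ (hmem y hy0)
          exact mul_right_cancel₀ hDne hfxy
        have hz3 : (x / y) ^ 3 = 1 := by
          rw [div_pow, h3_eq, div_self (pow_ne_zero 3 hy0)]
        have hzk : (x / y) ^ k = 1 := by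
          rw [div_pow, hk_eq, div_self (pow_ne_zero k hy0)]
        have ho1 : orderOf (x / y) ∣ 3 := orderOf_dvd_of_pow_eq_one hz3
        have ho2 : orderOf (x / y) ∣ k := orderOf_dvd_of_pow_eq_one hzk
        have ho : orderOf (x / y) ∣ 1 := by
          rw [← h1]; exact Nat.dvd_gcd ho1 ho2
        have : x / y = 1 := orderOf_eq_one_iff.mp (Nat.dvd_one.mp ho)
        field_simp at this
        exact this
end

section
/- Let q be a prime power, K a finite field with q² elements, and a, b, c, d ∈ K. The rational function g = (d^q·X³ + c^q·X² + b^q·X + a^q)/(a·X³ + b·X² + c·X + d) has degree 0 if and only if one of the following holds: (i) d = 0, a = 0, and b^{q+1} = c^{q+1}; (ii) d ≠ 0, d^q·b = a·c^q, d^q·c = a·b^q, and d^{q+1} = a^{q+1}. -/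
open Polynomial

open scoped Classical

lemma cubic_eq_zero_iff {K : Type*} [Field K] (a b c d : K) :
    C a * X ^ 3 + C b * X ^ 2 + C c * X + C d = 0 ↔ a = 0 ∧ b = 0 ∧ c = 0 ∧ d = 0 := by
  constructor
  · intro h
    refine ⟨?_, ?_, ?_, ?_⟩
    · have := congrArg (fun P => P.coeff 3) h
      simp only [coeff_add, coeff_C_mul, coeff_X_pow, coeff_C, coeff_X, coeff_zero] at this
      norm_num at this; exact this
    · have := congrArg (fun P => P.coeff 2) h
      simp only [coeff_add, coeff_C_mul, coeff_X_pow, coeff_C, coeff_X, coeff_zero] at this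
      norm_num at this; exact this
    · have := congrArg (fun P => P.coeff 1) h
      simp only [coeff_add, coeff_C_mul, coeff_X_pow, coeff_C, coeff_X, coeff_zero] at this
      norm_num at this; exact this
    · have := congrArg (fun P => P.coeff 0) h
      simp only [coeff_add, coeff_C_mul, coeff_X_pow, coeff_C, coeff_X, coeff_zero] at this
      norm_num at this; exact this
  · rintro ⟨rfl, rfl, rfl, rfl⟩; simp

lemma npoly_eq_C_mul_iff {K : Type*} [Field K] (q : ℕ) (a b c d l : K) :
    Npoly q a b c d = C l * Dpoly a b c d ↔
      (d ^ q = l * a ∧ c ^ q = l * b ∧ b ^ q = l * c ∧ a ^ q = l * d) := by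
  unfold Npoly Dpoly
  constructor
  · intro h
    rw [mul_add, mul_add, mul_add, ← mul_assoc, ← C_mul, ← mul_assoc, ← C_mul,
      ← mul_assoc, ← C_mul, ← C_mul] at h
    refine ⟨?_, ?_, ?_, ?_⟩
    · have := congrArg (fun P => P.coeff 3) h
      simp only [coeff_add, coeff_C_mul, coeff_X_pow, coeff_C, coeff_X] at this
      norm_num at this; exact this
    · have := congrArg (fun P => P.coeff 2) h
      simp only [coeff_add, coeff_C_mul, coeff_X_pow, coeff_C, coeff_X] at this
      norm_num at this; exact this
    · have := congrArg (fun P => P.coeff 1) h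
      simp only [coeff_add, coeff_C_mul, coeff_X_pow, coeff_C, coeff_X] at this
      norm_num at this; exact this
    · have := congrArg (fun P => P.coeff 0) h
      simp only [coeff_add, coeff_C_mul, coeff_X_pow, coeff_C, coeff_X] at this
      norm_num at this; exact this
  · rintro ⟨h1, h2, h3, h4⟩
    rw [h1, h2, h3, h4, C_mul, C_mul, C_mul, C_mul]; ring

lemma gDeg_zero_iff_prop {K : Type*} [Field K] (q : ℕ) (a b c d : K)
    (hD : Dpoly a b c d ≠ 0) (hN : Npoly q a b c d ≠ 0) :
    gDeg q a b c d = 0 ↔ ∃ l : K, l ≠ 0 ∧ Npoly q a b c d = C l * Dpoly a b c d := by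
  set N := Npoly q a b c d with hNdef
  set D := Dpoly a b c d with hDdef
  set g := EuclideanDomain.gcd N D with hg
  have hgne : g ≠ 0 := by
    intro h0
    rw [hg, EuclideanDomain.gcd_eq_zero_iff] at h0
    exact hN h0.1
  have hNdvd : g ∣ N := EuclideanDomain.gcd_dvd_left N D
  have hDdvd : g ∣ D := EuclideanDomain.gcd_dvd_right N D
  have hNeq : g * (N / g) = N := EuclideanDomain.mul_div_cancel' hgne hNdvd
  have hDeq : g * (D / g) = D := EuclideanDomain.mul_div_cancel' hgne hDdvd
  have hnum0 : N / g ≠ 0 := by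
    intro h0; rw [h0, mul_zero] at hNeq; exact hN hNeq.symm
  have hden0 : D / g ≠ 0 := by
    intro h0; rw [h0, mul_zero] at hDeq; exact hD hDeq.symm
  have hnum : numer₀ q a b c d = N / g := rfl
  have hden : denom₀ q a b c d = D / g := rfl
  unfold gDeg
  rw [hnum, hden, Nat.max_eq_zero_iff]
  constructor
  · rintro ⟨h1, h2⟩
    obtain ⟨u, hu⟩ := Polynomial.natDegree_eq_zero.mp h1
    obtain ⟨v, hv⟩ := Polynomial.natDegree_eq_zero.mp h2
    have hu0 : u ≠ 0 := by rintro rfl; rw [← hu] at hnum0; simp at hnum0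
    have hv0 : v ≠ 0 := by rintro rfl; rw [← hv] at hden0; simp at hden0
    have key : C v * N = C u * D := by
      rw [← hNeq, ← hDeq, ← hu, ← hv]; ring
    refine ⟨v⁻¹ * u, mul_ne_zero (inv_ne_zero hv0) hu0, ?_⟩
    rw [C_mul, mul_assoc, ← key, ← mul_assoc, ← C_mul, inv_mul_cancel₀ hv0, C_1, one_mul]
  · rintro ⟨l, hl, hEq⟩
    have hDN : D ∣ N := ⟨C l, by rw [hEq]; ring⟩
    have hDg : D ∣ g := EuclideanDomain.dvd_gcd hDN dvd_rfl
    have hdegs : g.natDegree = D.natDegree :=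
      le_antisymm (Polynomial.natDegree_le_of_dvd hDdvd hD)
        (Polynomial.natDegree_le_of_dvd hDg hgne)
    have hNdeg : N.natDegree = D.natDegree := by
      rw [hEq, Polynomial.natDegree_C_mul hl]
    constructor
    · have hmul := Polynomial.natDegree_mul hgne hnum0
      rw [hNeq] at hmul
      omega
    · have hmul := Polynomial.natDegree_mul hgne hden0
      rw [hDeq] at hmul
      omega

/-- Theorem on degrees, part (1): `deg g = 0` iff (i) or (ii). -/
theorem stmt8 {K : Type*} [Field K] [Fintype K] (p m q : ℕ) (hp : p.Prime)
    (hm : 1 ≤ m) (hq : q = p ^ m) (hK : Fintype.card K = q ^ 2) (a b c d : K) :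
    gDeg q a b c d = 0 ↔
      ((d = 0 ∧ a = 0 ∧ b ^ (q + 1) = c ^ (q + 1)) ∨
       (d ≠ 0 ∧ d ^ q * b = a * c ^ q ∧ d ^ q * c = a * b ^ q ∧
         d ^ (q + 1) = a ^ (q + 1))) := by
  have hq0 : q ≠ 0 := by
    subst hq; exact pow_ne_zero _ hp.pos.ne'
  by_cases hzero : a = 0 ∧ b = 0 ∧ c = 0 ∧ d = 0
  · obtain ⟨rfl, rfl, rfl, rfl⟩ := hzero
    have hNz : Npoly q (0:K) 0 0 0 = 0 := by
      simp [Npoly, zero_pow hq0]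
    have hDz : Dpoly (0:K) 0 0 0 = 0 := by simp [Dpoly]
    constructor
    · intro _; left; exact ⟨rfl, rfl, rfl⟩
    · intro _
      unfold gDeg numer₀ denom₀
      rw [hNz, hDz]
      simp
  · -- not all zero
    have hD : Dpoly a b c d ≠ 0 := by
      rw [Dpoly, Ne, cubic_eq_zero_iff]; exact hzero
    have hN : Npoly q a b c d ≠ 0 := by
      rw [Npoly, Ne, cubic_eq_zero_iff]
      intro ⟨h1, h2, h3, h4⟩
      exact hzero ⟨pow_eq_zero_iff hq0 |>.mp h4, pow_eq_zero_iff hq0 |>.mp h3,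
        pow_eq_zero_iff hq0 |>.mp h2, pow_eq_zero_iff hq0 |>.mp h1⟩
    rw [gDeg_zero_iff_prop q a b c d hD hN]
    constructor
    · rintro ⟨l, hl, hEq⟩
      obtain ⟨e1, e2, e3, e4⟩ := (npoly_eq_C_mul_iff q a b c d l).mp hEq
      by_cases hd : d = 0
      · subst hd
        have ha : a = 0 := by
          have : a ^ q = 0 := by rw [e4, mul_zero]
          exact (pow_eq_zero_iff hq0).mp this
        left
        refine ⟨rfl, ha, ?_⟩
        rw [pow_succ, pow_succ, e2, e3]
        ring
      · right
        refine ⟨hd, ?_, ?_, ?_⟩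
        · rw [e1, e2]; ring
        · rw [e1, e3]; ring
        · rw [pow_succ, pow_succ, e1, e4]; ring
    · rintro (⟨rfl, rfl, hbc⟩ | ⟨hd, h1, h2, h3⟩)
      · -- case (i)
        have hbc0 : b ≠ 0 ∧ c ≠ 0 := by
          constructor
          · intro hb
            apply hzero
            subst hb
            have : c ^ (q + 1) = 0 := by rw [← hbc, zero_pow (by omega)]
            exact ⟨rfl, rfl, (pow_eq_zero_iff (by omega : q + 1 ≠ 0)).mp this, rfl⟩
          · intro hc
            apply hzero
            subst hc
            have : b ^ (q + 1) = 0 := by rw [hbc, zero_pow (by omega)]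
            exact ⟨rfl, (pow_eq_zero_iff (by omega : q + 1 ≠ 0)).mp this, rfl, rfl⟩
        obtain ⟨hb, hc⟩ := hbc0
        refine ⟨c ^ q / b, div_ne_zero (pow_ne_zero _ hc) hb, ?_⟩
        rw [npoly_eq_C_mul_iff]
        refine ⟨by rw [zero_pow hq0, mul_zero], by field_simp, ?_, by
          rw [zero_pow hq0, mul_zero]⟩
        field_simp
        rw [← pow_succ, ← pow_succ, hbc]
      · -- case (ii)
        have ha : a ≠ 0 := by
          intro h0
          apply hd
          have : d ^ (q + 1) = 0 := by rw [h3, h0, zero_pow (by omega)]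
          exact (pow_eq_zero_iff (by omega : q + 1 ≠ 0)).mp this
        refine ⟨d ^ q / a, div_ne_zero (pow_ne_zero _ hd) ha, ?_⟩
        rw [npoly_eq_C_mul_iff]
        refine ⟨by field_simp, ?_, ?_, ?_⟩
        · field_simp
          rw [mul_comm (c ^ q) a, ← h1]
        · field_simp
          rw [mul_comm (b ^ q) a, ← h2]
        · field_simp
          rw [← pow_succ, ← pow_succ, h3]
end

section
/- Let q be a prime power, K a finite field with q² elements, and a, b, c, d ∈ K with d ≠ 0, d^q·b = a·c^q, d^q·c ≠ a·b^q, and d^{q+1} ≠ a^{q+1}. Then the greatest common divisor H of N(X) = d^q·X³ + c^q·X² + b^q·X + a^q and D(X) = a·X³ + b·X² + c·X + d in K[X] has degree 1 if and only if (d^{q+1} − a^{q+1})^{q+1} = (d^q·c − a·b^q)·(d·c^q − a^q·b). -/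
open Polynomial

open scoped Classical

/-!
Put `α = d^q c - a b^q`, `β = d^{q+1} - a^{q+1}` and `γ = d c^q - a^q b`. Using `d^q b = a c^q`
and its Frobenius conjugate `d b^q = a^q c`, one gets `d^q D - a N = α X + β` and
`d N - a^q D = X² (β X + γ)`. The first identity bounds the degree of the gcd by one, and, as
`β ≠ 0` and `D(0) = d ≠ 0`, the two identities show that the common roots of `N` and `D` are
exactly the common roots of `α X + β` and `β X + γ`. Such a root exists iff `β² = α γ`, and
`β^{q+1} = β²` because `β` is fixed by Frobenius.
-/

section Gcd

variable {K : Type*} [Field K]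

theorem natDegree_gcd_eq_one_iff_exists_common_root {f g : K[X]} (hg : g ≠ 0)
    (hle : (EuclideanDomain.gcd f g).natDegree ≤ 1) :
    (EuclideanDomain.gcd f g).natDegree = 1 ↔ ∃ x, f.eval x = 0 ∧ g.eval x = 0 := by
  have hgcd : EuclideanDomain.gcd f g ≠ 0 := fun h ↦ hg (EuclideanDomain.gcd_eq_zero_iff.mp h).2
  constructor
  · intro hdeg
    obtain ⟨x, hx⟩ := exists_root_of_degree_eq_one ((degree_eq_iff_natDegree_eq hgcd).mpr hdeg)
    exact ⟨x, eval_eq_zero_of_dvd_of_eval_eq_zero (EuclideanDomain.gcd_dvd_left f g) hx,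
      eval_eq_zero_of_dvd_of_eval_eq_zero (EuclideanDomain.gcd_dvd_right f g) hx⟩
  · rintro ⟨x, hfx, hgx⟩
    have hdvd : X - C x ∣ EuclideanDomain.gcd f g :=
      EuclideanDomain.dvd_gcd (dvd_iff_isRoot.mpr hfx) (dvd_iff_isRoot.mpr hgx)
    have := natDegree_le_of_dvd hdvd hgcd
    rw [natDegree_X_sub_C] at this
    omega

theorem exists_common_root_linear_iff {α β γ : K} (hα : α ≠ 0) :
    (∃ x, α * x + β = 0 ∧ β * x + γ = 0) ↔ β ^ 2 = α * γ := by
  constructor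
  · rintro ⟨x, h₁, h₂⟩
    linear_combination β * h₁ - α * h₂
  · intro h
    refine ⟨-β / α, by field_simp; ring, ?_⟩
    field_simp
    linear_combination -h

end Gcd

section CubicPair

variable {K : Type*} [Field K] (q : ℕ) {a b c d : K}

theorem Dpoly_ne_zero (hd : d ≠ 0) : Dpoly a b c d ≠ 0 := fun h ↦
  hd (by simpa [Dpoly] using congrArg (eval 0) h)

theorem C_mul_Dpoly_sub_C_mul_Npoly (h₁ : d ^ q * b = a * c ^ q) :
    C (d ^ q) * Dpoly a b c d - C a * Npoly q a b c d =
      C (d ^ q * c - a * b ^ q) * X + C (d ^ (q + 1) - a ^ (q + 1)) := by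
  have h₁' : C d ^ q * C b = C a * C c ^ q := by simpa only [map_mul, map_pow] using congrArg C h₁
  simp only [Dpoly, Npoly, map_sub, map_mul, map_pow]
  linear_combination X ^ 2 * h₁'

theorem natDegree_gcd_Npoly_Dpoly_le_one (h₁ : d ^ q * b = a * c ^ q)
    (hα : d ^ q * c - a * b ^ q ≠ 0) :
    (EuclideanDomain.gcd (Npoly q a b c d) (Dpoly a b c d)).natDegree ≤ 1 := by
  have hdvd : EuclideanDomain.gcd (Npoly q a b c d) (Dpoly a b c d) ∣
      C (d ^ q * c - a * b ^ q) * X + C (d ^ (q + 1) - a ^ (q + 1)) := by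
    rw [← C_mul_Dpoly_sub_C_mul_Npoly q h₁]
    exact dvd_sub ((EuclideanDomain.gcd_dvd_right _ _).mul_left _)
      ((EuclideanDomain.gcd_dvd_left _ _).mul_left _)
  have hlin := natDegree_linear (b := d ^ (q + 1) - a ^ (q + 1)) hα
  have hne : C (d ^ q * c - a * b ^ q) * X + C (d ^ (q + 1) - a ^ (q + 1)) ≠ 0 :=
    ne_zero_of_natDegree_gt (n := 0) (by rw [hlin]; exact one_pos)
  calc _ ≤ _ := natDegree_le_of_dvd hdvd hne
    _ = 1 := hlin

theorem C_mul_Npoly_sub_C_mul_Dpoly (h₁' : d * b ^ q = a ^ q * c) :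
    C d * Npoly q a b c d - C (a ^ q) * Dpoly a b c d =
      X ^ 2 * (C (d ^ (q + 1) - a ^ (q + 1)) * X + C (d * c ^ q - a ^ q * b)) := by
  have h₁'' : C d * C b ^ q = C a ^ q * C c := by
    simpa only [map_mul, map_pow] using congrArg C h₁'
  simp only [Dpoly, Npoly, map_sub, map_mul, map_pow]
  linear_combination X * h₁''

theorem eval_Npoly_eq_zero_and_eval_Dpoly_eq_zero_iff (hd : d ≠ 0)
    (h₁ : d ^ q * b = a * c ^ q) (h₁' : d * b ^ q = a ^ q * c) (hβ : d ^ (q + 1) - a ^ (q + 1) ≠ 0)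
    (x : K) :
    ((Npoly q a b c d).eval x = 0 ∧ (Dpoly a b c d).eval x = 0) ↔
      (d ^ q * c - a * b ^ q) * x + (d ^ (q + 1) - a ^ (q + 1)) = 0 ∧
        (d ^ (q + 1) - a ^ (q + 1)) * x + (d * c ^ q - a ^ q * b) = 0 := by
  have e₁ := congrArg (eval x) (C_mul_Dpoly_sub_C_mul_Npoly q h₁)
  have e₂ := congrArg (eval x) (C_mul_Npoly_sub_C_mul_Dpoly q h₁')
  simp only [eval_sub, eval_add, eval_mul, eval_pow, eval_C, eval_X] at e₁ e₂
  constructor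
  · rintro ⟨hN, hD⟩
    have hx : x ≠ 0 := by
      rintro rfl
      exact hd (by simpa [Dpoly] using hD)
    rw [hN, hD] at e₁ e₂
    refine ⟨by linear_combination -e₁, ?_⟩
    have h : x ^ 2 * ((d ^ (q + 1) - a ^ (q + 1)) * x + (d * c ^ q - a ^ q * b)) = 0 := by
      linear_combination -e₂
    exact (mul_eq_zero.mp h).resolve_left (pow_ne_zero 2 hx)
  · rintro ⟨hl₁, hl₂⟩
    rw [hl₁] at e₁
    rw [hl₂, mul_zero] at e₂
    have hN : (d ^ (q + 1) - a ^ (q + 1)) * (Npoly q a b c d).eval x = 0 := by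
      linear_combination d ^ q * e₂ + a ^ q * e₁
    have hD : (d ^ (q + 1) - a ^ (q + 1)) * (Dpoly a b c d).eval x = 0 := by
      linear_combination d * e₁ + a * e₂
    exact ⟨(mul_eq_zero.mp hN).resolve_left hβ, (mul_eq_zero.mp hD).resolve_left hβ⟩

theorem natDegree_gcd_Npoly_Dpoly_eq_one_iff (hd : d ≠ 0) (h₁ : d ^ q * b = a * c ^ q)
    (h₁' : d * b ^ q = a ^ q * c) (hα : d ^ q * c - a * b ^ q ≠ 0)
    (hβ : d ^ (q + 1) - a ^ (q + 1) ≠ 0) :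
    (EuclideanDomain.gcd (Npoly q a b c d) (Dpoly a b c d)).natDegree = 1 ↔
      (d ^ (q + 1) - a ^ (q + 1)) ^ 2 = (d ^ q * c - a * b ^ q) * (d * c ^ q - a ^ q * b) := by
  rw [natDegree_gcd_eq_one_iff_exists_common_root (Dpoly_ne_zero hd)
      (natDegree_gcd_Npoly_Dpoly_le_one q h₁ hα), ← exists_common_root_linear_iff hα]
  simp only [eval_Npoly_eq_zero_and_eval_Dpoly_eq_zero_iff q hd h₁ h₁' hβ]

end CubicPair

section Frobenius

variable {K : Type*} [Field K] [Fintype K] {q : ℕ}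

theorem pow_pow_eq_self_of_card_eq_sq (hK : Fintype.card K = q ^ 2) (x : K) : (x ^ q) ^ q = x := by
  rw [← pow_mul, ← sq, ← hK, FiniteField.pow_card]

theorem pow_succ_pow_eq_self_of_card_eq_sq (hK : Fintype.card K = q ^ 2) (x : K) :
    (x ^ (q + 1)) ^ q = x ^ (q + 1) := by
  rw [pow_succ, mul_pow, pow_pow_eq_self_of_card_eq_sq hK, mul_comm]

theorem sub_pow_eq_of_card_eq_sq {p m : ℕ} (hp : p.Prime) (hq : q = p ^ m)
    (hK : Fintype.card K = q ^ 2) (x y : K) : (x - y) ^ q = x ^ q - y ^ q := by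
  have : Fact p.Prime := ⟨hp⟩
  have : CharP K p := charP_of_card_eq_prime_pow (f := m * 2) (by rw [hK, hq, pow_mul])
  rw [hq]
  exact sub_pow_char_pow x y m

end Frobenius

theorem stmt11_general {K : Type*} [Field K] [Fintype K] (p m q : ℕ) (hp : p.Prime)
    (hq : q = p ^ m) (hK : Fintype.card K = q ^ 2) (a b c d : K)
    (hd : d ≠ 0) (h1 : d ^ q * b = a * c ^ q) (h2 : d ^ q * c ≠ a * b ^ q)
    (h3 : d ^ (q + 1) ≠ a ^ (q + 1)) :
    (EuclideanDomain.gcd (Npoly q a b c d) (Dpoly a b c d)).natDegree = 1 ↔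
      (d ^ (q + 1) - a ^ (q + 1)) ^ (q + 1) =
        (d ^ q * c - a * b ^ q) * (d * c ^ q - a ^ q * b) := by
  have hinv := pow_pow_eq_self_of_card_eq_sq hK
  have h1' : d * b ^ q = a ^ q * c := by
    simpa only [mul_pow, hinv] using congrArg (· ^ q) h1
  have hβ : (d ^ (q + 1) - a ^ (q + 1)) ^ q = d ^ (q + 1) - a ^ (q + 1) := by
    rw [sub_pow_eq_of_card_eq_sq hp hq hK, pow_succ_pow_eq_self_of_card_eq_sq hK,
      pow_succ_pow_eq_self_of_card_eq_sq hK]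
  rw [pow_succ, hβ, ← sq]
  exact natDegree_gcd_Npoly_Dpoly_eq_one_iff q hd h1 h1' (sub_ne_zero.mpr h2) (sub_ne_zero.mpr h3)

/-- Lemma 8 of the paper: when `d ≠ 0`, `d^q·b = a·c^q`,
`d^q·c ≠ a·b^q` and `d^{q+1} ≠ a^{q+1}`, the gcd of `N` and `D` has degree 1 iff
`(d^{q+1} − a^{q+1})^{q+1} = (d^q·c − a·b^q)·(d·c^q − a^q·b)`. -/
theorem stmt11 {K : Type*} [Field K] [Fintype K] (p m q : ℕ) (hp : p.Prime)
    (hm : 1 ≤ m) (hq : q = p ^ m) (hK : Fintype.card K = q ^ 2) (a b c d : K)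
    (hd : d ≠ 0) (h1 : d ^ q * b = a * c ^ q) (h2 : d ^ q * c ≠ a * b ^ q)
    (h3 : d ^ (q + 1) ≠ a ^ (q + 1)) :
    (EuclideanDomain.gcd (Npoly q a b c d) (Dpoly a b c d)).natDegree = 1 ↔
      (d ^ (q + 1) - a ^ (q + 1)) ^ (q + 1) =
        (d ^ q * c - a * b ^ q) * (d * c ^ q - a ^ q * b) :=
  stmt11_general p m q hp hq hK a b c d hd h1 h2 h3
end

section
/- Let q be a prime power, K a finite field with q² elements, and a, b, c, d ∈ K with d ≠ 0 and d^q·b ≠ a·c^q. Then the greatest common divisor H of N(X) = d^q·X³ + c^q·X² + b^q·X + a^q and D(X) = a·X³ + b·X² + c·X + d in K[X] has degree 2 if and only if one of the following holds: (i) d^q·c ≠ a·b^q and ((d^q·c − a·b^q)/(d^q·b − a·c^q))^q · ((d^{q+1} − a^{q+1})/(d^q·b − a·c^q)) = (d^q·c − a·b^q)/(d^q·b − a·c^q); (ii) d^q·c = a·b^q and (d^{q+1} − a^{q+1})/(d^q·b − a·c^q) = b^q/d^q, with this common value lying in μ_{q+1}. -/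
open Polynomial

open scoped Classical

lemma gcd_deg_iff' {K : Type*} [Field K] (q : ℕ) (a b c d : K) (hd : d ≠ 0)
    (he : d ^ q * b - a * c ^ q ≠ 0) :
    (EuclideanDomain.gcd (Npoly q a b c d) (Dpoly a b c d)).natDegree = 2 ↔
      (b ^ q * (d ^ q * b - a * c ^ q) ^ 2
          - d ^ q * (d ^ (q + 1) - a ^ (q + 1)) * (d ^ q * b - a * c ^ q)
          - (d ^ q * c - a * b ^ q) * c ^ q * (d ^ q * b - a * c ^ q)
          + d ^ q * (d ^ q * c - a * b ^ q) ^ 2 = 0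
        ∧ a ^ q * (d ^ q * b - a * c ^ q) ^ 2
          - (d ^ (q + 1) - a ^ (q + 1)) * c ^ q * (d ^ q * b - a * c ^ q)
          + (d ^ (q + 1) - a ^ (q + 1)) * d ^ q * (d ^ q * c - a * b ^ q) = 0) := by
  set N := Npoly q a b c d with hN
  set D := Dpoly a b c d with hD
  set F1 : K := b ^ q * (d ^ q * b - a * c ^ q) ^ 2
          - d ^ q * (d ^ (q + 1) - a ^ (q + 1)) * (d ^ q * b - a * c ^ q)
          - (d ^ q * c - a * b ^ q) * c ^ q * (d ^ q * b - a * c ^ q)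
          + d ^ q * (d ^ q * c - a * b ^ q) ^ 2 with hF1
  set F2 : K := a ^ q * (d ^ q * b - a * c ^ q) ^ 2
          - (d ^ (q + 1) - a ^ (q + 1)) * c ^ q * (d ^ q * b - a * c ^ q)
          + (d ^ (q + 1) - a ^ (q + 1)) * d ^ q * (d ^ q * c - a * b ^ q) with hF2
  set P : K[X] := C (d ^ q * b - a * c ^ q) * X ^ 2 + C (d ^ q * c - a * b ^ q) * X
        + C (d ^ (q + 1) - a ^ (q + 1)) with hP
  set Q : K[X] := C (d ^ q * (d ^ q * b - a * c ^ q)) * X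
          + C (c ^ q * (d ^ q * b - a * c ^ q) - d ^ q * (d ^ q * c - a * b ^ q)) with hQ
  have hdq : d ^ q ≠ 0 := pow_ne_zero q hd
  have Id1 : C (d ^ q) * D - C a * N = P := by
    rw [hP, hD, hN]; simp only [Dpoly, Npoly, map_sub, map_mul, map_add, map_pow]; ring
  have Id2 : C (d ^ q * b - a * c ^ q) ^ 2 * N = P * Q + C F1 * X + C F2 := by
    rw [hP, hQ, hF1, hF2, hN]; simp only [Npoly, map_sub, map_mul, map_add, map_pow]; ring
  have hPdeg : P.natDegree = 2 := natDegree_quadratic he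
  have hPne : P ≠ 0 := fun h => by rw [h] at hPdeg; simp at hPdeg
  have hNdeg : N.natDegree = 3 := by rw [hN]; exact natDegree_cubic hdq
  have hNne : N ≠ 0 := fun h => by rw [h] at hNdeg; simp at hNdeg
  set G := EuclideanDomain.gcd N D with hG
  have hGN : G ∣ N := EuclideanDomain.gcd_dvd_left N D
  have hGD : G ∣ D := EuclideanDomain.gcd_dvd_right N D
  have hGne : G ≠ 0 := fun h => hNne ((EuclideanDomain.gcd_eq_zero_iff.mp h).1)
  have hGP : G ∣ P := Id1 ▸ dvd_sub (hGD.mul_left _) (hGN.mul_left _)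
  constructor
  · intro hdeg
    obtain ⟨t, ht⟩ := hGP
    have htne : t ≠ 0 := fun h => hPne (by rw [ht, h, mul_zero])
    have hdeg2 : P.natDegree = G.natDegree + t.natDegree := by rw [ht]; exact natDegree_mul hGne htne
    have htdeg : t.natDegree = 0 := by omega
    obtain ⟨t0, ht0⟩ := Polynomial.natDegree_eq_zero.mp htdeg
    have ht0ne : t0 ≠ 0 := fun h => htne (by rw [← ht0, h, map_zero])
    have hPdvdG : P ∣ G := by
      refine ⟨C t0⁻¹, ?_⟩
      rw [ht, ← ht0, mul_assoc, ← map_mul, mul_inv_cancel₀ ht0ne, map_one, mul_one]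
    have hPN : P ∣ N := hPdvdG.trans hGN
    have hrem : P ∣ C F1 * X + C F2 := by
      have h2 : C F1 * X + C F2 = C (d ^ q * b - a * c ^ q) ^ 2 * N - P * Q := by
        rw [Id2]; ring
      rw [h2]
      exact dvd_sub (hPN.mul_left _) (dvd_mul_right _ _)
    have hlin : C F1 * X + C F2 = 0 := by
      by_contra hne
      have h3 := natDegree_le_of_dvd hrem hne
      have h4 : (C F1 * X + C F2).natDegree ≤ 1 := natDegree_linear_le
      omega
    constructor
    · have := congrArg (fun pp => Polynomial.coeff pp 1) hlin
      simpa using this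
    · have := congrArg (fun pp => Polynomial.coeff pp 0) hlin
      simpa using this
  · rintro ⟨h1, h2⟩
    rw [h1, h2] at Id2
    simp only [map_zero, zero_mul, add_zero] at Id2
    have hPN : P ∣ N := by
      refine ⟨C ((d ^ q * b - a * c ^ q)⁻¹) ^ 2 * Q, ?_⟩
      calc N = C ((d ^ q * b - a * c ^ q)⁻¹) ^ 2 * (C (d ^ q * b - a * c ^ q) ^ 2 * N) := by
              rw [← mul_assoc, ← mul_pow, ← map_mul, inv_mul_cancel₀ he, map_one, one_pow, one_mul]
        _ = P * (C ((d ^ q * b - a * c ^ q)⁻¹) ^ 2 * Q) := by rw [Id2]; ring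
    have hPD : P ∣ D := by
      have h5 : C (d ^ q) * D = P + C a * N := by rw [← Id1]; ring
      have h6 : P ∣ C (d ^ q) * D := h5 ▸ dvd_add dvd_rfl (hPN.mul_left _)
      obtain ⟨w, hw⟩ := h6
      refine ⟨C ((d ^ q)⁻¹) * w, ?_⟩
      calc D = C ((d ^ q)⁻¹) * (C (d ^ q) * D) := by
              rw [← mul_assoc, ← map_mul, inv_mul_cancel₀ hdq, map_one, one_mul]
        _ = P * (C ((d ^ q)⁻¹) * w) := by rw [hw]; ring
    have hPG : P ∣ G := EuclideanDomain.dvd_gcd hPN hPD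
    have hle : G.natDegree ≤ 2 := hPdeg ▸ natDegree_le_of_dvd hGP hPne
    have hge : 2 ≤ G.natDegree := hPdeg ▸ natDegree_le_of_dvd hPG hGne
    omega

/-- Lemma 9 of the paper: when `d ≠ 0` and `d^q·b ≠ a·c^q`, the
gcd of `N` and `D` has degree 2 iff (i) or (ii) holds. -/
theorem stmt12 {K : Type*} [Field K] [Fintype K] (p m q : ℕ) (hp : p.Prime)
    (hm : 1 ≤ m) (hq : q = p ^ m) (hK : Fintype.card K = q ^ 2) (a b c d : K)
    (hd : d ≠ 0) (h1 : d ^ q * b ≠ a * c ^ q) :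
    (EuclideanDomain.gcd (Npoly q a b c d) (Dpoly a b c d)).natDegree = 2 ↔
      ((d ^ q * c ≠ a * b ^ q ∧
         ((d ^ q * c - a * b ^ q) / (d ^ q * b - a * c ^ q)) ^ q *
           ((d ^ (q + 1) - a ^ (q + 1)) / (d ^ q * b - a * c ^ q)) =
           (d ^ q * c - a * b ^ q) / (d ^ q * b - a * c ^ q)) ∨
       (d ^ q * c = a * b ^ q ∧
         (d ^ (q + 1) - a ^ (q + 1)) / (d ^ q * b - a * c ^ q) = b ^ q / d ^ q ∧
         b ^ q / d ^ q ∈ mu q K)) := by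
  have hq0 : q ≠ 0 := by
    have : 0 < p ^ m := pow_pos hp.pos m
    omega
  haveI : Fact p.Prime := ⟨hp⟩
  haveI hcharK : CharP K p := by
    have h := FiniteField.cast_card_eq_zero K
    rw [hK, hq, ← pow_mul] at h
    push_cast at h
    have hpK : (p : K) = 0 := pow_eq_zero_iff (n := m * 2) (by omega) |>.mp h
    rcases CharP.char_is_prime_or_zero K (ringChar K) with h1 | h1
    · have hdvd : ringChar K ∣ p := (ringChar.spec K p).mp hpK
      rcases hp.eq_one_or_self_of_dvd _ hdvd with h2 | h2
      · exact absurd h2 h1.one_lt.ne'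
      · exact h2 ▸ ringChar.charP K
    · have h3 := (ringChar.spec K p).mp hpK
      rw [h1] at h3
      simp at h3
      exact absurd (h3 ▸ hp) (by norm_num)
  have hsubq : ∀ x y : K, (x - y) ^ q = x ^ q - y ^ q := fun x y => by
    rw [hq]; exact sub_pow_char_pow x y m
  have hfq : ∀ x : K, (x ^ q) ^ q = x := fun x => by
    rw [← pow_mul, ← pow_two, ← hK, FiniteField.pow_card]
  have hvq : ∀ x : K, (x ^ (q + 1)) ^ q = x ^ (q + 1) := fun x => by
    rw [pow_succ, mul_pow, hfq]; ring
  have hdq : d ^ q ≠ 0 := pow_ne_zero q hd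
  have he : d ^ q * b - a * c ^ q ≠ 0 := sub_ne_zero_of_ne h1
  have hEq : (d ^ q * b - a * c ^ q) ^ q = d * b ^ q - a ^ q * c := by
    rw [hsubq, mul_pow, mul_pow, hfq d, hfq c]
  have hE2 : (d * b ^ q - a ^ q * c) ^ q = d ^ q * b - a * c ^ q := by
    rw [hsubq, mul_pow, mul_pow, hfq b, hfq a]
  have hUq : (d ^ q * c - a * b ^ q) ^ q = d * c ^ q - a ^ q * b := by
    rw [hsubq, mul_pow, mul_pow, hfq d, hfq b]
  have hU2 : (d * c ^ q - a ^ q * b) ^ q = d ^ q * c - a * b ^ q := by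
    rw [hsubq, mul_pow, mul_pow, hfq c, hfq a]
  have hvq2 : (d ^ (q + 1) - a ^ (q + 1)) ^ q = d ^ (q + 1) - a ^ (q + 1) := by
    rw [hsubq, hvq, hvq]
  have hE : d * b ^ q - a ^ q * c ≠ 0 := fun h => he (by rw [← hE2, h, zero_pow hq0])
  rw [gcd_deg_iff' q a b c d hd he]
  constructor
  · rintro ⟨hF1, hF2⟩
    -- F2 = d^q · (u·v − U·e)
    have h5 : d ^ q * ((d ^ q * c - a * b ^ q) * (d ^ (q + 1) - a ^ (q + 1))
        - (d * c ^ q - a ^ q * b) * (d ^ q * b - a * c ^ q)) = 0 := by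
      linear_combination hF2
    have hGp : (d ^ q * c - a * b ^ q) * (d ^ (q + 1) - a ^ (q + 1))
        = (d * c ^ q - a ^ q * b) * (d ^ q * b - a * c ^ q) :=
      sub_eq_zero.mp ((mul_eq_zero.mp h5).resolve_left hdq)
    have hG : (d * c ^ q - a ^ q * b) * (d ^ (q + 1) - a ^ (q + 1))
        = (d ^ q * c - a * b ^ q) * (d * b ^ q - a ^ q * c) := by
      have h6 := congrArg (· ^ q) hGp
      simp only [mul_pow] at h6
      rwa [hUq, hvq2, hU2, hEq] at h6
    by_cases hu : d ^ q * c = a * b ^ q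
    · refine Or.inr ⟨hu, ?_, ?_⟩
      · -- s = b^q / d^q
        have hu0 : d ^ q * c - a * b ^ q = 0 := sub_eq_zero_of_eq hu
        have h7 : (d ^ q * b - a * c ^ q) * (b ^ q * (d ^ q * b - a * c ^ q)
            - d ^ q * (d ^ (q + 1) - a ^ (q + 1))) = 0 := by
          linear_combination hF1 + (c ^ q * (d ^ q * b - a * c ^ q)
            - d ^ q * (d ^ q * c - a * b ^ q)) * hu0
        have hBe : b ^ q * (d ^ q * b - a * c ^ q) = d ^ q * (d ^ (q + 1) - a ^ (q + 1)) :=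
          sub_eq_zero.mp ((mul_eq_zero.mp h7).resolve_left he)
        rw [div_eq_div_iff he hdq]
        linear_combination -hBe
      · -- μ_{q+1} membership
        have hu0 : d ^ q * c - a * b ^ q = 0 := sub_eq_zero_of_eq hu
        have hU0 : d * c ^ q - a ^ q * b = 0 := by
          have := congrArg (· ^ q) hu0
          simp only [hUq] at this
          rwa [zero_pow hq0] at this
        have h7 : (d ^ q * b - a * c ^ q) * (b ^ q * (d ^ q * b - a * c ^ q)
            - d ^ q * (d ^ (q + 1) - a ^ (q + 1))) = 0 := by
          linear_combination hF1 + (c ^ q * (d ^ q * b - a * c ^ q)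
            - d ^ q * (d ^ q * c - a * b ^ q)) * hu0
        have hBe : b ^ q * (d ^ q * b - a * c ^ q) = d ^ q * (d ^ (q + 1) - a ^ (q + 1)) :=
          sub_eq_zero.mp ((mul_eq_zero.mp h7).resolve_left he)
        have hv2 : b * b ^ q - c * c ^ q = d ^ (q + 1) - a ^ (q + 1) := by
          have h9 : d ^ q * (b * b ^ q - c * c ^ q - (d ^ (q + 1) - a ^ (q + 1))) = 0 := by
            linear_combination hBe - c ^ q * hu0
          exact sub_eq_zero.mp ((mul_eq_zero.mp h9).resolve_left hdq)
        have hkey : (c * c ^ q - b * b ^ q) * (d * d ^ q - b * b ^ q) = 0 := by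
          linear_combination (b * b ^ q) * hv2 + (b * a ^ q) * hu0 + (c * d ^ q) * hU0
        rcases mul_eq_zero.mp hkey with h10 | h10
        · exfalso
          have hv0 : d ^ (q + 1) - a ^ (q + 1) = 0 := by linear_combination -hv2 - h10
          have hB0 : b ^ q = 0 := by
            have h11 : b ^ q * (d ^ q * b - a * c ^ q) = 0 := by
              rw [hBe, hv0, mul_zero]
            exact (mul_eq_zero.mp h11).resolve_right he
          have hb0 : b = 0 := by rw [← hfq b, hB0, zero_pow hq0]
          have hcC : c * c ^ q = 0 := by linear_combination h10 + b * hB0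
          have hC0 : c ^ q = 0 := by
            rcases mul_eq_zero.mp hcC with h | h
            · rw [h, zero_pow hq0]
            · exact h
          exact he (by rw [hb0, hC0, mul_zero, mul_zero, sub_zero])
        · show (b ^ q / d ^ q) ^ (q + 1) = 1
          have hb' : (b ^ q) ^ (q + 1) = b * b ^ q := by rw [pow_succ, hfq]
          have hd' : (d ^ q) ^ (q + 1) = d * d ^ q := by rw [pow_succ, hfq]
          rw [div_pow, hb', hd', div_eq_one_iff_eq (mul_ne_zero hd hdq)]
          linear_combination -h10
    · refine Or.inl ⟨hu, ?_⟩
      rw [div_pow, hUq, hEq, div_mul_div_comm, div_eq_div_iff (mul_ne_zero hE he) he]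
      linear_combination (d ^ q * b - a * c ^ q) * hG
  · rintro (⟨hune, heqn⟩ | ⟨hu, hs, _hmu⟩)
    · have hu0ne : d ^ q * c - a * b ^ q ≠ 0 := sub_ne_zero_of_ne hune
      rw [div_pow, hUq, hEq, div_mul_div_comm, div_eq_div_iff (mul_ne_zero hE he) he] at heqn
      have hG : (d * c ^ q - a ^ q * b) * (d ^ (q + 1) - a ^ (q + 1))
          = (d ^ q * c - a * b ^ q) * (d * b ^ q - a ^ q * c) := by
        have h12 : ((d * c ^ q - a ^ q * b) * (d ^ (q + 1) - a ^ (q + 1)))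
            * (d ^ q * b - a * c ^ q)
            = ((d ^ q * c - a * b ^ q) * (d * b ^ q - a ^ q * c))
            * (d ^ q * b - a * c ^ q) := by linear_combination heqn
        exact mul_right_cancel₀ he h12
      have hGp : (d ^ q * c - a * b ^ q) * (d ^ (q + 1) - a ^ (q + 1))
          = (d * c ^ q - a ^ q * b) * (d ^ q * b - a * c ^ q) := by
        have h6 := congrArg (· ^ q) hG
        simp only [mul_pow] at h6
        rwa [hU2, hvq2, hUq, hE2] at h6
      constructor
      · have hbig : (b ^ q * (d ^ q * b - a * c ^ q) ^ 2
            - d ^ q * (d ^ (q + 1) - a ^ (q + 1)) * (d ^ q * b - a * c ^ q)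
            - (d ^ q * c - a * b ^ q) * c ^ q * (d ^ q * b - a * c ^ q)
            + d ^ q * (d ^ q * c - a * b ^ q) ^ 2)
            * ((d ^ q * c - a * b ^ q) * (d * b ^ q - a ^ q * c)) = 0 := by
          linear_combination
            (-(c ^ 2 * (d ^ q) ^ 3) + b * c * c ^ q * (d ^ q) ^ 2
              - b ^ 2 * b ^ q * (d ^ q) ^ 2 - a * c * (c ^ q) ^ 2 * d ^ q
              + 2 * a * c * b ^ q * (d ^ q) ^ 2 + a * b * b ^ q * c ^ q * d ^ q
              - a ^ 2 * (b ^ q) ^ 2 * d ^ q) * hG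
            + (c * d * c ^ q * (d ^ q) ^ 2 - b * d * b ^ q * (d ^ q) ^ 2
              - a * c * a ^ q * c ^ q * d ^ q + a * b * a ^ q * b ^ q * d ^ q) * hGp
        exact (mul_eq_zero.mp hbig).resolve_right (mul_ne_zero hu0ne hE)
      · linear_combination d ^ q * hGp
    · have hu0 : d ^ q * c - a * b ^ q = 0 := sub_eq_zero_of_eq hu
      have hU0 : d * c ^ q - a ^ q * b = 0 := by
        have := congrArg (· ^ q) hu0
        simp only [hUq] at this
        rwa [zero_pow hq0] at this
      rw [div_eq_div_iff he hdq] at hs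
      constructor
      · linear_combination (-(d ^ q * b - a * c ^ q)) * hs
          - (c ^ q * (d ^ q * b - a * c ^ q) - d ^ q * (d ^ q * c - a * b ^ q)) * hu0
      · linear_combination (d ^ q * (d ^ (q + 1) - a ^ (q + 1))) * hu0
          - (d ^ q * (d ^ q * b - a * c ^ q)) * hU0
end

section
/- Let q be a prime power and K a finite field with q² elements. Let G ∈ K[X] be a nonzero polynomial, let m, n ∈ K, and suppose F := m·G + n·Ĝ is nonzero, where Ĝ(X) = Σᵢ gᵢ^q·X^{deg G − i} for G(X) = Σᵢ gᵢ·Xⁱ. Assume that X^{deg G − deg F}·F̂(X) is not equal to c·F(X) for any scalar c ∈ K, where F̂(X) = Σᵢ fᵢ^q·X^{deg F − i} for F(X) = Σᵢ fᵢ·Xⁱ. Then every α ∈ K with α^{q+1} = 1 that is a common root of F and F̂ is a common root of G and Ĝ. -/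
open Polynomial

/-- For a polynomial `P(X) = Σᵢ pᵢ·Xⁱ` of degree `n`, the polynomial
`P̂(X) = Σᵢ pᵢ^q·X^{n−i}`. -/
noncomputable def hatPoly {K : Type*} [Field K] (q : ℕ) (P : K[X]) : K[X] :=
  ∑ i ∈ Finset.range (P.natDegree + 1), C (P.coeff i ^ q) * X ^ (P.natDegree - i)


lemma my_reflect_reflect {R : Type*} [Semiring R] (N : ℕ) (f : R[X]) :
    reflect N (reflect N f) = f := by
  ext k; simp [coeff_reflect]

lemma my_reflect_shift {R : Type*} [CommSemiring R] {M N : ℕ} (hMN : M ≤ N) (f : R[X])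
    (hf : f.natDegree ≤ M) : reflect N f = X ^ (N - M) * reflect M f := by
  have h1 : (1 : R[X]).natDegree ≤ N - M := by simp
  have := reflect_mul f 1 hf h1
  rw [mul_one, Nat.add_sub_cancel' hMN, reflect_one] at this
  rw [this, mul_comm]

lemma natDegree_hatPoly_le {K : Type*} [Field K] (q : ℕ) (P : K[X]) :
    (hatPoly q P).natDegree ≤ P.natDegree := by
  unfold hatPoly
  refine natDegree_sum_le_of_forall_le _ _ fun i hi => ?_
  exact (natDegree_C_mul_X_pow_le _ _).trans (Nat.sub_le _ _)

lemma hatPoly_eq_reflect {K : Type*} [Field K] (q : ℕ) (φ : K →+* K) (hφ : ∀ x, φ x = x ^ q)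
    (P : K[X]) : hatPoly q P = reflect P.natDegree (P.map φ) := by
  set N := P.natDegree
  have hmap : P.map φ = ∑ i ∈ Finset.range (N + 1), C (P.coeff i ^ q) * X ^ i := by
    conv_lhs => rw [(P.map φ).as_sum_range' (N + 1)
      (lt_of_le_of_lt natDegree_map_le (Nat.lt_succ_self N))]
    refine Finset.sum_congr rfl fun i _ => ?_
    rw [coeff_map, hφ, C_mul_X_pow_eq_monomial]
  rw [hmap]
  have hsum : reflect N (∑ i ∈ Finset.range (N + 1), C (P.coeff i ^ q) * X ^ i)
      = ∑ i ∈ Finset.range (N + 1), reflect N (C (P.coeff i ^ q) * X ^ i) := by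
    ext k; simp [coeff_reflect, finset_sum_coeff]
  rw [hsum]
  unfold hatPoly
  refine Finset.sum_congr rfl fun i hi => ?_
  rw [reflect_C_mul_X_pow, revAt_le (Nat.lt_succ_iff.mp (Finset.mem_range.mp hi))]

lemma map_map_self {K : Type*} [Field K] (q : ℕ) (φ : K →+* K) (hφ : ∀ x, φ x = x ^ q)
    (hφ2 : ∀ x : K, (x ^ q) ^ q = x) (P : K[X]) : (P.map φ).map φ = P := by
  ext k; simp [coeff_map, hφ, hφ2]

lemma keyIdentity {K : Type*} [Field K] (q : ℕ) (φ : K →+* K) (hφ : ∀ x, φ x = x ^ q)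
    (hφ2 : ∀ x : K, (x ^ q) ^ q = x) (G : K[X]) (s t : K) (F : K[X])
    (hF : F = C s * G + C t * hatPoly q G) :
    X ^ (G.natDegree - F.natDegree) * hatPoly q F = C (s ^ q) * hatPoly q G + C (t ^ q) * G := by
  set N := G.natDegree with hN
  have hdF : F.natDegree ≤ N := by
    rw [hF]
    refine (natDegree_add_le _ _).trans (max_le ?_ ?_)
    · exact (natDegree_C_mul_le _ _).trans le_rfl
    · exact (natDegree_C_mul_le _ _).trans (natDegree_hatPoly_le q G)
  have h1 : hatPoly q F = reflect F.natDegree (F.map φ) := hatPoly_eq_reflect q φ hφ F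
  have h2 : X ^ (N - F.natDegree) * hatPoly q F = reflect N (F.map φ) := by
    rw [h1, ← my_reflect_shift hdF (F.map φ) (natDegree_map_le.trans le_rfl)]
  rw [h2, hF]
  have h3 : (C s * G + C t * hatPoly q G).map φ
      = C (s ^ q) * G.map φ + C (t ^ q) * reflect N G := by
    rw [Polynomial.map_add, Polynomial.map_mul, Polynomial.map_mul, map_C, map_C, hφ, hφ]
    congr 1
    rw [hatPoly_eq_reflect q φ hφ G, ← reflect_map, map_map_self q φ hφ hφ2, hN]
  rw [h3, reflect_add, reflect_C_mul, reflect_C_mul, my_reflect_reflect,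
    ← hatPoly_eq_reflect q φ hφ G]

lemma eval_hatPoly {K : Type*} [Field K] (q : ℕ) (φ : K →+* K) (hφ : ∀ x, φ x = x ^ q)
    (P : K[X]) (α : K) (hα : α ^ (q + 1) = 1) :
    (hatPoly q P).eval α = α ^ P.natDegree * (P.eval α) ^ q := by
  set N := P.natDegree
  have hev : P.eval α = ∑ i ∈ Finset.range (N + 1), P.coeff i * α ^ i :=
    P.eval_eq_sum_range α
  have hpow : (P.eval α) ^ q = ∑ i ∈ Finset.range (N + 1), P.coeff i ^ q * (α ^ i) ^ q := by
    rw [hev, ← hφ, map_sum]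
    exact Finset.sum_congr rfl fun i _ => by rw [map_mul, hφ, hφ]
  rw [hpow, Finset.mul_sum]
  unfold hatPoly
  rw [eval_finset_sum]
  refine Finset.sum_congr rfl fun i hi => ?_
  have hiN : i ≤ N := Nat.lt_succ_iff.mp (Finset.mem_range.mp hi)
  rw [eval_mul, eval_C, eval_pow, eval_X]
  have key : α ^ (N - i) = α ^ N * (α ^ i) ^ q := by
    have h1 : α ^ N = α ^ (N - i) * α ^ i := by rw [← pow_add]; congr 1; omega
    have h2 : α ^ i * (α ^ i) ^ q = 1 := by
      calc α ^ i * (α ^ i) ^ q = (α ^ i) ^ (q + 1) := by ring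
        _ = (α ^ (q + 1)) ^ i := by rw [← pow_mul, ← pow_mul, mul_comm]
        _ = 1 := by rw [hα, one_pow]
    rw [h1, mul_assoc, h2, mul_one]
  rw [key]; ring

/-- Lemma 11 of the paper: if `F = s·G + t·Ĝ` is nonzero and
`X^{deg G − deg F}·F̂` is not a scalar multiple of `F`, then every `α ∈ μ_{q+1}`
that is a common root of `F` and `F̂` is a common root of `G` and `Ĝ`. -/
theorem stmt14 {K : Type*} [Field K] [Fintype K] (p m q : ℕ) (hp : p.Prime)
    (hm : 1 ≤ m) (hq : q = p ^ m) (hK : Fintype.card K = q ^ 2)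
    (G : K[X]) (hG : G ≠ 0) (s t : K) (F : K[X])
    (hF : F = C s * G + C t * hatPoly q G) (hF0 : F ≠ 0)
    (hns : ∀ e : K, X ^ (G.natDegree - F.natDegree) * hatPoly q F ≠ C e * F) :
    ∀ α : K, α ^ (q + 1) = 1 → F.eval α = 0 → (hatPoly q F).eval α = 0 →
      G.eval α = 0 ∧ (hatPoly q G).eval α = 0 := by
  have hq0 : q ≠ 0 := by
    rw [hq]; exact pow_ne_zero _ hp.pos.ne'
  -- the characteristic of K is p
  haveI hcr : CharP K (ringChar K) := ringChar.charP K
  obtain ⟨n, hrprime, hcard⟩ := FiniteField.card K (ringChar K)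
  have hpr : p = ringChar K := by
    have h1 : p ∣ ringChar K ^ (n : ℕ) := by
      rw [← hcard, hK, hq, ← pow_mul]
      exact dvd_pow_self p (by positivity)
    exact (Nat.prime_dvd_prime_iff_eq hp hrprime).mp (hp.dvd_of_dvd_pow h1)
  haveI hcp : CharP K p := hpr ▸ hcr
  haveI : ExpChar K p := ExpChar.prime hp
  set φ := iterateFrobenius K p m with hφdef
  have hφ : ∀ x : K, φ x = x ^ q := fun x => by rw [hφdef, iterateFrobenius_def, hq]
  have hφ2 : ∀ x : K, (x ^ q) ^ q = x := by
    intro x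
    have hqq : q * q = Fintype.card K := by rw [hK]; ring
    rw [← pow_mul, hqq, FiniteField.pow_card]
  intro α hα hFα _
  have hα0 : α ≠ 0 := by
    intro h; rw [h, zero_pow (by omega : q + 1 ≠ 0)] at hα; exact zero_ne_one hα
  have hhatG : (hatPoly q G).eval α = α ^ G.natDegree * (G.eval α) ^ q :=
    eval_hatPoly q φ hφ G α hα
  by_cases hu : G.eval α = 0
  · exact ⟨hu, by rw [hhatG, hu, zero_pow hq0, mul_zero]⟩
  exfalso
  set u := G.eval α with hudef
  have hsum : s * u + t * (α ^ G.natDegree * u ^ q) = 0 := by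
    rw [hF] at hFα
    simpa [hhatG] using hFα
  set v := α ^ G.natDegree * u ^ q with hvdef
  have hvne : v ≠ 0 := mul_ne_zero (pow_ne_zero _ hα0) (pow_ne_zero _ hu)
  have ht : t ≠ 0 := by
    intro h
    rw [h, zero_mul, add_zero, mul_eq_zero] at hsum
    rcases hsum with hs0 | h2
    · exact hF0 (by rw [hF, hs0, h]; simp)
    · exact hu h2
  have hs : s ≠ 0 := by
    intro h
    rw [h, zero_mul, zero_add, mul_eq_zero] at hsum
    rcases hsum with h2 | h2
    · exact ht h2
    · exact hvne h2
  have hneg : (-1 : K) ^ (q + 1) = 1 := by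
    rcases hp.eq_two_or_odd' with h2 | hodd
    · haveI : CharP K 2 := h2 ▸ hcp
      rw [CharTwo.neg_eq, one_pow]
    · have hoq : Odd q := hq ▸ hodd.pow
      exact hoq.add_one.neg_one_pow
  have hvq : v ^ (q + 1) = u ^ (q + 1) := by
    have h1 : v ^ (q + 1) = (α ^ G.natDegree) ^ (q + 1) * (u ^ q) ^ (q + 1) :=
      mul_pow _ _ _
    rw [h1, ← pow_mul, mul_comm G.natDegree (q + 1), pow_mul, hα, one_pow, one_mul]
    calc (u ^ q) ^ (q + 1) = (u ^ q) ^ q * (u ^ q) ^ 1 := by rw [← pow_add]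
      _ = u * u ^ q := by rw [hφ2, pow_one]
      _ = u ^ (q + 1) := by rw [pow_add, pow_one, mul_comm]
  have hstq : s ^ (q + 1) = t ^ (q + 1) := by
    have h1 : s * u = -(t * v) := by linear_combination hsum
    have h2 : (s * u) ^ (q + 1) = (t * v) ^ (q + 1) := by
      rw [h1, neg_pow, hneg, one_mul]
    rw [mul_pow, mul_pow, hvq] at h2
    exact mul_right_cancel₀ (pow_ne_zero _ hu) h2
  apply hns (s ^ q / t)
  have e1 : s ^ q / t * t = s ^ q := div_mul_cancel₀ _ ht
  have e2 : s ^ q / t * s = t ^ q := by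
    rw [div_mul_eq_mul_div, div_eq_iff ht, ← pow_succ, hstq, pow_succ]
  rw [keyIdentity q φ hφ hφ2 G s t F hF, hF, mul_add, ← mul_assoc, ← mul_assoc,
    ← C_mul, ← C_mul, e1, e2, add_comm]
end

section
/- Let q be a prime power, K a finite field with q² elements, and a, b, c, d ∈ K. If the rational function g = (d^q·X³ + c^q·X² + b^q·X + a^q)/(a·X³ + b·X² + c·X + d) has degree 1, then g permutes μ_{q+1}. -/
open Polynomial

open scoped Classical

/-
With `φ x = x ^ q`, the conjugate reciprocal `f* = X ^ n · f^φ(1/X)` of a polynomial of degree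
at most `n` is `reflect n (f.map φ)`, and the shape of `N` and `D` says exactly `N = D*` and
`D = N*` (with `n = 3`). Writing `N = G N₀` and `D = G D₀` with `G` the gcd, multiplicativity of
`*` gives `N D = G G* N₀ N₀* = G G* D₀ D₀*`, hence `N₀ N₀* = D₀ D₀*`. On `μ_{q+1}` we have
`x ^ q = x⁻¹`, so `f*(x) = x ^ n f(x) ^ q` and the identity becomes
`N₀(x) ^ (q + 1) = D₀(x) ^ (q + 1)`. Since `N₀, D₀` are coprime, `D₀` does not vanish on
`μ_{q+1}`, so `g` maps `μ_{q+1}` into itself, and a fraction of degree one is injective.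
-/

namespace EuclideanDomain

theorem isCoprime_div_gcd_div_gcd {R : Type*} [EuclideanDomain R] [DecidableEq R] {a b : R}
    (hb : b ≠ 0) : IsCoprime (a / gcd a b) (b / gcd a b) :=
  @_root_.isCoprime_div_gcd_div_gcd R _ (gcdMonoid R) a b hb

end EuclideanDomain

namespace Polynomial

theorem reflect_three_cubic {R : Type*} [Semiring R] (a b c d : R) :
    reflect 3 (C a * X ^ 3 + C b * X ^ 2 + C c * X + C d) =
      C d * X ^ 3 + C c * X ^ 2 + C b * X + C a := by
  have h : (C a * X ^ 3 + C b * X ^ 2 + C c * X + C d : R[X]) =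
      C a * X ^ 3 + C b * X ^ 2 + C c * X ^ 1 + C d * X ^ 0 := by
    rw [pow_one, pow_zero, mul_one]
  rw [h, reflect_add, reflect_add, reflect_add, reflect_C_mul_X_pow,
    reflect_C_mul_X_pow, reflect_C_mul_X_pow, reflect_C_mul_X_pow]
  norm_num [revAt_le]
  abel

theorem eq_of_isRoot_of_natDegree_le_one {R : Type*} [CommRing R] [IsDomain R] {h : R[X]}
    (h0 : h ≠ 0) (hdeg : h.natDegree ≤ 1) {x y : R} (hx : h.IsRoot x) (hy : h.IsRoot y) :
    x = y := by
  rw [eq_X_add_C_of_natDegree_le_one hdeg] at h0 hx hy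
  simp only [IsRoot, eval_add, eval_mul, eval_C, eval_X] at hx hy
  have hlead : h.coeff 1 ≠ 0 := by
    rintro h1
    simp_all
  exact sub_eq_zero.mp ((mul_eq_zero.mp (by linear_combination hx - hy)).resolve_left hlead)

theorem mul_reflect_map_eq_of_reflect_map {R : Type*} [CommRing R] [IsDomain R] (φ : R →+* R)
    {N D G N₀ D₀ : R[X]} {n k : ℕ}
    (hN : N = reflect (n + k) (D.map φ)) (hD : D = reflect (n + k) (N.map φ)) (hD0 : D ≠ 0)
    (hNG : N = G * N₀) (hDG : D = G * D₀) (hG : G.natDegree ≤ n) (hN₀ : N₀.natDegree ≤ k)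
    (hD₀ : D₀.natDegree ≤ k) :
    N₀ * reflect k (N₀.map φ) = D₀ * reflect k (D₀.map φ) := by
  set Gs := reflect n (G.map φ)
  have hNs : N = Gs * reflect k (D₀.map φ) := by
    rw [hN, hDG, Polynomial.map_mul,
      reflect_mul _ _ (natDegree_map_le.trans hG) (natDegree_map_le.trans hD₀)]
  have hDs : D = Gs * reflect k (N₀.map φ) := by
    rw [hD, hNG, Polynomial.map_mul,
      reflect_mul _ _ (natDegree_map_le.trans hG) (natDegree_map_le.trans hN₀)]
  have hGGs : G * Gs ≠ 0 :=
    mul_ne_zero (left_ne_zero_of_mul (hDG ▸ hD0)) (left_ne_zero_of_mul (hDs ▸ hD0))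
  refine mul_left_cancel₀ hGGs ?_
  calc G * Gs * (N₀ * reflect k (N₀.map φ)) = N * D := by rw [hNG, hDs]; ring
    _ = G * Gs * (D₀ * reflect k (D₀.map φ)) := by rw [hDG, hNs]; ring

variable {K : Type*} [Field K]

theorem eval_reflect_map_of_apply_eq_inv (φ : K →+* K) {x : K} (hx : x ≠ 0) (hφx : φ x = x⁻¹)
    {f : K[X]} {n : ℕ} (hf : f.natDegree ≤ n) :
    (reflect n (f.map φ)).eval x = x ^ n * φ (f.eval x) := by
  let := invertibleOfNonzero (inv_ne_zero hx)
  have h := eval₂_reflect_mul_pow (RingHom.id K) x⁻¹ n (f.map φ) (natDegree_map_le.trans hf)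
  rw [invOf_eq_inv, inv_inv, eval₂_id, eval₂_id, ← hφx, eval_map_apply, hφx] at h
  rw [← h, inv_pow, mul_comm, inv_mul_cancel_right₀ (pow_ne_zero _ hx)]

theorem pow_succ_eval_eq_of_mul_reflect_map_eq {q : ℕ} (φ : K →+* K) (hφ : ∀ x, φ x = x ^ q)
    {f g : K[X]} {k : ℕ} (hf : f.natDegree ≤ k) (hg : g.natDegree ≤ k)
    (h : f * reflect k (f.map φ) = g * reflect k (g.map φ)) {x : K} (hx : x ∈ mu q K) :
    f.eval x ^ (q + 1) = g.eval x ^ (q + 1) := by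
  have hx0 : x ≠ 0 := by
    rintro rfl
    simp [mu] at hx
  have hφx : φ x = x⁻¹ := by
    rw [hφ]
    exact eq_inv_of_mul_eq_one_left (by rw [← pow_succ]; exact hx)
  have h' := congrArg (eval x) h
  simp only [eval_mul, eval_reflect_map_of_apply_eq_inv φ hx0 hφx hf,
    eval_reflect_map_of_apply_eq_inv φ hx0 hφx hg, hφ] at h'
  refine mul_left_cancel₀ (pow_ne_zero k hx0) ?_
  linear_combination h'

theorem eval_ne_zero_of_isCoprime {n : ℕ} {f g : K[X]} (hfg : IsCoprime f g) {x : K}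
    (hpow : f.eval x ^ (n + 1) = g.eval x ^ (n + 1)) : g.eval x ≠ 0 := by
  intro hg
  obtain ⟨u, v, huv⟩ := hfg
  have hf : f.eval x = 0 := by
    simpa [hg] using hpow
  simpa [hf, hg] using congrArg (eval x) huv

/-- `x ↦ f x / g x` takes the value `t` exactly at the roots of `f - t g`, a nonzero polynomial
of degree at most one. -/
theorem injOn_eval_mul_eval_inv {f g : K[X]} (hfg : IsCoprime f g)
    (hdeg : max f.natDegree g.natDegree = 1) :
    Set.InjOn (fun x => f.eval x * (g.eval x)⁻¹) {x | g.eval x ≠ 0} := by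
  intro x hx y hy hxy
  set t := f.eval y * (g.eval y)⁻¹
  have hroot : ∀ z, g.eval z ≠ 0 → f.eval z * (g.eval z)⁻¹ = t → (f - C t * g).IsRoot z := by
    intro z hz hzt
    simp only [IsRoot, eval_sub, eval_mul, eval_C, ← hzt]
    field_simp
    ring
  have hne : f - C t * g ≠ 0 := by
    intro h0
    rw [sub_eq_zero] at h0
    have hg : IsUnit g := isCoprime_self.mp (h0 ▸ hfg).of_mul_left_right
    have hf : f.natDegree ≤ g.natDegree := h0 ▸ natDegree_C_mul_le t g
    have := natDegree_eq_zero_of_isUnit hg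
    omega
  exact eq_of_isRoot_of_natDegree_le_one hne
    ((natDegree_sub_le _ _).trans (max_le_max le_rfl (natDegree_C_mul_le t g)) |>.trans hdeg.le)
    (hroot x hx hxy) (hroot y hy rfl)

theorem bijOn_mu_of_mul_reflect_map_eq [Finite K] {q : ℕ} (φ : K →+* K) (hφ : ∀ x, φ x = x ^ q)
    {f g : K[X]} (hfg : IsCoprime f g) (hdeg : max f.natDegree g.natDegree = 1)
    (h : f * reflect 1 (f.map φ) = g * reflect 1 (g.map φ)) :
    Set.BijOn (fun x => f.eval x * (g.eval x)⁻¹) (mu q K) (mu q K) := by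
  have hpow : ∀ x ∈ mu q K, f.eval x ^ (q + 1) = g.eval x ^ (q + 1) := fun x hx =>
    pow_succ_eval_eq_of_mul_reflect_map_eq φ hφ (hdeg ▸ le_max_left _ _)
      (hdeg ▸ le_max_right _ _) h hx
  have hg : ∀ x ∈ mu q K, g.eval x ≠ 0 := fun x hx => eval_ne_zero_of_isCoprime hfg (hpow x hx)
  have hmaps : Set.MapsTo (fun x => f.eval x * (g.eval x)⁻¹) (mu q K) (mu q K) := fun x hx => by
    change (f.eval x * (g.eval x)⁻¹) ^ (q + 1) = 1
    rw [mul_pow, inv_pow, hpow x hx, mul_inv_cancel₀ (pow_ne_zero _ (hg x hx))]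
  exact (Set.toFinite _).injOn_iff_bijOn_of_mapsTo hmaps |>.mp
    ((injOn_eval_mul_eval_inv hfg hdeg).mono hg)

end Polynomial

section Cubic

variable {K : Type*} [Field K] {q : ℕ} (φ : K →+* K) (a b c d : K)

theorem reflect_map_Dpoly (hφ : ∀ x, φ x = x ^ q) :
    reflect 3 ((Dpoly a b c d).map φ) = Npoly q a b c d := by
  simp only [Dpoly, Npoly, Polynomial.map_add, Polynomial.map_mul, Polynomial.map_pow, map_C,
    map_X, hφ, reflect_three_cubic]

theorem reflect_map_Npoly (hφ : ∀ x, φ x = x ^ q) (hq : ∀ x : K, (x ^ q) ^ q = x) :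
    reflect 3 ((Npoly q a b c d).map φ) = Dpoly a b c d := by
  simp only [Dpoly, Npoly, Polynomial.map_add, Polynomial.map_mul, Polynomial.map_pow, map_C,
    map_X, hφ, hq, reflect_three_cubic]

theorem Dpoly_ne_zero_of_gDeg_ne_zero (hφ : ∀ x, φ x = x ^ q) (hdeg : gDeg q a b c d ≠ 0) :
    Dpoly a b c d ≠ 0 := by
  intro hD
  have hN : Npoly q a b c d = 0 := by
    rw [← reflect_map_Dpoly φ a b c d hφ, hD, Polynomial.map_zero, reflect_zero]
  simp [gDeg, numer₀, denom₀, hN, hD] at hdeg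

theorem numer₀_mul_reflect_map_eq (hφ : ∀ x, φ x = x ^ q) (hq : ∀ x : K, (x ^ q) ^ q = x)
    (hdeg : gDeg q a b c d = 1) :
    numer₀ q a b c d * reflect 1 ((numer₀ q a b c d).map φ) =
      denom₀ q a b c d * reflect 1 ((denom₀ q a b c d).map φ) := by
  have hD : Dpoly a b c d ≠ 0 := Dpoly_ne_zero_of_gDeg_ne_zero φ a b c d hφ (by omega)
  set G := EuclideanDomain.gcd (Npoly q a b c d) (Dpoly a b c d)
  have hG : G ≠ 0 := fun h => hD (EuclideanDomain.gcd_eq_zero_iff.mp h).2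
  have hNG : Npoly q a b c d = G * numer₀ q a b c d :=
    (EuclideanDomain.mul_div_cancel' hG (EuclideanDomain.gcd_dvd_left _ _)).symm
  have hDG : Dpoly a b c d = G * denom₀ q a b c d :=
    (EuclideanDomain.mul_div_cancel' hG (EuclideanDomain.gcd_dvd_right _ _)).symm
  have hGdeg : G.natDegree ≤ 2 := by
    obtain ⟨f, hf, hGf⟩ : ∃ f : K[X], f.natDegree = 1 ∧ (G * f).natDegree ≤ 3 := by
      rcases max_eq_iff.mp hdeg with ⟨h1, -⟩ | ⟨h1, -⟩
      · exact ⟨_, h1, hNG ▸ by unfold Npoly; compute_degree⟩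
      · exact ⟨_, h1, hDG ▸ by unfold Dpoly; compute_degree⟩
    rw [natDegree_mul hG (ne_zero_of_natDegree_gt (hf ▸ zero_lt_one))] at hGf
    omega
  exact mul_reflect_map_eq_of_reflect_map φ (reflect_map_Dpoly φ a b c d hφ).symm
    (reflect_map_Npoly φ a b c d hφ hq).symm hD hNG hDG hGdeg
    (hdeg ▸ le_max_left _ _) (hdeg ▸ le_max_right _ _)

end Cubic

theorem stmt16_general {K : Type*} [Field K] [Fintype K] (p m q : ℕ) (hp : p.Prime)
    (hq : q = p ^ m) (hK : Fintype.card K = q ^ 2) (a b c d : K)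
    (hdeg : gDeg q a b c d = 1) :
    gPermutes q a b c d := by
  have := Fact.mk hp
  have : CharP K p := charP_of_card_eq_prime_pow (f := m * 2) (by rw [hK, hq, pow_mul])
  have hφ : ∀ x, iterateFrobenius K p m x = x ^ q := fun x => by rw [iterateFrobenius_def, hq]
  have hqq : ∀ x : K, (x ^ q) ^ q = x := fun x => by
    rw [← pow_mul, ← sq, ← hK, FiniteField.pow_card]
  have hD : Dpoly a b c d ≠ 0 := Dpoly_ne_zero_of_gDeg_ne_zero _ a b c d hφ (by omega)
  exact bijOn_mu_of_mul_reflect_map_eq _ hφ (EuclideanDomain.isCoprime_div_gcd_div_gcd hD) hdeg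
    (numer₀_mul_reflect_map_eq _ a b c d hφ hqq hdeg)

/-- every degree-1 rational function of the shape `g = N/D`
permutes `μ_{q+1}`. -/
theorem stmt16 {K : Type*} [Field K] [Fintype K] (p m q : ℕ) (hp : p.Prime)
    (hm : 1 ≤ m) (hq : q = p ^ m) (hK : Fintype.card K = q ^ 2) (a b c d : K)
    (hdeg : gDeg q a b c d = 1) :
    gPermutes q a b c d :=
  stmt16_general p m q hp hq hK a b c d hdeg
end

section
/- Let q = 3^m with m ≥ 1, K a finite field with q² elements, and a, d ∈ K. Then the map x ↦ (d^q·x³ + a^q)/(a·x³ + d) (with the convention that the value is 0 when the denominator vanishes) is a bijection from μ_{q+1} onto μ_{q+1} if and only if a^{q+1} ≠ d^{q+1}. -/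
/-- in characteristic 3, the inseparable degree-3 rational map
`x ↦ (d^q·x³ + a^q)/(a·x³ + d)` permutes `μ_{q+1}` iff `a^{q+1} ≠ d^{q+1}`. -/
theorem stmt17 {K : Type*} [Field K] [Fintype K] (m q : ℕ)
    (hm : 1 ≤ m) (hq : q = 3 ^ m) (hK : Fintype.card K = q ^ 2) (a d : K) :
    Set.BijOn (fun x : K => (d ^ q * x ^ 3 + a ^ q) / (a * x ^ 3 + d))
        (mu q K) (mu q K) ↔
      a ^ (q + 1) ≠ d ^ (q + 1) := by
  -- characteristic 3
  haveI hp3 : Fact (Nat.Prime 3) := ⟨by norm_num⟩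
  haveI hchar : CharP K 3 := by
    have hprime : (ringChar K).Prime := CharP.char_is_prime K _
    have hcast : ((Fintype.card K : K)) = 0 := FiniteField.cast_card_eq_zero K
    have hdvd : ringChar K ∣ Fintype.card K :=
      (CharP.cast_eq_zero_iff K (ringChar K) _).mp hcast
    rw [hK, hq, ← pow_mul] at hdvd
    have h3' : ringChar K ∣ 3 := hprime.dvd_of_dvd_pow hdvd
    have h3 : ringChar K = 3 :=
      (Nat.prime_dvd_prime_iff_eq hprime (by norm_num)).mp h3'
    exact ringChar.of_eq h3
  -- basic facts
  have hq0 : q ≠ 0 := by rw [hq]; positivity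
  have hq1 : q + 1 ≠ 0 := by omega
  have frob : ∀ u v : K, (u + v) ^ q = u ^ q + v ^ q := by
    intro u v; rw [hq]; exact add_pow_char_pow u v 3 m
  have hq2 : ∀ t : K, (t ^ q) ^ q = t := by
    intro t
    rw [← pow_mul, ← sq, ← hK]
    exact FiniteField.pow_card t
  have hqodd : Odd q := by rw [hq]; exact Odd.pow ⟨1, by norm_num⟩
  have hneg1 : (-1 : K) ^ (q + 1) = 1 := Even.neg_one_pow (by
    rcases hqodd with ⟨k, hk⟩; exact ⟨k + 1, by omega⟩)
  have h1mem : (1 : K) ∈ mu q K := by simp [mu]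
  have hneg1mem : (-1 : K) ∈ mu q K := hneg1
  have h0nmem : (0 : K) ∉ mu q K := by simp [mu, zero_pow hq1]
  have hone_ne : (1 : K) ≠ -1 := by
    intro h
    have h2 : ((2 : ℕ) : K) = 0 := by push_cast; linear_combination h
    have := (CharP.cast_eq_zero_iff K 3 2).mp h2
    omega
  constructor
  · -- forward: BijOn → a^{q+1} ≠ d^{q+1}
    intro hBij hEq
    by_cases ha : a = 0
    · have hd : d = 0 := by
        have : d ^ (q + 1) = 0 := by rw [← hEq, ha, zero_pow hq1]
        exact pow_eq_zero_iff hq1 |>.mp this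
      have := hBij.mapsTo h1mem
      simp only [ha, hd, zero_pow hq0, zero_mul, mul_zero, zero_add, add_zero,
        div_zero] at this
      exact h0nmem this
    · by_cases hz : ∃ x ∈ mu q K, a * x ^ 3 + d = 0
      · obtain ⟨x0, hx0, hden⟩ := hz
        have := hBij.mapsTo hx0
        simp only [hden, div_zero] at this
        exact h0nmem this
      · push_neg at hz
        have hd1 : a * (1 : K) ^ 3 + d ≠ 0 := hz 1 h1mem
        have hd2 : a * (-1 : K) ^ 3 + d ≠ 0 := hz (-1) hneg1mem
        have hfeq : (d ^ q * (1:K) ^ 3 + a ^ q) / (a * (1:K) ^ 3 + d) =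
            (d ^ q * (-1:K) ^ 3 + a ^ q) / (a * (-1:K) ^ 3 + d) := by
          rw [div_eq_div_iff hd1 hd2]
          linear_combination (-2 : K) * hEq
        have := hBij.injOn h1mem hneg1mem hfeq
        exact hone_ne this
  · -- backward
    intro hNe
    have hsub : d ^ (q + 1) - a ^ (q + 1) ≠ 0 := sub_ne_zero.mpr (Ne.symm hNe)
    -- denominator never vanishes on mu
    have hden : ∀ x : K, x ∈ mu q K → a * x ^ 3 + d ≠ 0 := by
      intro x hx h0
      have hxmu : x ^ (q + 1) = 1 := hx
      have hd : d = -(a * x ^ 3) := by linear_combination h0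
      have hcontra : d ^ (q + 1) = a ^ (q + 1) := by
        rw [hd]
        have he : (-(a * x ^ 3)) ^ (q + 1)
            = (-1 : K) ^ (q + 1) * a ^ (q + 1) * (x ^ (q + 1)) ^ 3 := by ring
        rw [he, hneg1, hxmu]; ring
      exact hNe hcontra.symm
    -- maps to
    have hmaps : Set.MapsTo (fun x : K => (d ^ q * x ^ 3 + a ^ q) / (a * x ^ 3 + d))
        (mu q K) (mu q K) := by
      intro x hx
      have hxmu : x ^ (q + 1) = 1 := hx
      have hymu : (x ^ 3) ^ (q + 1) = 1 := by
        have : (x ^ 3) ^ (q + 1) = (x ^ (q + 1)) ^ 3 := by ring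
        rw [this, hxmu, one_pow]
      set y := x ^ 3 with hy
      have hy0 : y ≠ 0 := by
        intro h; rw [h, zero_pow hq1] at hymu; exact zero_ne_one hymu
      have hyq : y ^ q * y = 1 := by rw [← pow_succ]; exact hymu
      have hD : a * y + d ≠ 0 := hden x hx
      show ((d ^ q * y + a ^ q) / (a * y + d)) ^ (q + 1) = 1
      rw [div_pow]
      have hNq : (d ^ q * y + a ^ q) ^ q * y = d + a * y := by
        rw [frob, mul_pow, hq2, hq2]
        calc (d * y ^ q + a) * y = d * (y ^ q * y) + a * y := by ring
        _ = d + a * y := by rw [hyq]; ring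
      have hDq : (a * y + d) ^ q * y = a ^ q + d ^ q * y := by
        rw [frob, mul_pow]
        calc (a ^ q * y ^ q + d ^ q) * y = a ^ q * (y ^ q * y) + d ^ q * y := by ring
        _ = a ^ q + d ^ q * y := by rw [hyq]; ring
      have key : (d + a * y) * (d ^ q * y + a ^ q)
          = (a ^ q + d ^ q * y) * (a * y + d) := by ring
      have hNpow : (d ^ q * y + a ^ q) ^ (q + 1) * y
          = (d + a * y) * (d ^ q * y + a ^ q) := by
        rw [pow_succ]
        calc (d ^ q * y + a ^ q) ^ q * (d ^ q * y + a ^ q) * y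
            = ((d ^ q * y + a ^ q) ^ q * y) * (d ^ q * y + a ^ q) := by ring
        _ = (d + a * y) * (d ^ q * y + a ^ q) := by rw [hNq]
      have hDpow : (a * y + d) ^ (q + 1) * y
          = (a ^ q + d ^ q * y) * (a * y + d) := by
        rw [pow_succ]
        calc (a * y + d) ^ q * (a * y + d) * y
            = ((a * y + d) ^ q * y) * (a * y + d) := by ring
        _ = (a ^ q + d ^ q * y) * (a * y + d) := by rw [hDq]
      have hND : (d ^ q * y + a ^ q) ^ (q + 1) = (a * y + d) ^ (q + 1) :=
        mul_right_cancel₀ hy0 (by rw [hNpow, hDpow, key])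
      rw [hND, div_self (pow_ne_zero _ hD)]
    -- injective
    have hinj : Set.InjOn (fun x : K => (d ^ q * x ^ 3 + a ^ q) / (a * x ^ 3 + d))
        (mu q K) := by
      intro x1 h1 x2 h2 hf
      simp only at hf
      have hD1 := hden x1 h1
      have hD2 := hden x2 h2
      rw [div_eq_div_iff hD1 hD2] at hf
      have hz : (d ^ (q + 1) - a ^ (q + 1)) * (x1 ^ 3 - x2 ^ 3) = 0 := by
        linear_combination hf
      have h3 : x1 ^ 3 = x2 ^ 3 := by
        rcases mul_eq_zero.mp hz with h | h
        · exact absurd h hsub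
        · exact sub_eq_zero.mp h
      have hcube0 : (x1 - x2) ^ 3 = 0 := by
        rw [sub_pow_char, h3, sub_self]
      exact sub_eq_zero.mp (pow_eq_zero_iff (by norm_num) |>.mp hcube0)
    exact (Set.Finite.injOn_iff_bijOn_of_mapsTo (Set.toFinite _) hmaps).mp hinj
end

section
/- Let q = 2^m with m ≥ 1, K a finite field with q² elements, and a, b, c, d ∈ K satisfying d ≠ 0, d^q·b ≠ a·c^q, d^q·c ≠ a·b^q, d^{q+1} = a^{q+1}, and −(d^q·c − a·b^q)³ = (d^q·b − a·c^q)·[(b^{q+1} − c^{q+1})·(d^q·c − a·b^q) + (b·d^q − a·c^q)·(d·c^q − a^q·b)]. Then the rational function g = (d^q·X³ + c^q·X² + b^q·X + a^q)/(a·X³ + b·X² + c·X + d) does not permute μ_{q+1}. -/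
/-!
Write `B = d^q b - a c^q` and `E = d^q c - a b^q`. By `d^{q+1} = a^{q+1}` we have
`d^q D - a N = B X² + E X`, and in characteristic `2` the last hypothesis says that `r = E/B` is a
root of `D`, hence a common root of `N` and `D`. Since `N` is the `q`-twisted reciprocal of `D`
(`N(x) = x³ D(x^{-q})^q`), the involution `x ↦ x^{-q}` of `𝔽_{q²}`, whose fixed points are the
points of `μ_{q+1}`, maps common roots to common roots; so `r ∈ μ_{q+1}`, and on `μ_{q+1}` the
map `g` is `N₁/D₁`, with `N₁, D₁` the coprime quadratic cofactors of `X - r`.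

If `g` permuted `μ_{q+1}`, pick `y ∈ μ_{q+1}` outside two exceptional values and its preimage `u`.
In characteristic `2` the quadratic `N₁ - y D₁` then has a second root `v ≠ u`, `v ≠ 0`, which by
injectivity lies outside `μ_{q+1}`. The involution also permutes the roots `r, u, v` of `N - y D`,
fixing `r` and `u`; so it fixes `v`, i.e. `v ∈ μ_{q+1}`, a contradiction.
-/

open Polynomial

open scoped Classical

section Conjugation

variable {K : Type*} [Field K]

def conjInv (q : ℕ) (x : K) : K := (x ^ q)⁻¹

theorem ne_zero_of_mem_mu {q : ℕ} {x : K} (hx : x ∈ mu q K) : x ≠ 0 := by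
  rintro rfl
  simp [mu] at hx

theorem conjInv_eq_self_iff {q : ℕ} {x : K} (hx : x ≠ 0) : conjInv q x = x ↔ x ∈ mu q K := by
  rw [conjInv, mu, Set.mem_ofPred_eq, pow_succ, mul_eq_one_iff_eq_inv₀ hx, inv_eq_iff_eq_inv]

theorem Npoly_eq_Dpoly (q : ℕ) (a b c d : K) :
    Npoly q a b c d = Dpoly (d ^ q) (c ^ q) (b ^ q) (a ^ q) := rfl

theorem eval_Dpoly (a b c d x : K) :
    (Dpoly a b c d).eval x = a * x ^ 3 + b * x ^ 2 + c * x + d := by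
  simp [Dpoly]

theorem eval_Dpoly_pow {p n : ℕ} [ExpChar K p] (a b c d x : K) :
    (Dpoly a b c d).eval x ^ p ^ n =
      (Dpoly (a ^ p ^ n) (b ^ p ^ n) (c ^ p ^ n) (d ^ p ^ n)).eval (x ^ p ^ n) := by
  simp only [eval_Dpoly, add_pow_expChar_pow, mul_pow, ← pow_mul, mul_comm]

variable [Fintype K] {p n : ℕ}

theorem pow_pow_eq_self (hK : Fintype.card K = (p ^ n) ^ 2) (x : K) :
    (x ^ p ^ n) ^ p ^ n = x := by
  rw [← pow_mul, ← sq, ← hK, FiniteField.pow_card]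

theorem conjInv_conjInv (hK : Fintype.card K = (p ^ n) ^ 2) (x : K) :
    conjInv (p ^ n) (conjInv (p ^ n) x) = x := by
  rw [conjInv, conjInv, inv_pow, inv_inv, pow_pow_eq_self hK]

variable [ExpChar K p]

theorem mul_pow_eval_Dpoly_conjInv (hK : Fintype.card K = (p ^ n) ^ 2) (a b c d : K) {x : K}
    (hx : x ≠ 0) :
    x ^ 3 * (Dpoly a b c d).eval (conjInv (p ^ n) x) ^ p ^ n =
      (Dpoly (d ^ p ^ n) (c ^ p ^ n) (b ^ p ^ n) (a ^ p ^ n)).eval x := by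
  rw [eval_Dpoly_pow, conjInv, inv_pow, pow_pow_eq_self hK, eval_Dpoly, eval_Dpoly]
  field_simp
  ring

theorem eval_Npoly_eq_mul_eval_Dpoly_conjInv (hK : Fintype.card K = (p ^ n) ^ 2) (a b c d : K)
    {x : K} (hx : x ≠ 0) :
    (Npoly (p ^ n) a b c d).eval x = x ^ 3 * (Dpoly a b c d).eval (conjInv (p ^ n) x) ^ p ^ n :=
  (mul_pow_eval_Dpoly_conjInv hK a b c d hx).symm

theorem eval_Dpoly_eq_mul_eval_Npoly_conjInv (hK : Fintype.card K = (p ^ n) ^ 2) (a b c d : K)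
    {x : K} (hx : x ≠ 0) :
    (Dpoly a b c d).eval x =
      x ^ 3 * (Npoly (p ^ n) a b c d).eval (conjInv (p ^ n) x) ^ p ^ n := by
  rw [Npoly_eq_Dpoly, mul_pow_eval_Dpoly_conjInv hK _ _ _ _ hx]
  simp only [pow_pow_eq_self hK]

theorem pow_mul_eval_Dpoly_conjInv_eq (hK : Fintype.card K = (p ^ n) ^ 2) (a b c d : K)
    {s t x : K} (hx : x ≠ 0) (h : s * (Npoly (p ^ n) a b c d).eval x = t * (Dpoly a b c d).eval x) :
    s ^ p ^ n * (Dpoly a b c d).eval (conjInv (p ^ n) x) =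
      t ^ p ^ n * (Npoly (p ^ n) a b c d).eval (conjInv (p ^ n) x) := by
  rw [eval_Npoly_eq_mul_eval_Dpoly_conjInv hK a b c d hx,
    eval_Dpoly_eq_mul_eval_Npoly_conjInv hK a b c d hx, mul_left_comm s, mul_left_comm t] at h
  have h' := congrArg (· ^ p ^ n) (mul_left_cancel₀ (pow_ne_zero 3 hx) h)
  simpa only [mul_pow, pow_pow_eq_self hK] using h'

theorem eval_Npoly_conjInv_eq_mul (hK : Fintype.card K = (p ^ n) ^ 2) (a b c d : K) {x y : K}
    (hx : x ≠ 0) (hy : y ∈ mu (p ^ n) K)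
    (h : (Npoly (p ^ n) a b c d).eval x = y * (Dpoly a b c d).eval x) :
    (Npoly (p ^ n) a b c d).eval (conjInv (p ^ n) x) =
      y * (Dpoly a b c d).eval (conjInv (p ^ n) x) := by
  have h' := pow_mul_eval_Dpoly_conjInv_eq hK a b c d hx (s := 1) (by rw [one_mul, h])
  rw [one_pow, one_mul] at h'
  rw [h', ← mul_assoc, ← pow_succ', hy, one_mul]

theorem eval_conjInv_eq_zero (hK : Fintype.card K = (p ^ n) ^ 2) (a b c d : K) {x : K}
    (hx : x ≠ 0) (hN : (Npoly (p ^ n) a b c d).eval x = 0) (hD : (Dpoly a b c d).eval x = 0) :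
    (Npoly (p ^ n) a b c d).eval (conjInv (p ^ n) x) = 0 ∧
      (Dpoly a b c d).eval (conjInv (p ^ n) x) = 0 := by
  have hq : p ^ n ≠ 0 := pow_ne_zero _ (expChar_pos K p).ne'
  have hN' := pow_mul_eval_Dpoly_conjInv_eq hK a b c d hx (s := 0) (t := 1) (by simp [hD])
  have hD' := pow_mul_eval_Dpoly_conjInv_eq hK a b c d hx (s := 1) (t := 0) (by simp [hN])
  simp only [zero_pow hq, one_pow, zero_mul, one_mul] at hN' hD'
  exact ⟨hN'.symm, hD'⟩

/-- `conjInv` permutes the roots of `N - y D` and fixes exactly those in `μ_{q+1}`, so `v` cannot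
be the only root outside `μ_{q+1}`. -/
theorem mem_mu_of_roots_subset (hK : Fintype.card K = (p ^ n) ^ 2) (a b c d : K) {r u v y : K}
    (hr : r ∈ mu (p ^ n) K) (hu : u ∈ mu (p ^ n) K) (hv : v ≠ 0) (hy : y ∈ mu (p ^ n) K)
    (hroot : (Npoly (p ^ n) a b c d).eval v = y * (Dpoly a b c d).eval v)
    (hroots : ∀ x, (Npoly (p ^ n) a b c d).eval x = y * (Dpoly a b c d).eval x →
      x = r ∨ x = u ∨ x = v) :
    v ∈ mu (p ^ n) K := by
  have hfix {z : K} (hz : z ∈ mu (p ^ n) K) : conjInv (p ^ n) z = z :=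
    (conjInv_eq_self_iff (ne_zero_of_mem_mu hz)).2 hz
  rcases hroots _ (eval_Npoly_conjInv_eq_mul hK a b c d hv hy hroot) with h | h | h
  · rwa [← conjInv_conjInv hK v, h, hfix hr]
  · rwa [← conjInv_conjInv hK v, h, hfix hu]
  · exact (conjInv_eq_self_iff hv).1 h

end Conjugation

section CommonRoot

variable {K : Type*} [Field K] {q : ℕ} {a b c d : K}

/-- With `B = d^q b - a c^q` and `E = d^q c - a b^q`, we have `d^q D - a N = B X² + E X`; in
characteristic `2` its nonzero root is `E / B`. -/
noncomputable def commonRoot (q : ℕ) (a b c d : K) : K :=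
  (d ^ q * c - a * b ^ q) / (d ^ q * b - a * c ^ q)

theorem mul_eval_Dpoly_sub_mul_eval_Npoly (h1 : d ^ q * b ≠ a * c ^ q)
    (h3 : d ^ (q + 1) = a ^ (q + 1)) (x : K) :
    d ^ q * (Dpoly a b c d).eval x - a * (Npoly q a b c d).eval x =
      (d ^ q * b - a * c ^ q) * x * (x + commonRoot q a b c d) := by
  rw [Npoly_eq_Dpoly, eval_Dpoly, eval_Dpoly, commonRoot]
  field_simp [sub_ne_zero.2 h1]
  linear_combination h3

variable [CharP K 2]

theorem eval_Dpoly_commonRoot (h1 : d ^ q * b ≠ a * c ^ q) (h3 : d ^ (q + 1) = a ^ (q + 1))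
    (h4 : -(d ^ q * c - a * b ^ q) ^ 3 =
        (d ^ q * b - a * c ^ q) *
          ((b ^ (q + 1) - c ^ (q + 1)) * (d ^ q * c - a * b ^ q) +
           (b * d ^ q - a * c ^ q) * (d * c ^ q - a ^ q * b))) :
    (Dpoly a b c d).eval (commonRoot q a b c d) = 0 := by
  set B := d ^ q * b - a * c ^ q
  set E := d ^ q * c - a * b ^ q
  have hB0 : B ≠ 0 := sub_ne_zero.2 h1
  -- `B³ D(E/B)`, which is `-a` times `h4` modulo `h3` and `2 = 0`
  have key : a * E ^ 3 + b * E ^ 2 * B + c * E * B ^ 2 + d * B ^ 3 = 0 := by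
    linear_combination (-a) * h4 + b * B ^ 2 * h3 +
      B * (b * c * d ^ q * E - a * b * b ^ q * E - a * d * c ^ q * B + a * b * a ^ q * B) *
        (CharTwo.two_eq_zero : (2 : K) = 0)
  rw [eval_Dpoly, commonRoot]
  field_simp
  linear_combination key

theorem eval_Npoly_commonRoot (ha : a ≠ 0) (h1 : d ^ q * b ≠ a * c ^ q)
    (h3 : d ^ (q + 1) = a ^ (q + 1)) (hD : (Dpoly a b c d).eval (commonRoot q a b c d) = 0) :
    (Npoly q a b c d).eval (commonRoot q a b c d) = 0 := by
  have h := mul_eval_Dpoly_sub_mul_eval_Npoly h1 h3 (commonRoot q a b c d)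
  rw [hD, CharTwo.add_self_eq_zero, mul_zero, mul_zero, zero_sub, neg_eq_zero] at h
  exact (mul_eq_zero.1 h).resolve_left ha

theorem eq_commonRoot (hd : d ≠ 0) (h1 : d ^ q * b ≠ a * c ^ q) (h3 : d ^ (q + 1) = a ^ (q + 1))
    {x : K} (hN : (Npoly q a b c d).eval x = 0) (hD : (Dpoly a b c d).eval x = 0) :
    x = commonRoot q a b c d := by
  have h := mul_eval_Dpoly_sub_mul_eval_Npoly h1 h3 x
  rw [hN, hD, mul_zero, mul_zero, sub_zero, eq_comm] at h
  rcases mul_eq_zero.1 h with h | h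
  · rcases mul_eq_zero.1 h with h | rfl
    · exact absurd h (sub_ne_zero.2 h1)
    · simp [eval_Dpoly, hd] at hD
  · exact CharTwo.add_eq_zero.1 h

end CommonRoot

theorem commonRoot_mem_mu {K : Type*} [Field K] [Fintype K] [CharP K 2] {m : ℕ} {a b c d : K}
    (hK : Fintype.card K = (2 ^ m) ^ 2) (hd : d ≠ 0) (ha : a ≠ 0)
    (h1 : d ^ 2 ^ m * b ≠ a * c ^ 2 ^ m) (h2 : d ^ 2 ^ m * c ≠ a * b ^ 2 ^ m)
    (h3 : d ^ (2 ^ m + 1) = a ^ (2 ^ m + 1))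
    (hD : (Dpoly a b c d).eval (commonRoot (2 ^ m) a b c d) = 0) :
    commonRoot (2 ^ m) a b c d ∈ mu (2 ^ m) K := by
  have hr : commonRoot (2 ^ m) a b c d ≠ 0 :=
    div_ne_zero (sub_ne_zero.2 h2) (sub_ne_zero.2 h1)
  have hN := eval_Npoly_commonRoot ha h1 h3 hD
  obtain ⟨hN', hD'⟩ := eval_conjInv_eq_zero hK a b c d hr hN hD
  exact (conjInv_eq_self_iff hr).1 (eq_commonRoot hd h1 h3 hN' hD')

theorem le_ncard_mu {K : Type*} [Field K] [Fintype K] {q : ℕ} (hK : Fintype.card K = q ^ 2) :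
    q + 1 ≤ (mu q K).ncard := by
  have hq : 1 ≤ q := by
    rcases Nat.eq_zero_or_pos q with rfl | h
    · simp at hK
    · exact h
  let S := (powMonoidHom (q + 1) : Kˣ →* Kˣ).ker
  have hS : Nat.card S = q + 1 := by
    rw [IsCyclic.card_powMonoidHom_ker, Nat.card_units, Nat.card_eq_fintype_card, hK]
    refine Nat.gcd_eq_right ⟨q - 1, ?_⟩
    zify [hq, Nat.one_le_pow 2 q hq]
    ring
  rw [← hS, ← Nat.card_coe_set_eq]
  refine Nat.card_le_card_of_injective (fun x => ⟨(x : Kˣ), ?_⟩) fun x y h => ?_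
  · simpa [mu] using congrArg Units.val x.2
  · exact Subtype.ext (Units.ext (congrArg Subtype.val h))

theorem exists_mem_mu_ne_ne {K : Type*} [Field K] [Fintype K] {q : ℕ}
    (hK : Fintype.card K = q ^ 2) (hq : 2 ≤ q) (e₁ e₂ : K) :
    ∃ y ∈ mu q K, y ≠ e₁ ∧ y ≠ e₂ := by
  by_contra! h
  have hsub : mu q K ⊆ {e₁, e₂} := fun y hy => by
    by_cases hy₁ : y = e₁
    · exact Or.inl hy₁
    · exact Or.inr (h y hy hy₁)
  have := (Set.ncard_le_ncard hsub).trans (Set.ncard_insert_le e₁ {e₂})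
  rw [Set.ncard_singleton] at this
  have := le_ncard_mu hK
  omega

theorem eval_div_gcd_mul_inv_eval_div_gcd {K : Type*} [Field K] {f g h f₁ g₁ : K[X]}
    (hh : h ≠ 0) (hf : f = h * f₁) (hg : g = h * g₁) (hcop : IsCoprime f₁ g₁) (x : K) :
    (f / EuclideanDomain.gcd f g).eval x * ((g / EuclideanDomain.gcd f g).eval x)⁻¹ =
      f₁.eval x * (g₁.eval x)⁻¹ := by
  have hdvd : h ∣ EuclideanDomain.gcd f g :=
    EuclideanDomain.dvd_gcd (hf ▸ dvd_mul_right h f₁) (hg ▸ dvd_mul_right h g₁)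
  have hdvd' : EuclideanDomain.gcd f g ∣ h := by
    obtain ⟨s, t, hst⟩ := hcop
    have : h = s * f + t * g := by rw [hf, hg]; linear_combination (-h) * hst
    rw [this]
    exact dvd_add (dvd_mul_of_dvd_right (EuclideanDomain.gcd_dvd_left f g) s)
      (dvd_mul_of_dvd_right (EuclideanDomain.gcd_dvd_right f g) t)
  obtain ⟨w, hw⟩ := associated_of_dvd_dvd hdvd hdvd'
  have hdiv {k k₁ : K[X]} (hk : k = h * k₁) : k / EuclideanDomain.gcd f g = ↑w⁻¹ * k₁ := by
    rw [← hw, hk, show h * k₁ = h * ↑w * (↑w⁻¹ * k₁) by simp [mul_assoc],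
      mul_div_cancel_left₀ _ (mul_ne_zero hh w.ne_zero)]
  have hw' : (↑w⁻¹ : K[X]).eval x ≠ 0 := (w⁻¹.isUnit.map (evalRingHom x)).ne_zero
  rw [hdiv hf, hdiv hg, eval_mul, eval_mul, mul_inv, mul_mul_mul_comm, mul_inv_cancel₀ hw',
    one_mul]

section Quotient

variable {K : Type*} [Field K]

noncomputable def Dquot (a b c r : K) : K[X] :=
  C a * X ^ 2 + C (b + a * r) * X + C (c + b * r + a * r ^ 2)

theorem eval_Dquot (a b c r x : K) :
    (Dquot a b c r).eval x = a * x ^ 2 + (b + a * r) * x + (c + b * r + a * r ^ 2) := by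
  simp [Dquot]

theorem Dpoly_eq_X_sub_C_mul_Dquot {a b c d r : K} (hr : (Dpoly a b c d).eval r = 0) :
    Dpoly a b c d = (X - C r) * Dquot a b c r := by
  rw [eval_Dpoly] at hr
  rw [← sub_eq_zero, ← C_0, ← hr]
  simp only [Dpoly, Dquot, map_add, map_mul, map_pow]
  ring

theorem Npoly_eq_X_sub_C_mul_Dquot {q : ℕ} {a b c d r : K} (hr : (Npoly q a b c d).eval r = 0) :
    Npoly q a b c d = (X - C r) * Dquot (d ^ q) (c ^ q) (b ^ q) r :=
  Dpoly_eq_X_sub_C_mul_Dquot hr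

theorem C_mul_Dquot_sub_C_mul_Dquot (s t a b c a' b' c' r : K) :
    C s * Dquot a b c r - C t * Dquot a' b' c' r =
      Dquot (s * a - t * a') (s * b - t * b') (s * c - t * c') r := by
  simp only [Dquot, map_add, map_sub, map_mul, map_pow]
  ring

theorem isCoprime_of_C_mul_sub_C_mul_eq_C_mul_X {f g : K[X]} {s t k : K} (hk : k ≠ 0)
    (hg : g.eval 0 ≠ 0) (h : C s * g - C t * f = C k * X) : IsCoprime f g := by
  have hX : IsCoprime X g :=
    irreducible_X.coprime_iff_not_dvd.2 (by rwa [X_dvd_iff, coeff_zero_eq_eval_zero])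
  have hkX : IsCoprime (-(C t * f) + C s * g) g := by
    rw [neg_add_eq_sub, h]
    exact (isCoprime_mul_unit_left_left (isUnit_C.2 (Ne.isUnit hk)) X g).2 hX
  exact ((IsCoprime.neg_left_iff _ _).1 hkX.of_add_mul_right_left).of_mul_left_right

end Quotient

theorem isCoprime_Dquot_commonRoot {K : Type*} [Field K] [CharP K 2] {q : ℕ} {a b c d : K}
    (hd : d ≠ 0) (h1 : d ^ q * b ≠ a * c ^ q)
    (hD : (Dpoly a b c d).eval (commonRoot q a b c d) = 0) :
    IsCoprime (Dquot (d ^ q) (c ^ q) (b ^ q) (commonRoot q a b c d))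
      (Dquot a b c (commonRoot q a b c d)) := by
  set r := commonRoot q a b c d
  have hB : d ^ q * b - a * c ^ q ≠ 0 := sub_ne_zero.2 h1
  refine isCoprime_of_C_mul_sub_C_mul_eq_C_mul_X (s := d ^ q) (t := a) hB ?_ ?_
  · have h0 := congrArg (eval 0) (Dpoly_eq_X_sub_C_mul_Dquot hD)
    simp only [eval_mul, eval_sub, eval_X, eval_C, eval_Dpoly] at h0
    intro h
    simp [h, hd] at h0
  · have hrB : r * (d ^ q * b - a * c ^ q) = d ^ q * c - a * b ^ q := div_mul_cancel₀ _ hB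
    have h0 : d ^ q * c - a * b ^ q + (d ^ q * b - a * c ^ q) * r = 0 := by
      linear_combination hrB + (d ^ q * c - a * b ^ q) * (CharTwo.two_eq_zero : (2 : K) = 0)
    rw [C_mul_Dquot_sub_C_mul_Dquot, Dquot, mul_comm (d ^ q) a, sub_self, h0]
    simp

theorem exists_ne_ne_zero_eq_mul_sub_mul_sub {K : Type*} [Field K] [CharP K 2] {α β γ u : K}
    (hα : α ≠ 0) (hβ : β ≠ 0) (hγ : γ ≠ 0) (hu : α * u ^ 2 + β * u + γ = 0) :
    ∃ v, v ≠ u ∧ v ≠ 0 ∧ ∀ x, α * x ^ 2 + β * x + γ = α * (x - u) * (x - v) := by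
  have two : (2 : K) = 0 := CharTwo.two_eq_zero
  obtain ⟨v, hv⟩ : ∃ v, α * v = α * u + β := ⟨u + β / α, by rw [mul_add, mul_div_cancel₀ _ hα]⟩
  refine ⟨v, fun h => hβ ?_, fun h => hγ ?_, fun x => ?_⟩
  · rw [h] at hv
    linear_combination -hv
  · rw [h, mul_zero] at hv
    linear_combination hu + u * hv
  · linear_combination hu + (u - x) * hv + α * v * (x - u) * two

section Reduced

variable {K : Type*} [Field K] {q : ℕ} {a b c d r : K}

theorem eval_Npoly_sub_mul_eval_Dpoly (hN : (Npoly q a b c d).eval r = 0)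
    (hD : (Dpoly a b c d).eval r = 0) (x y : K) :
    (Npoly q a b c d).eval x - y * (Dpoly a b c d).eval x =
      (x - r) * ((Dquot (d ^ q) (c ^ q) (b ^ q) r).eval x - y * (Dquot a b c r).eval x) := by
  rw [Npoly_eq_X_sub_C_mul_Dquot hN, Dpoly_eq_X_sub_C_mul_Dquot hD]
  simp only [eval_mul, eval_sub, eval_X, eval_C]
  ring

/-- Excluding `y = a^q / d = d^q / a` keeps the leading and constant coefficients of the quadratic
`N₁ - y D₁` nonzero; excluding the second value keeps its linear coefficient nonzero. -/
theorem exists_roots_of_eval_Dquot_eq_mul [CharP K 2] (hd : d ≠ 0) (ha : a ≠ 0)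
    (h1 : d ^ q * b ≠ a * c ^ q) (h3 : d ^ (q + 1) = a ^ (q + 1))
    (hN : (Npoly q a b c d).eval r = 0) (hD : (Dpoly a b c d).eval r = 0) {y u : K}
    (hya : y ≠ a ^ q / d) (hyb : y ≠ (c ^ q + d ^ q * r) / (b + a * r))
    (hu : (Dquot (d ^ q) (c ^ q) (b ^ q) r).eval u = y * (Dquot a b c r).eval u) :
    ∃ v, v ≠ u ∧ v ≠ 0 ∧
      (Dquot (d ^ q) (c ^ q) (b ^ q) r).eval v = y * (Dquot a b c r).eval v ∧
      ∀ x, (Npoly q a b c d).eval x = y * (Dpoly a b c d).eval x → x = r ∨ x = u ∨ x = v := by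
  have hQ (x : K) : (Dquot (d ^ q) (c ^ q) (b ^ q) r).eval x - y * (Dquot a b c r).eval x =
      (d ^ q - y * a) * x ^ 2 + ((c ^ q + d ^ q * r) - y * (b + a * r)) * x +
        ((b ^ q + c ^ q * r + d ^ q * r ^ 2) - y * (c + b * r + a * r ^ 2)) := by
    rw [eval_Dquot, eval_Dquot]
    ring
  have hα : d ^ q - y * a ≠ 0 := fun h => hya <| by
    rw [eq_div_iff hd]
    exact mul_left_cancel₀ ha (by linear_combination -d * h + h3)
  have hβ : (c ^ q + d ^ q * r) - y * (b + a * r) ≠ 0 := by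
    by_cases hb : b + a * r = 0
    · rw [hb, mul_zero, sub_zero]
      exact fun h => h1 (by linear_combination d ^ q * hb - a * h)
    · exact fun h => hyb (by rw [eq_div_iff hb]; linear_combination -h)
  have hγ : (b ^ q + c ^ q * r + d ^ q * r ^ 2) - y * (c + b * r + a * r ^ 2) ≠ 0 := by
    intro h
    have h0 := eval_Npoly_sub_mul_eval_Dpoly hN hD 0 y
    rw [hQ, h, Npoly_eq_Dpoly, eval_Dpoly, eval_Dpoly] at h0
    exact hya (by rw [eq_div_iff hd]; linear_combination -h0)
  obtain ⟨v, hvu, hv0, hfac⟩ := exists_ne_ne_zero_eq_mul_sub_mul_sub hα hβ hγ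
    (by rw [← hQ, hu, sub_self])
  refine ⟨v, hvu, hv0, ?_, fun x hx => ?_⟩
  · rw [← sub_eq_zero, hQ, hfac, sub_self, mul_zero]
  · rw [← sub_eq_zero, eval_Npoly_sub_mul_eval_Dpoly hN hD, hQ, hfac] at hx
    simp only [mul_eq_zero, sub_eq_zero, hα, false_or] at hx
    tauto

end Reduced

theorem not_bijOn_Dquot {K : Type*} [Field K] [Fintype K] [CharP K 2] {m : ℕ} {a b c d r : K}
    (hK : Fintype.card K = (2 ^ m) ^ 2) (hm : 1 ≤ m) (hd : d ≠ 0) (ha : a ≠ 0)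
    (h1 : d ^ 2 ^ m * b ≠ a * c ^ 2 ^ m) (h3 : d ^ (2 ^ m + 1) = a ^ (2 ^ m + 1))
    (hr : r ∈ mu (2 ^ m) K) (hN : (Npoly (2 ^ m) a b c d).eval r = 0)
    (hD : (Dpoly a b c d).eval r = 0) :
    ¬ Set.BijOn (fun x => (Dquot (d ^ 2 ^ m) (c ^ 2 ^ m) (b ^ 2 ^ m) r).eval x *
      ((Dquot a b c r).eval x)⁻¹) (mu (2 ^ m) K) (mu (2 ^ m) K) := by
  intro hbij
  have hfiber {x : K} (hx : x ∈ mu (2 ^ m) K) (y : K) :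
      (Dquot (d ^ 2 ^ m) (c ^ 2 ^ m) (b ^ 2 ^ m) r).eval x * ((Dquot a b c r).eval x)⁻¹ = y ↔
        (Dquot (d ^ 2 ^ m) (c ^ 2 ^ m) (b ^ 2 ^ m) r).eval x = y * (Dquot a b c r).eval x := by
    refine mul_inv_eq_iff_eq_mul₀ fun h => ne_zero_of_mem_mu (hbij.mapsTo hx) ?_
    simp only [h, inv_zero, mul_zero]
  obtain ⟨y, hy, hya, hyb⟩ := exists_mem_mu_ne_ne hK (Nat.one_lt_two_pow (by omega))
    (a ^ 2 ^ m / d) ((c ^ 2 ^ m + d ^ 2 ^ m * r) / (b + a * r))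
  obtain ⟨u, hu, hfu⟩ := hbij.surjOn hy
  obtain ⟨v, hvu, hv0, hv, hroots⟩ :=
    exists_roots_of_eval_Dquot_eq_mul hd ha h1 h3 hN hD hya hyb ((hfiber hu y).1 hfu)
  have hvμ : v ∉ mu (2 ^ m) K := fun hvμ =>
    hvu (hbij.injOn hvμ hu (((hfiber hvμ y).2 hv).trans hfu.symm))
  refine hvμ (mem_mu_of_roots_subset hK a b c d hr hu hv0 hy ?_ hroots)
  rw [← sub_eq_zero, eval_Npoly_sub_mul_eval_Dpoly hN hD, hv, sub_self, mul_zero]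

/-- Section 4.2, Case (iii): in characteristic 2, under the
listed coefficient conditions, `g` does not permute `μ_{q+1}`. -/
theorem stmt18 {K : Type*} [Field K] [Fintype K] (m q : ℕ)
    (hm : 1 ≤ m) (hq : q = 2 ^ m) (hK : Fintype.card K = q ^ 2) (a b c d : K)
    (hd : d ≠ 0) (h1 : d ^ q * b ≠ a * c ^ q) (h2 : d ^ q * c ≠ a * b ^ q)
    (h3 : d ^ (q + 1) = a ^ (q + 1))
    (h4 : -(d ^ q * c - a * b ^ q) ^ 3 =
        (d ^ q * b - a * c ^ q) *
          ((b ^ (q + 1) - c ^ (q + 1)) * (d ^ q * c - a * b ^ q) +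
           (b * d ^ q - a * c ^ q) * (d * c ^ q - a ^ q * b))) :
    ¬ gPermutes q a b c d := by
  subst hq
  have : CharP K 2 := charP_of_card_eq_prime_pow (hK.trans (pow_mul 2 m 2).symm)
  have ha : a ≠ 0 := by
    rintro rfl
    rw [zero_pow (Nat.succ_ne_zero _)] at h3
    exact hd (pow_eq_zero_iff (Nat.succ_ne_zero _) |>.1 h3)
  have hD := eval_Dpoly_commonRoot h1 h3 h4
  have hN := eval_Npoly_commonRoot ha h1 h3 hD
  have hreduce := eval_div_gcd_mul_inv_eval_div_gcd (X_sub_C_ne_zero _)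
    (Npoly_eq_X_sub_C_mul_Dquot hN) (Dpoly_eq_X_sub_C_mul_Dquot hD)
    (isCoprime_Dquot_commonRoot hd h1 hD)
  intro hperm
  rw [gPermutes, numer₀, denom₀, funext hreduce] at hperm
  exact not_bijOn_Dquot hK hm hd ha h1 h3 (commonRoot_mem_mu hK hd ha h1 h2 h3 hD) hN hD hperm
end

section
/- Let q = 2^m with m ≥ 1, K a finite field with q² elements, and a, b, c, d ∈ K satisfying d ≠ 0, d^q·b ≠ a·c^q, d^q·c ≠ a·b^q, d^{q+1} ≠ a^{q+1}, and A₂/A₁ ∈ μ_{q+1}, where A₁ = (d^{q+1} − a^{q+1})·(d^q·c − a·b^q) − (d·c^q − a^q·b)·(d^q·b − a·c^q) and A₂ = (d^{q+1} − a^{q+1})² − (d·b^q − a^q·c)^{q+1}. Then the rational function g = (d^q·X³ + c^q·X² + b^q·X + a^q)/(a·X³ + b·X² + c·X + d) does not permute μ_{q+1}. -/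
open Polynomial

open scoped Classical

private lemma pick4 {α : Type*} {x1 x2 x3 x4 v1 v2 v3 : α}
    (d12 : x1 ≠ x2) (d13 : x1 ≠ x3) (d14 : x1 ≠ x4)
    (d23 : x2 ≠ x3) (d24 : x2 ≠ x4) (d34 : x3 ≠ x4)
    (e1 : x1 = v1 ∨ x1 = v2 ∨ x1 = v3) (e2 : x2 = v1 ∨ x2 = v2 ∨ x2 = v3)
    (e3 : x3 = v1 ∨ x3 = v2 ∨ x3 = v3) (e4 : x4 = v1 ∨ x4 = v2 ∨ x4 = v3) : False := by
  rcases e1 with h1|h1|h1 <;> rcases e2 with h2|h2|h2 <;> rcases e3 with h3|h3|h3 <;>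
    rcases e4 with h4|h4|h4 <;> simp_all

/-- Section 4.2, Case (iv): in characteristic 2, under the listed
coefficient conditions, `g` does not permute `μ_{q+1}`. -/
theorem stmt19 {K : Type*} [Field K] [Fintype K] (m q : ℕ)
    (hm : 1 ≤ m) (hq : q = 2 ^ m) (hK : Fintype.card K = q ^ 2) (a b c d : K)
    (hd : d ≠ 0) (h1 : d ^ q * b ≠ a * c ^ q) (h2 : d ^ q * c ≠ a * b ^ q)
    (h3 : d ^ (q + 1) ≠ a ^ (q + 1))
    (h4 : ((d ^ (q + 1) - a ^ (q + 1)) ^ 2 - (d * b ^ q - a ^ q * c) ^ (q + 1)) /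
        ((d ^ (q + 1) - a ^ (q + 1)) * (d ^ q * c - a * b ^ q) -
         (d * c ^ q - a ^ q * b) * (d ^ q * b - a * c ^ q)) ∈ mu q K) :
    ¬ gPermutes q a b c d := by

  classical
  -- basic numeric facts
  have hq2 : 2 ≤ q := by
    rw [hq]; calc 2 = 2^1 := (pow_one 2).symm
    _ ≤ 2^m := Nat.pow_le_pow_right (by norm_num) hm
  have hq0 : q ≠ 0 := by omega
  have hq10 : q + 1 ≠ 0 := by omega
  -- characteristic 2
  obtain ⟨p, hpI⟩ := CharP.exists K
  haveI := hpI
  have hpp : p.Prime := CharP.char_is_prime K p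
  haveI : Fact p.Prime := ⟨hpp⟩
  obtain ⟨n, hn2, hcardp⟩ := FiniteField.card K p
  have hp2 : p = 2 := by
    have hcard2 : Fintype.card K = 2 ^ (2 * m) := by
      rw [hK, hq, ← pow_mul, Nat.mul_comm m 2]
    have hdvd : p ∣ 2 ^ (2 * m) := by
      rw [← hcard2, hcardp]
      exact dvd_pow_self p n.pos.ne'
    have hdvd2 : p ∣ 2 := hpp.dvd_of_dvd_pow hdvd
    exact (Nat.prime_dvd_prime_iff_eq hpp Nat.prime_two).mp hdvd2
  subst hp2
  have hch2 : (2:K) = 0 := by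
    have := CharP.cast_eq_zero K 2; exact_mod_cast this
  -- Frobenius facts
  have hfa : ∀ u v : K, (u + v) ^ q = u ^ q + v ^ q := by
    intro u v; rw [hq]; exact add_pow_char_pow u v 2 m
  have hfs : ∀ u v : K, (u - v) ^ q = u ^ q - v ^ q := by
    intro u v; rw [hq]; exact sub_pow_char_pow (p := 2) u v m
  have hqq : ∀ u : K, (u ^ q) ^ q = u := by
    intro u
    rw [← pow_mul, show q * q = Fintype.card K by rw [hK]; ring, FiniteField.pow_card]
  have hnorm : ∀ u : K, (u ^ (q+1)) ^ q = u ^ (q+1) := by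
    intro u
    rw [pow_succ, mul_pow, hqq u]
    ring
  -- conjugation facts
  have heq : (d ^ (q+1) - a ^ (q+1)) ^ q = (d ^ (q+1) - a ^ (q+1)) := by rw [hfs, hnorm, hnorm]
  have hAq : (d ^ q * b - a * c ^ q) ^ q = (d * b ^ q - a ^ q * c) := by rw [hfs, mul_pow, mul_pow, hqq d, hqq c]
  have hA'q : (d * b ^ q - a ^ q * c) ^ q = (d ^ q * b - a * c ^ q) := by rw [hfs, mul_pow, mul_pow, hqq b, hqq a]
  have hBq : (d ^ q * c - a * b ^ q) ^ q = (d * c ^ q - a ^ q * b) := by rw [hfs, mul_pow, mul_pow, hqq d, hqq b]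
  have hB'q : (d * c ^ q - a ^ q * b) ^ q = (d ^ q * c - a * b ^ q) := by rw [hfs, mul_pow, mul_pow, hqq c, hqq a]
  have hE0 : (d ^ (q+1) - a ^ (q+1)) ≠ 0 := sub_ne_zero.mpr h3
  have hA0 : (d ^ q * b - a * c ^ q) ≠ 0 := sub_ne_zero.mpr h1
  have hB0 : (d ^ q * c - a * b ^ q) ≠ 0 := sub_ne_zero.mpr h2
  have hAP0 : (d * b ^ q - a ^ q * c) ≠ 0 := by
    intro h
    exact hA0 (by rw [← hA'q, h, zero_pow hq0])
  have hAA' : (d ^ q * b - a * c ^ q) ^ (q+1) = (d * b ^ q - a ^ q * c) ^ (q+1) := by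
    rw [pow_succ, pow_succ, hAq, hA'q, mul_comm]
  -- the distinguished element l = A₂ / A₁
  obtain ⟨l, hldef⟩ : ∃ t : K, t = ((d ^ (q+1) - a ^ (q+1)) ^ 2 - (d * b ^ q - a ^ q * c) ^ (q+1)) / ((d ^ (q+1) - a ^ (q+1)) * (d ^ q * c - a * b ^ q) - (d * c ^ q - a ^ q * b) * (d ^ q * b - a * c ^ q)) := ⟨_, rfl⟩
  have hl : l ^ (q+1) = 1 := by rw [hldef]; exact h4
  have hA10 : ((d ^ (q+1) - a ^ (q+1)) * (d ^ q * c - a * b ^ q) - (d * c ^ q - a ^ q * b) * (d ^ q * b - a * c ^ q)) ≠ 0 := by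
    intro h
    have h4' : ((0:K)) ^ (q+1) = 1 := by
      have := h4
      rw [h, div_zero] at this
      exact this
    rw [zero_pow hq10] at h4'
    exact zero_ne_one h4'
  have hA20 : ((d ^ (q+1) - a ^ (q+1)) ^ 2 - (d * b ^ q - a ^ q * c) ^ (q+1)) ≠ 0 := by
    intro h
    have h4' : ((0:K)) ^ (q+1) = 1 := by
      have := h4
      rw [h, zero_div] at this
      exact this
    rw [zero_pow hq10] at h4'
    exact zero_ne_one h4'
  have hl0 : l ≠ 0 := by
    intro h; rw [h, zero_pow hq10] at hl; exact zero_ne_one hl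
  have hlql : l ^ q * l = 1 := by rw [← pow_succ]; exact hl
  -- A₂ is fixed by Frobenius
  have hA2q : ((d ^ (q+1) - a ^ (q+1)) ^ 2 - (d * b ^ q - a ^ q * c) ^ (q+1)) ^ q = ((d ^ (q+1) - a ^ (q+1)) ^ 2 - (d * b ^ q - a ^ q * c) ^ (q+1)) := by
    rw [hfs, pow_right_comm, heq, pow_right_comm, hA'q, ← hAA']
  have hA1q : ((d ^ (q+1) - a ^ (q+1)) * (d ^ q * c - a * b ^ q) - (d * c ^ q - a ^ q * b) * (d ^ q * b - a * c ^ q)) ^ q = (d ^ (q+1) - a ^ (q+1)) * (d * c ^ q - a ^ q * b) - (d ^ q * c - a * b ^ q) * (d * b ^ q - a ^ q * c) := by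
    rw [hfs, mul_pow, mul_pow, heq, hBq, hB'q, hAq]
  -- m = 1 : the hypotheses are contradictory
  rcases Nat.lt_or_ge m 2 with hm1 | hm2
  · intro _
    have hqis2 : q = 2 := by rw [hq]; interval_cases m <;> norm_num
    have hE1 : (d ^ (q+1) - a ^ (q+1)) = 1 := by
      have hsq : (d ^ (q+1) - a ^ (q+1)) ^ 2 = (d ^ (q+1) - a ^ (q+1)) := by rw [← hqis2]; exact heq
      have hfac : (d ^ (q+1) - a ^ (q+1)) * ((d ^ (q+1) - a ^ (q+1)) - 1) = 0 := by linear_combination hsq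
      rcases mul_eq_zero.mp hfac with h | h
      · exact absurd h hE0
      · exact sub_eq_zero.mp h
    have hU1 : (d * b ^ q - a ^ q * c) ^ (q+1) = 1 := by
      have hUq : ((d * b ^ q - a ^ q * c) ^ (q+1)) ^ q = (d * b ^ q - a ^ q * c) ^ (q+1) := by
        rw [pow_right_comm, hA'q, hAA']
      have hsq : ((d * b ^ q - a ^ q * c) ^ (q+1)) ^ 2 = (d * b ^ q - a ^ q * c) ^ (q+1) := by rw [← hqis2]; exact hUq
      have hU0 : (d * b ^ q - a ^ q * c) ^ (q+1) ≠ 0 := pow_ne_zero _ hAP0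
      have hfac : ((d * b ^ q - a ^ q * c) ^ (q+1)) * ((d * b ^ q - a ^ q * c) ^ (q+1) - 1) = 0 := by linear_combination hsq
      rcases mul_eq_zero.mp hfac with h | h
      · exact absurd h hU0
      · exact sub_eq_zero.mp h
    exact hA20 (by rw [hU1, hE1]; ring)
  · intro hperm
    have hq4 : 4 ≤ q := by
      rw [hq]
      calc 4 = 2^2 := by norm_num
      _ ≤ 2^m := Nat.pow_le_pow_right (by norm_num) hm2
    -- R1 : Q1(l) = 0
    have hl2 : l * ((d ^ (q+1) - a ^ (q+1)) * (d ^ q * c - a * b ^ q) - (d * c ^ q - a ^ q * b) * (d ^ q * b - a * c ^ q)) = ((d ^ (q+1) - a ^ (q+1)) ^ 2 - (d * b ^ q - a ^ q * c) ^ (q+1)) := by rw [hldef, div_mul_cancel₀ _ hA10]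
    have hA2pow : ((d ^ (q+1) - a ^ (q+1)) ^ 2 - (d * b ^ q - a ^ q * c) ^ (q+1)) ^ (q+1) = ((d ^ (q+1) - a ^ (q+1)) * (d ^ q * c - a * b ^ q) - (d * c ^ q - a ^ q * b) * (d ^ q * b - a * c ^ q)) ^ (q+1) := by
      have h := hl
      rw [hldef, div_pow] at h
      exact eq_of_div_eq_one h
    have hA2sq : ((d ^ (q+1) - a ^ (q+1)) ^ 2 - (d * b ^ q - a ^ q * c) ^ (q+1)) ^ 2 = ((d ^ (q+1) - a ^ (q+1)) * (d * c ^ q - a ^ q * b) - (d ^ q * c - a * b ^ q) * (d * b ^ q - a ^ q * c)) * ((d ^ (q+1) - a ^ (q+1)) * (d ^ q * c - a * b ^ q) - (d * c ^ q - a ^ q * b) * (d ^ q * b - a * c ^ q)) := by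
      calc ((d ^ (q+1) - a ^ (q+1)) ^ 2 - (d * b ^ q - a ^ q * c) ^ (q+1)) ^ 2 = ((d ^ (q+1) - a ^ (q+1)) ^ 2 - (d * b ^ q - a ^ q * c) ^ (q+1)) ^ q * ((d ^ (q+1) - a ^ (q+1)) ^ 2 - (d * b ^ q - a ^ q * c) ^ (q+1)) := by rw [hA2q]; ring
      _ = ((d ^ (q+1) - a ^ (q+1)) ^ 2 - (d * b ^ q - a ^ q * c) ^ (q+1)) ^ (q+1) := by rw [← pow_succ]
      _ = ((d ^ (q+1) - a ^ (q+1)) * (d ^ q * c - a * b ^ q) - (d * c ^ q - a ^ q * b) * (d ^ q * b - a * c ^ q)) ^ (q+1) := hA2pow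
      _ = ((d ^ (q+1) - a ^ (q+1)) * (d ^ q * c - a * b ^ q) - (d * c ^ q - a ^ q * b) * (d ^ q * b - a * c ^ q)) ^ q * ((d ^ (q+1) - a ^ (q+1)) * (d ^ q * c - a * b ^ q) - (d * c ^ q - a ^ q * b) * (d ^ q * b - a * c ^ q)) := by rw [pow_succ]
      _ = ((d ^ (q+1) - a ^ (q+1)) * (d * c ^ q - a ^ q * b) - (d ^ q * c - a * b ^ q) * (d * b ^ q - a ^ q * c)) * ((d ^ (q+1) - a ^ (q+1)) * (d ^ q * c - a * b ^ q) - (d * c ^ q - a ^ q * b) * (d ^ q * b - a * c ^ q)) := by rw [hA1q]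
    have h2sq : (l * ((d ^ (q+1) - a ^ (q+1)) * (d ^ q * c - a * b ^ q) - (d * c ^ q - a ^ q * b) * (d ^ q * b - a * c ^ q))) ^ 2 = ((d ^ (q+1) - a ^ (q+1)) * (d * c ^ q - a ^ q * b) - (d ^ q * c - a * b ^ q) * (d * b ^ q - a ^ q * c)) * ((d ^ (q+1) - a ^ (q+1)) * (d ^ q * c - a * b ^ q) - (d * c ^ q - a ^ q * b) * (d ^ q * b - a * c ^ q)) := by rw [hl2]; exact hA2sq
    have hG0 : ((d ^ q * b - a * c ^ q) * l^2 + (d ^ q * c - a * b ^ q) * l + (d ^ (q+1) - a ^ (q+1))) * ((d ^ (q+1) - a ^ (q+1)) * (d ^ q * c - a * b ^ q) - (d * c ^ q - a ^ q * b) * (d ^ q * b - a * c ^ q))^2 = 0 := by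
      linear_combination (d ^ q * b - a * c ^ q) * h2sq + ((d ^ q * c - a * b ^ q) * ((d ^ (q+1) - a ^ (q+1)) * (d ^ q * c - a * b ^ q) - (d * c ^ q - a ^ q * b) * (d ^ q * b - a * c ^ q))) * hl2 + (-((d ^ q * c - a * b ^ q) * (d * b ^ q - a ^ q * c) * ((d ^ (q+1) - a ^ (q+1)) * (d ^ q * c - a * b ^ q) - (d * c ^ q - a ^ q * b) * (d ^ q * b - a * c ^ q)))) * hA'q
        + (((d ^ (q+1) - a ^ (q+1)) * (d ^ q * c - a * b ^ q) - (d * c ^ q - a ^ q * b) * (d ^ q * b - a * c ^ q)) * (d ^ q * c - a * b ^ q) * ((d ^ (q+1) - a ^ (q+1))^2 - (d ^ q * b - a * c ^ q) * (d * b ^ q - a ^ q * c))) * hch2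
    have hR1 : (d ^ q * b - a * c ^ q) * l^2 + (d ^ q * c - a * b ^ q) * l + (d ^ (q+1) - a ^ (q+1)) = 0 :=
      (mul_eq_zero.mp hG0).resolve_right (pow_ne_zero 2 hA10)
    -- R3 : Q2(l) = 0
    have h00 : ((d ^ q * b - a * c ^ q) * l^2 + (d ^ q * c - a * b ^ q) * l + (d ^ (q+1) - a ^ (q+1))) ^ q = 0 := by rw [hR1]; exact zero_pow hq0
    rw [hfa, hfa, mul_pow, mul_pow, hAq, hBq, heq, pow_right_comm] at h00
    have hR3 : (d ^ (q+1) - a ^ (q+1)) * l^2 + (d * c ^ q - a ^ q * b) * l + (d * b ^ q - a ^ q * c) = 0 := by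
      linear_combination l^2 * h00 - ((d * b ^ q - a ^ q * c) * (l^q * l + 1) + (d * c ^ q - a ^ q * b) * l) * hlql
    -- S1
    have hS1' : (d ^ (q+1) - a ^ (q+1)) * l * ((d ^ q * c - a * b ^ q) * l^2 + ((d ^ (q+1) - a ^ (q+1)) + (c ^ (q+1) - b ^ (q+1))) * l + (d * c ^ q - a ^ q * b)) = 0 := by
      linear_combination (d * b^q + c * a^q) * hR1 + ((a * b^q + c * d^q) * l + (d ^ (q+1) - a ^ (q+1))) * hR3
        + (b ^ q * (a * a ^ q - d * d ^ q) * (a*l^3 + b*l^2 + c*l + d)) * hch2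
    have hS1 : (d ^ q * c - a * b ^ q) * l^2 + ((d ^ (q+1) - a ^ (q+1)) + (c ^ (q+1) - b ^ (q+1))) * l + (d * c ^ q - a ^ q * b) = 0 := by
      rcases mul_eq_zero.mp hS1' with h | h
      · exact absurd h (mul_ne_zero hE0 hl0)
      · exact h
    -- two non-vanishing criteria on mu
    have hcrit : ∀ z : K, z ^ (q+1) = 1 → (d ^ q * b - a * c ^ q) * z + (d ^ (q+1) - a ^ (q+1)) ≠ 0 := by
      intro z hz hAz
      have h1' : (d ^ q * b - a * c ^ q) * z = -(d ^ (q+1) - a ^ (q+1)) := by linear_combination hAz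
      rw [CharTwo.neg_eq] at h1'
      have h7 : ((d ^ q * b - a * c ^ q) * z) ^ (q+1) = (d ^ (q+1) - a ^ (q+1)) ^ (q+1) := by rw [h1']
      rw [mul_pow, hz, mul_one] at h7
      refine hA20 ?_
      linear_combination (-1 : K) * h7 - (d ^ (q+1) - a ^ (q+1)) * heq + (d ^ q * b - a * c ^ q) * hAq + (d * b ^ q - a ^ q * c) * hA'q
        + ((d ^ q * b - a * c ^ q)*(d * b ^ q - a ^ q * c) - (d * b ^ q - a ^ q * c)^q*(d * b ^ q - a ^ q * c)) * hch2
    have hcrit2 : ∀ z : K, z ^ (q+1) = 1 → (d ^ (q+1) - a ^ (q+1)) * z + (d * b ^ q - a ^ q * c) ≠ 0 := by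
      intro z hz hAz
      have h1' : (d ^ (q+1) - a ^ (q+1)) * z = -(d * b ^ q - a ^ q * c) := by linear_combination hAz
      rw [CharTwo.neg_eq] at h1'
      have h7 : ((d ^ (q+1) - a ^ (q+1)) * z) ^ (q+1) = (d * b ^ q - a ^ q * c) ^ (q+1) := by rw [h1']
      rw [mul_pow, hz, mul_one] at h7
      refine hA20 ?_
      linear_combination h7 - (d ^ (q+1) - a ^ (q+1)) * heq
    -- pole-freeness away from l
    have hpole : ∀ z : K, z ^ (q+1) = 1 → z ≠ l → a*z^3 + b*z^2 + c*z + d ≠ 0 := by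
      intro z hz hzl hD0
      have hzql : z^q * z = 1 := by rw [← pow_succ]; exact hz
      have h5 : (a*z^3 + b*z^2 + c*z + d)^q = 0 := by rw [hD0]; exact zero_pow hq0
      simp only [hfa, mul_pow] at h5
      rw [show (z^3)^q = (z^q)^3 from pow_right_comm z 3 q,
          show (z^2)^q = (z^q)^2 from pow_right_comm z 2 q] at h5
      have hNz : d^q*z^3 + c^q*z^2 + b^q*z + a^q = 0 := by
        linear_combination z^3 * h5
          - (a^q*((z^q*z)^2 + z^q*z + 1) + b^q*z*(z^q*z + 1) + c^q*z^2) * hzql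
      have hQ1z : (d ^ q * b - a * c ^ q)*z^2 + (d ^ q * c - a * b ^ q)*z + (d ^ (q+1) - a ^ (q+1)) = 0 := by
        linear_combination d^q * hD0 - a * hNz
      have hfac : (z - l)*((d ^ q * b - a * c ^ q)*(z+l) + (d ^ q * c - a * b ^ q)) = 0 := by linear_combination hQ1z - hR1
      have hAB : (d ^ q * b - a * c ^ q)*(z+l) + (d ^ q * c - a * b ^ q) = 0 := by
        rcases mul_eq_zero.mp hfac with h6 | h6
        · exact absurd (sub_eq_zero.mp h6) hzl
        · exact h6
      have hAz : (d ^ q * b - a * c ^ q)*(l*z) + (d ^ (q+1) - a ^ (q+1)) = 0 := by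
        linear_combination l * hAB - hR1 + (d ^ (q+1) - a ^ (q+1)) * hch2
      exact hcrit (l*z) (by rw [mul_pow, hl, hz, one_mul]) hAz
    -- the element of order dividing q+1 with four distinct powers
    obtain ⟨g, hg⟩ := IsCyclic.exists_generator (α := Kˣ)
    have hog : orderOf g = q^2 - 1 := by
      rw [orderOf_eq_card_of_forall_mem_zpowers hg, Nat.card_units,
        Nat.card_eq_fintype_card, hK]
    have hfactor : (q-1)*(q+1) = q^2 - 1 := by
      obtain ⟨k, rfl⟩ : ∃ k, q = k + 1 := ⟨q - 1, by omega⟩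
      have h5 : (k+1)^2 = k*(k+2)+1 := by ring
      have h6 : k+1-1 = k := by omega
      rw [h5, h6, Nat.add_sub_cancel]
    obtain ⟨z0, hz0def⟩ : ∃ t : Kˣ, t = g ^ (q-1) := ⟨_, rfl⟩
    have hzu : z0 ^ (q+1) = 1 := by
      rw [hz0def, ← pow_mul, hfactor, ← hog]
      exact pow_orderOf_eq_one g
    have hzK : ((z0 : K)) ^ (q+1) = 1 := by
      have := congrArg (Units.val) hzu
      rwa [Units.val_pow_eq_pow_val, Units.val_one] at this
    have hzknot : ∀ k : ℕ, 0 < k → k ≤ 3 → z0 ^ k ≠ 1 := by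
      intro k hk1 hk3 hcon
      rw [hz0def, ← pow_mul] at hcon
      have hdvd := orderOf_dvd_of_pow_eq_one hcon
      rw [hog] at hdvd
      have hle : q^2 - 1 ≤ (q-1)*k := Nat.le_of_dvd (Nat.mul_pos (by omega) hk1) hdvd
      have hle2 : (q-1)*k ≤ (q-1)*3 := Nat.mul_le_mul_left _ hk3
      have hle3 : q^2 - 1 ≤ (q-1)*3 := le_trans hle hle2
      have hqs : 4*q ≤ q^2 := by rw [pow_two]; exact Nat.mul_le_mul_right q (by omega)
      obtain ⟨Q, hQ⟩ : ∃ t, t = q^2 := ⟨_, rfl⟩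
      rw [← hQ] at hle3 hqs
      omega
    have hdist : ∀ i j : ℕ, 0 < i → i < j → j ≤ 4 → ((z0:K))^i ≠ ((z0:K))^j := by
      intro i j hi hij hj4 hcon
      have hzne : ((z0:K))^i ≠ 0 := pow_ne_zero _ (Units.ne_zero z0)
      have h7 : ((z0:K))^(j-i) * ((z0:K))^i = 1 * ((z0:K))^i := by
        rw [← pow_add, Nat.sub_add_cancel (le_of_lt hij), one_mul, ← hcon]
      have h8 : ((z0:K))^(j-i) = 1 := mul_right_cancel₀ hzne h7
      have h9 : z0 ^ (j-i) = 1 := by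
        apply Units.ext
        rwa [Units.val_pow_eq_pow_val, Units.val_one]
      exact hzknot (j-i) (by omega) (by omega) h9
    -- square root element xf and the exceptional point xg
    obtain ⟨xf, hxfdef⟩ : ∃ t : K, t = ((d * b ^ q - a ^ q * c) / ((d ^ q * b - a * c ^ q) * l^2)) ^ (2 ^ (2*m - 1)) := ⟨_, rfl⟩
    have hAl0 : (d ^ q * b - a * c ^ q) * l^2 ≠ 0 := mul_ne_zero hA0 (pow_ne_zero 2 hl0)
    have hpc2 : ∀ u : K, u ^ (2 ^ (2*m)) = u := by
      intro u
      have h5 : (2:ℕ) ^ (2*m) = q^2 := by rw [hq, ← pow_mul, Nat.mul_comm m 2]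
      rw [h5, ← hK, FiniteField.pow_card]
    have hxf2 : (d ^ q * b - a * c ^ q) * l^2 * xf^2 = (d * b ^ q - a ^ q * c) := by
      have h5 : xf^2 = (d * b ^ q - a ^ q * c) / ((d ^ q * b - a * c ^ q) * l^2) := by
        rw [hxfdef, ← pow_mul, show 2^(2*m-1)*2 = 2^(2*m) by rw [← pow_succ]; congr 1; omega,
          hpc2]
      rw [h5]
      field_simp
    obtain ⟨xg, hxgdef⟩ : ∃ t : K, t = (d * c ^ q - a ^ q * b) / ((d ^ q * c - a * b ^ q) * l) := ⟨_, rfl⟩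
    -- choose a good x in mu
    have hpick : ∃ x : K, x ^ (q+1) = 1 ∧ x ≠ l ∧ x ≠ xf ∧ x ≠ xg := by
      by_contra hcon
      push_neg at hcon
      have hmem : ∀ w : K, w ^ (q+1) = 1 → w = l ∨ w = xf ∨ w = xg := by
        intro w hw
        by_cases hA : w = l
        · exact Or.inl hA
        by_cases hB : w = xf
        · exact Or.inr (Or.inl hB)
        exact Or.inr (Or.inr (hcon w hw hA hB))
      have hmuu : ∀ i : ℕ, (((z0:K))^i) ^ (q+1) = 1 := by
        intro i
        rw [← pow_mul, Nat.mul_comm, pow_mul, hzK, one_pow]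
      exact pick4 (hdist 1 2 (by omega) (by omega) (by omega))
        (hdist 1 3 (by omega) (by omega) (by omega))
        (hdist 1 4 (by omega) (by omega) (by omega))
        (hdist 2 3 (by omega) (by omega) (by omega))
        (hdist 2 4 (by omega) (by omega) (by omega))
        (hdist 3 4 (by omega) (by omega) (by omega))
        (hmem _ (hmuu 1)) (hmem _ (hmuu 2)) (hmem _ (hmuu 3)) (hmem _ (hmuu 4))
    obtain ⟨x, hxmu, hxl, hxxf, hxxg⟩ := hpick
    have hx0 : x ≠ 0 := by
      intro h; rw [h, zero_pow hq10] at hxmu; exact zero_ne_one hxmu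
    have hxql : x^q * x = 1 := by rw [← pow_succ]; exact hxmu
    have hlx : (l*x) ^ (q+1) = 1 := by rw [mul_pow, hl, hxmu, one_mul]
    have hdn0 : (d ^ q * b - a * c ^ q) * l^2 * x + (d ^ (q+1) - a ^ (q+1)) * l ≠ 0 := by
      intro h
      have h5 : l * ((d ^ q * b - a * c ^ q) * (l*x) + (d ^ (q+1) - a ^ (q+1))) = 0 := by linear_combination h
      rcases mul_eq_zero.mp h5 with h6 | h6
      · exact hl0 h6
      · exact hcrit (l*x) hlx h6
    have hn0 : (d ^ (q+1) - a ^ (q+1)) * l * x + (d * b ^ q - a ^ q * c) ≠ 0 := by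
      intro h
      refine hcrit2 (l*x) hlx ?_
      linear_combination h
    obtain ⟨y, hydef⟩ : ∃ t : K, t = ((d ^ (q+1) - a ^ (q+1)) * l * x + (d * b ^ q - a ^ q * c)) / ((d ^ q * b - a * c ^ q) * l^2 * x + (d ^ (q+1) - a ^ (q+1)) * l) := ⟨_, rfl⟩
    have hydn : y * ((d ^ q * b - a * c ^ q) * l^2 * x + (d ^ (q+1) - a ^ (q+1)) * l) = (d ^ (q+1) - a ^ (q+1)) * l * x + (d * b ^ q - a ^ q * c) := by
      rw [hydef, div_mul_cancel₀ _ hdn0]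
    -- y is in mu
    have hnqexp : ((d ^ (q+1) - a ^ (q+1)) * l * x + (d * b ^ q - a ^ q * c)) ^ q = (d ^ (q+1) - a ^ (q+1)) * l^q * x^q + (d ^ q * b - a * c ^ q) := by
      rw [hfa, mul_pow, mul_pow, heq, hA'q]
    have hdnqexp : ((d ^ q * b - a * c ^ q) * l^2 * x + (d ^ (q+1) - a ^ (q+1)) * l) ^ q = (d * b ^ q - a ^ q * c) * (l^q)^2 * x^q + (d ^ (q+1) - a ^ (q+1)) * l^q := by
      rw [hfa, mul_pow, mul_pow, mul_pow, pow_right_comm, hAq, heq]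
    have hnq2 : ((d ^ (q+1) - a ^ (q+1)) * l * x + (d * b ^ q - a ^ q * c)) ^ q * (l^2 * x) = (d ^ q * b - a * c ^ q) * l^2 * x + (d ^ (q+1) - a ^ (q+1)) * l := by
      rw [hnqexp]
      linear_combination ((d ^ (q+1) - a ^ (q+1)) * l * (l^q * l)) * hxql + ((d ^ (q+1) - a ^ (q+1)) * l) * hlql
    have hdnq2 : ((d ^ q * b - a * c ^ q) * l^2 * x + (d ^ (q+1) - a ^ (q+1)) * l) ^ q * (l^2 * x) = (d ^ (q+1) - a ^ (q+1)) * l * x + (d * b ^ q - a ^ q * c) := by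
      rw [hdnqexp]
      linear_combination ((d * b ^ q - a ^ q * c) * (l^q * l)^2) * hxql + ((d * b ^ q - a ^ q * c) * (l^q * l + 1) + (d ^ (q+1) - a ^ (q+1)) * l * x) * hlql
    have hyq0 : y^q * ((d ^ q * b - a * c ^ q) * l^2 * x + (d ^ (q+1) - a ^ (q+1)) * l)^q = ((d ^ (q+1) - a ^ (q+1)) * l * x + (d * b ^ q - a ^ q * c))^q := by
      rw [← mul_pow, hydn]
    have hyqd : y^q * ((d ^ (q+1) - a ^ (q+1)) * l * x + (d * b ^ q - a ^ q * c)) = (d ^ q * b - a * c ^ q) * l^2 * x + (d ^ (q+1) - a ^ (q+1)) * l := by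
      calc y^q * ((d ^ (q+1) - a ^ (q+1)) * l * x + (d * b ^ q - a ^ q * c))
          = y^q * (((d ^ q * b - a * c ^ q) * l^2 * x + (d ^ (q+1) - a ^ (q+1)) * l)^q * (l^2*x)) := by rw [hdnq2]
        _ = (y^q * ((d ^ q * b - a * c ^ q) * l^2 * x + (d ^ (q+1) - a ^ (q+1)) * l)^q) * (l^2*x) := by ring
        _ = ((d ^ (q+1) - a ^ (q+1)) * l * x + (d * b ^ q - a ^ q * c))^q * (l^2*x) := by rw [hyq0]
        _ = (d ^ q * b - a * c ^ q) * l^2 * x + (d ^ (q+1) - a ^ (q+1)) * l := hnq2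
    have hyql : y^q * y = 1 := by
      have h5 : (y^q * y) * (((d ^ (q+1) - a ^ (q+1)) * l * x + (d * b ^ q - a ^ q * c)) * ((d ^ q * b - a * c ^ q) * l^2 * x + (d ^ (q+1) - a ^ (q+1)) * l))
          = 1 * (((d ^ (q+1) - a ^ (q+1)) * l * x + (d * b ^ q - a ^ q * c)) * ((d ^ q * b - a * c ^ q) * l^2 * x + (d ^ (q+1) - a ^ (q+1)) * l)) := by
        linear_combination (y * ((d ^ q * b - a * c ^ q) * l^2 * x + (d ^ (q+1) - a ^ (q+1)) * l)) * hyqd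
          + ((d ^ q * b - a * c ^ q) * l^2 * x + (d ^ (q+1) - a ^ (q+1)) * l) * hydn
      exact mul_right_cancel₀ (mul_ne_zero hn0 hdn0) h5
    have hymu : y ^ (q+1) = 1 := by rw [pow_succ]; exact hyql
    -- y differs from x and from l
    have hyx : y ≠ x := by
      intro h
      rw [h] at hydn
      have h6 : (d ^ q * b - a * c ^ q) * l^2 * x^2 = (d * b ^ q - a ^ q * c) := by linear_combination hydn
      have h8 : ((d ^ q * b - a * c ^ q) * l^2) * x^2 = ((d ^ q * b - a * c ^ q) * l^2) * xf^2 := by linear_combination h6 - hxf2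
      have h9 : x^2 = xf^2 := mul_left_cancel₀ hAl0 h8
      have h10 : (x - xf)^2 = 0 := by linear_combination h9 + (xf^2 - x*xf) * hch2
      exact hxxf (sub_eq_zero.mp (pow_eq_zero_iff (by norm_num : 2 ≠ 0) |>.mp h10))
    have hyl : y ≠ l := by
      intro h
      rw [h] at hydn
      have h10 : (d ^ q * c - a * b ^ q) * l^2 * x + (d * c ^ q - a ^ q * b) * l = 0 := by
        linear_combination (-1 : K) * hydn + (x*l) * hR1 + hR3 + (-((d ^ (q+1) - a ^ (q+1))*l*x + (d * b ^ q - a ^ q * c))) * hch2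
      have h11 : l * ((d ^ q * c - a * b ^ q) * l * x + (d * c ^ q - a ^ q * b)) = 0 := by linear_combination h10
      rcases mul_eq_zero.mp h11 with h12 | h12
      · exact hl0 h12
      have h13 : (d ^ q * c - a * b ^ q) * l * x = -(d * c ^ q - a ^ q * b) := by linear_combination h12
      rw [CharTwo.neg_eq] at h13
      refine hxxg ?_
      rw [hxgdef, eq_div_iff (mul_ne_zero hB0 hl0)]
      linear_combination h13
    have hDx := hpole x hxmu hxl
    have hDy := hpole y hymu hyl
    -- the correspondence equation and the curve identity
    have hGv : (d ^ q * b - a * c ^ q) * l^2 * (x*y) + (d ^ (q+1) - a ^ (q+1)) * l * (x+y) + (d * b ^ q - a ^ q * c) = 0 := by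
      linear_combination hydn + ((d ^ (q+1) - a ^ (q+1))*l*x + (d * b ^ q - a ^ q * c)) * hch2
    have hFv' : l^2 * ((d ^ (q+1) - a ^ (q+1))*(x^2 + x*y + y^2) + (d ^ q * c - a * b ^ q)*x*y*(x+y) + (d ^ q * b - a * c ^ q)*x^2*y^2 + (d * c ^ q - a ^ q * b)*(x+y) + (c ^ (q+1) - b ^ (q+1))*x*y + (d * b ^ q - a ^ q * c)) = 0 := by
      linear_combination ((x+l)*(y+l)) * hGv + (x*y*(x+y)*l + x*y*l^2) * hR1
        + ((x+y)*l + x*y) * hR3 + (x*y*l) * hS1 + (-((d * c ^ q - a ^ q * b)*l*x*y) - (d * b ^ q - a ^ q * c)*x*y - (d * b ^ q - a ^ q * c)*l*y - (d * b ^ q - a ^ q * c)*l*x - (d ^ q * c - a * b ^ q)*l^3*x*y - (d ^ q * b - a * c ^ q)*l^3*x*y^2 - (d ^ q * b - a * c ^ q)*l^3*x^2*y - (d ^ q * b - a * c ^ q)*l^4*x*y - (d ^ (q+1) - a ^ (q+1))*l*x*y^2 - (d ^ (q+1) - a ^ (q+1))*l*x^2*y - 2*(d ^ (q+1) - a ^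 (q+1))*l^2*x*y - (d ^ (q+1) - a ^ (q+1))*l^3*y - (d ^ (q+1) - a ^ (q+1))*l^3*x) * hch2
    have hFv : ((d ^ (q+1) - a ^ (q+1))*(x^2 + x*y + y^2) + (d ^ q * c - a * b ^ q)*x*y*(x+y) + (d ^ q * b - a * c ^ q)*x^2*y^2 + (d * c ^ q - a ^ q * b)*(x+y) + (c ^ (q+1) - b ^ (q+1))*x*y + (d * b ^ q - a ^ q * c)) = 0 := by
      rcases mul_eq_zero.mp hFv' with h5 | h5
      · exact absurd h5 (pow_ne_zero 2 hl0)
      · exact h5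
    have hcross : (d ^ q * x^3 + c ^ q * x^2 + b ^ q * x + a ^ q) * (a * y^3 + b * y^2 + c * y + d) = (d ^ q * y^3 + c ^ q * y^2 + b ^ q * y + a ^ q) * (a * x^3 + b * x^2 + c * x + d) := by
      linear_combination (x - y) * hFv
    -- evaluating the reduced rational map
    have hval : ∀ z : K, (a*z^3 + b*z^2 + c*z + d) ≠ 0 →
        (numer₀ q a b c d).eval z * ((denom₀ q a b c d).eval z)⁻¹
          = (d^q*z^3 + c^q*z^2 + b^q*z + a^q) * (a*z^3 + b*z^2 + c*z + d)⁻¹ := by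
      intro z hz
      have hDev : (Dpoly a b c d).eval z = a*z^3 + b*z^2 + c*z + d := by
        simp [Dpoly]
      have hNev : (Npoly q a b c d).eval z = d^q*z^3 + c^q*z^2 + b^q*z + a^q := by
        simp [Npoly]
      have hDp0 : Dpoly a b c d ≠ 0 := by
        intro h
        rw [h, Polynomial.eval_zero] at hDev
        exact hz hDev.symm
      have hg0 : EuclideanDomain.gcd (Npoly q a b c d) (Dpoly a b c d) ≠ 0 := by
        intro h
        exact hDp0 ((EuclideanDomain.gcd_eq_zero_iff.mp h).2)
      have hNfac := EuclideanDomain.mul_div_cancel' hg0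
        (EuclideanDomain.gcd_dvd_left (Npoly q a b c d) (Dpoly a b c d))
      have hDfac := EuclideanDomain.mul_div_cancel' hg0
        (EuclideanDomain.gcd_dvd_right (Npoly q a b c d) (Dpoly a b c d))
      have hNev2 : (EuclideanDomain.gcd (Npoly q a b c d) (Dpoly a b c d)).eval z
          * (numer₀ q a b c d).eval z = d^q*z^3 + c^q*z^2 + b^q*z + a^q := by
        rw [← hNev, ← Polynomial.eval_mul]
        simp only [numer₀]
        rw [hNfac]
      have hDev2 : (EuclideanDomain.gcd (Npoly q a b c d) (Dpoly a b c d)).eval z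
          * (denom₀ q a b c d).eval z = a*z^3 + b*z^2 + c*z + d := by
        rw [← hDev, ← Polynomial.eval_mul]
        simp only [denom₀]
        rw [hDfac]
      have hgz0 : (EuclideanDomain.gcd (Npoly q a b c d) (Dpoly a b c d)).eval z ≠ 0 := by
        intro h
        rw [h, zero_mul] at hDev2
        exact hz hDev2.symm
      have hdz0 : (denom₀ q a b c d).eval z ≠ 0 := by
        intro h
        rw [h, mul_zero] at hDev2
        exact hz hDev2.symm
      rw [← div_eq_mul_inv, ← div_eq_mul_inv, div_eq_div_iff hdz0 hz]
      apply mul_left_cancel₀ hgz0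
      linear_combination (a*z^3 + b*z^2 + c*z + d) * hNev2
        - (d^q*z^3 + c^q*z^2 + b^q*z + a^q) * hDev2
    -- final contradiction with injectivity
    have hinj := hperm.2.1
    have hfxy : (numer₀ q a b c d).eval x * ((denom₀ q a b c d).eval x)⁻¹
        = (numer₀ q a b c d).eval y * ((denom₀ q a b c d).eval y)⁻¹ := by
      rw [hval x hDx, hval y hDy, ← div_eq_mul_inv, ← div_eq_mul_inv, div_eq_div_iff hDx hDy]
      linear_combination hcross
    have hxy : x = y := hinj (show x ∈ mu q K from hxmu) (show y ∈ mu q K from hymu) hfxy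
    exact hyx hxy.symm
end
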